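/- arXiv:2311.16566 — 8 statements merged into one kernel-verified Lean document; each statement's English description precedes it below -/
import Mathlib

section
/- Let n ≥ 1 be an integer, let ε ∈ (0, 1/2], and let k ≥ 2 be an even integer. Suppose f : F_2^n → F_2 is ε-far from linear. Then the number of k-tuples (x_1, …, x_k) ∈ (F_2^n)^k such that f(x_1 + ⋯ + x_k) ≠ f(x_1) + ⋯ + f(x_k) is at least ((1 − (1 − 2ε)^{k−1})/2) · 2^{nk}, and consequently at least min{1/4, kε/2} · 2^{nk}. -/
/-!
Write `F = (-1)^f` and let `Ŵ(a) = ∑ₓ F x (-1)^(a ⬝ᵥ x)` be its Walsh coefficients. Each `Ŵ(a)`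
equals `2^n` minus twice the distance from `f` to the linear map `x ↦ a ⬝ᵥ x`, so farness gives
`Ŵ(a) ≤ (1 - 2ε) 2^n`. Expanding powers and using orthogonality of characters,
`∑ₐ Ŵ(a)^(k+1) = 2^n ∑_{x ∈ (F₂ⁿ)ᵏ} F(∑ xᵢ) ∏ F(xᵢ)`, and the right-hand sum is `2^(nk)` minus
twice the number of rejected tuples. Since `k - 1` is odd, `Ŵ(a)^(k+1) ≤ ((1-2ε)2^n)^(k-1) Ŵ(a)^2`
even where `Ŵ(a)` is negative, and Parseval `∑ₐ Ŵ(a)^2 = 4^n` finishes the count.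
-/

open Finset Matrix

lemma AddChar.map_sum_eq_prod {A M ι : Type*} [AddCommMonoid A] [CommMonoid M]
    (ψ : AddChar A M) (s : Finset ι) (a : ι → A) : ψ (∑ i ∈ s, a i) = ∏ i ∈ s, ψ (a i) := by
  classical
  induction s using Finset.induction_on with
  | empty => simp
  | insert i s hi ih => rw [sum_insert hi, prod_insert hi, AddChar.map_add_eq_mul, ih]

lemma Fintype.sum_ite_sum_eq_zero_prod {G R : Type*} [AddCommGroup G] [Fintype G]
    [DecidableEq G] [CommSemiring R] (F : G → R) (m : ℕ) :
    ∑ y : Fin (m + 1) → G, (if ∑ j, y j = 0 then ∏ j, F (y j) else 0) =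
      ∑ x : Fin m → G, F (-∑ i, x i) * ∏ i, F (x i) := by
  rw [← (Fin.consEquiv fun _ ↦ G).sum_comp, Fintype.sum_prod_type, Finset.sum_comm]
  refine Fintype.sum_congr _ _ fun x ↦ ?_
  simp only [Fin.consEquiv_apply, Fin.sum_univ_succ, Fin.prod_univ_succ, Fin.cons_zero,
    Fin.cons_succ, add_eq_zero_iff_eq_neg, sum_ite_eq']

lemma Finset.sum_pow_add_two_le_pow_mul_sum_sq {α : Type*} (s : Finset α) (W : α → ℝ) {c : ℝ}
    {m : ℕ} (hm : Odd m) (hW : ∀ a ∈ s, W a ≤ c) :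
    ∑ a ∈ s, W a ^ (m + 2) ≤ c ^ m * ∑ a ∈ s, W a ^ 2 := by
  rw [mul_sum]
  refine sum_le_sum fun a ha ↦ ?_
  rw [pow_add]
  exact mul_le_mul_of_nonneg_right (hm.pow_le_pow.mpr (hW a ha)) (sq_nonneg _)

lemma min_le_one_sub_pow_div_two {ε : ℝ} (hε : 0 ≤ ε) {m : ℕ} (hm : Odd m) :
    min (1 / 4) ((m + 1) * ε / 2) ≤ (1 - (1 - 2 * ε) ^ m) / 2 := by
  set t := 1 - 2 * ε with ht
  rcases le_or_gt (t ^ m) (1 / 2) with hsmall | hlarge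
  · exact (min_le_left _ _).trans (by linarith)
  refine (min_le_right _ _).trans ?_
  have ht0 : 0 ≤ t := (hm.pow_pos_iff.mp (by linarith)).le
  have ht1 : t ≤ 1 := by linarith
  -- `1 - t^m = 2ε ∑_{j<m} t^j`, and every term but `t^0 = 1` is at least `t^m > 1/2`.
  obtain ⟨r, rfl⟩ := hm
  have hgeom : (r : ℝ) + 1 ≤ ∑ j ∈ range (2 * r + 1), t ^ j := by
    have hterm : ∀ j ∈ range (2 * r), (1 / 2 : ℝ) ≤ t ^ (j + 1) := fun j hj ↦
      hlarge.le.trans (pow_le_pow_of_le_one ht0 ht1 (by simp at hj; omega))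
    have := sum_le_sum hterm
    rw [sum_range_succ']
    simp only [sum_const, card_range, nsmul_eq_mul] at this
    push_cast at this ⊢
    linarith
  have := geom_sum_mul_neg t (2 * r + 1)
  push_cast
  nlinarith

noncomputable abbrev signChar : AddChar (ZMod 2) ℝ := AddChar.zmodChar 2 (neg_one_sq (R := ℝ))

lemma signChar_apply (b : ZMod 2) : signChar b = if b = 0 then 1 else -1 := by
  obtain rfl | rfl : b = 0 ∨ b = 1 := by revert b; decide
  · simp
  · simp [AddChar.zmodChar_apply, ZMod.val_one]

lemma signChar_add (a b : ZMod 2) : signChar (a + b) = 1 - 2 * if a ≠ b then 1 else 0 := by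
  have h : a + b = 0 ↔ a = b := by revert a b; decide
  simp only [signChar_apply, h, ne_eq, ite_not]
  split_ifs <;> norm_num

lemma signChar_sq (b : ZMod 2) : signChar b ^ 2 = 1 := by
  rw [signChar_apply]
  split_ifs <;> norm_num

lemma sum_signChar_add {α : Type*} [Fintype α] (f g : α → ZMod 2) :
    ∑ x, signChar (f x + g x) = Fintype.card α - 2 * #{x | f x ≠ g x} := by
  simp only [signChar_add, sum_sub_distrib, ← mul_sum, sum_boole, sum_const, card_univ,
    nsmul_eq_mul, mul_one]

section Walsh

variable {ι : Type*} [Fintype ι] [DecidableEq ι]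

lemma sum_signChar_dotProduct (x : ι → ZMod 2) :
    ∑ a : ι → ZMod 2, signChar (a ⬝ᵥ x) = if x = 0 then 2 ^ Fintype.card ι else 0 := by
  let ψ : AddChar (ι → ZMod 2) ℝ :=
    signChar.compAddMonoidHom (AddMonoidHom.mk' (· ⬝ᵥ x) fun a b ↦ add_dotProduct a b x)
  have hψ : ψ = 0 ↔ x = 0 := by
    refine ⟨fun h ↦ funext fun i ↦ ?_, fun h ↦ by ext a; simp [ψ, h]⟩
    have := DFunLike.congr_fun h (Pi.single i 1)
    simp only [ψ, AddChar.compAddMonoidHom_apply, AddMonoidHom.mk'_apply, single_dotProduct,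
      one_mul, signChar_apply, AddChar.zero_apply] at this
    by_contra hx
    exact absurd (this.symm.trans (if_neg hx)) (by norm_num)
  have := ψ.sum_eq_ite
  simp only [hψ, Fintype.card_fun, ZMod.card] at this
  exact_mod_cast this

/-- Unnormalised: `2 ^ card ι` times the usual Fourier coefficient `𝔼ₓ F x (-1)^(a ⬝ᵥ x)`. -/
noncomputable def walshCoeff (F : (ι → ZMod 2) → ℝ) (a : ι → ZMod 2) : ℝ :=
  ∑ x, F x * signChar (a ⬝ᵥ x)

lemma sum_walshCoeff_pow_succ (F : (ι → ZMod 2) → ℝ) (m : ℕ) :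
    ∑ a, walshCoeff F a ^ (m + 1) =
      2 ^ Fintype.card ι * ∑ x : Fin m → ι → ZMod 2, F (∑ i, x i) * ∏ i, F (x i) := by
  have expand : ∀ a, walshCoeff F a ^ (m + 1) =
      ∑ y : Fin (m + 1) → ι → ZMod 2, (∏ j, F (y j)) * signChar (a ⬝ᵥ ∑ j, y j) := fun a ↦ by
    simp only [walshCoeff, Fintype.sum_pow, prod_mul_distrib, dotProduct_sum,
      AddChar.map_sum_eq_prod]
  have neg_sum : ∀ x : Fin m → ι → ZMod 2, -∑ i, x i = ∑ i, x i :=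
    fun x ↦ funext fun _ ↦ ZMod.neg_eq_self_mod_two _
  calc ∑ a, walshCoeff F a ^ (m + 1)
      = ∑ y : Fin (m + 1) → ι → ZMod 2, (∏ j, F (y j)) * ∑ a, signChar (a ⬝ᵥ ∑ j, y j) := by
        simp only [expand, mul_sum]
        exact sum_comm
    _ = 2 ^ Fintype.card ι * ∑ y : Fin (m + 1) → ι → ZMod 2,
          if ∑ j, y j = 0 then ∏ j, F (y j) else 0 := by
        rw [mul_sum]
        refine Fintype.sum_congr _ _ fun y ↦ ?_
        rw [sum_signChar_dotProduct]
        split_ifs <;> ring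
    _ = _ := by rw [Fintype.sum_ite_sum_eq_zero_prod]; simp only [neg_sum]

lemma sum_walshCoeff_sq (F : (ι → ZMod 2) → ℝ) :
    ∑ a, walshCoeff F a ^ 2 = 2 ^ Fintype.card ι * ∑ x, F x ^ 2 := by
  rw [sum_walshCoeff_pow_succ F 1, ← (Equiv.funUnique (Fin 1) _).symm.sum_comp]
  simp [sq]

lemma walshCoeff_signChar_comp (f : (ι → ZMod 2) → ZMod 2) (a : ι → ZMod 2) :
    walshCoeff (signChar ∘ f) a = 2 ^ Fintype.card ι - 2 * #{x | f x ≠ a ⬝ᵥ x} := by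
  simp only [walshCoeff, Function.comp_apply, ← AddChar.map_add_eq_mul, sum_signChar_add,
    Fintype.card_fun, ZMod.card]
  push_cast
  rfl

lemma walshCoeff_signChar_comp_le {ε : ℝ} (f : (ι → ZMod 2) → ZMod 2)
    (hfar : ∀ g : (ι → ZMod 2) → ZMod 2, (∀ x y, g (x + y) = g x + g y) →
      ε * 2 ^ Fintype.card ι ≤ (#{x | f x ≠ g x} : ℝ))
    (a : ι → ZMod 2) : walshCoeff (signChar ∘ f) a ≤ (1 - 2 * ε) * 2 ^ Fintype.card ι := by
  have := hfar (a ⬝ᵥ ·) (dotProduct_add a)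
  rw [walshCoeff_signChar_comp]
  linarith

lemma sum_signChar_comp_mul_prod (f : (ι → ZMod 2) → ZMod 2) (m : ℕ) :
    ∑ x : Fin m → ι → ZMod 2, (signChar ∘ f) (∑ i, x i) * ∏ i, (signChar ∘ f) (x i) =
      (2 ^ Fintype.card ι) ^ m - 2 * #{x : Fin m → ι → ZMod 2 | f (∑ i, x i) ≠ ∑ i, f (x i)} := by
  simp only [Function.comp_apply, ← AddChar.map_sum_eq_prod, ← AddChar.map_add_eq_mul,
    sum_signChar_add, Fintype.card_fun, Fintype.card_fin, ZMod.card]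
  push_cast
  rfl

theorem card_blr_rejections_ge {ε : ℝ} (f : (ι → ZMod 2) → ZMod 2)
    (hfar : ∀ g : (ι → ZMod 2) → ZMod 2, (∀ x y, g (x + y) = g x + g y) →
      ε * 2 ^ Fintype.card ι ≤ (#{x | f x ≠ g x} : ℝ))
    {m : ℕ} (hm : Odd m) :
    (1 - (1 - 2 * ε) ^ m) / 2 * (2 ^ Fintype.card ι) ^ (m + 1) ≤
      #{x : Fin (m + 1) → ι → ZMod 2 | f (∑ i, x i) ≠ ∑ i, f (x i)} := by
  set N : ℝ := 2 ^ Fintype.card ι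
  have hN : 0 < N := by positivity
  have parseval : ∑ a, walshCoeff (signChar ∘ f) a ^ 2 = N * N := by
    simp [sum_walshCoeff_sq, signChar_sq, N]
  have key : N * (N ^ (m + 1) - 2 * #{x : Fin (m + 1) → ι → ZMod 2 | f (∑ i, x i) ≠ ∑ i, f (x i)})
      ≤ ((1 - 2 * ε) * N) ^ m * (N * N) := by
    rw [← sum_signChar_comp_mul_prod, ← sum_walshCoeff_pow_succ, ← parseval]
    exact sum_pow_add_two_le_pow_mul_sum_sq _ _ hm fun a _ ↦ walshCoeff_signChar_comp_le f hfar a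
  have : N ^ (m + 1) - 2 * #{x : Fin (m + 1) → ι → ZMod 2 | f (∑ i, x i) ≠ ∑ i, f (x i)}
      ≤ (1 - 2 * ε) ^ m * N ^ (m + 1) := by
    refine le_of_mul_le_mul_left (key.trans_eq ?_) hN
    rw [mul_pow]
    ring
  linarith

end Walsh

theorem stmt_0_general (n : ℕ) (ε : ℝ) (hε : 0 < ε)
    (k : ℕ) (hk : 2 ≤ k) (hkeven : Even k)
    (f : (Fin n → ZMod 2) → ZMod 2)
    (hfar : ∀ g : (Fin n → ZMod 2) → ZMod 2, (∀ x y, g (x + y) = g x + g y) →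
      ε * 2 ^ n ≤ ((Finset.univ.filter (fun x => f x ≠ g x)).card : ℝ)) :
    (1 - (1 - 2 * ε) ^ (k - 1)) / 2 * 2 ^ (n * k) ≤
      ((Finset.univ.filter (fun x : Fin k → Fin n → ZMod 2 =>
        f (∑ i, x i) ≠ ∑ i, f (x i))).card : ℝ) ∧
    min (1 / 4) (k * ε / 2) * 2 ^ (n * k) ≤
      ((Finset.univ.filter (fun x : Fin k → Fin n → ZMod 2 =>
        f (∑ i, x i) ≠ ∑ i, f (x i))).card : ℝ) := by
  obtain ⟨m, rfl⟩ : ∃ m, k = m + 1 := ⟨k - 1, by omega⟩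
  have hm : Odd m := Nat.not_even_iff_odd.mp (Nat.even_add_one.mp hkeven)
  have hcount := card_blr_rejections_ge f (by simpa using hfar) hm
  rw [Fintype.card_fin, ← pow_mul] at hcount
  rw [Nat.add_sub_cancel]
  refine ⟨hcount, le_trans ?_ hcount⟩
  gcongr
  exact_mod_cast min_le_one_sub_pow_div_two hε.le hm

theorem stmt_0 (n : ℕ) (hn : 1 ≤ n) (ε : ℝ) (hε : 0 < ε) (hε' : ε ≤ 1 / 2)
    (k : ℕ) (hk : 2 ≤ k) (hkeven : Even k)
    (f : (Fin n → ZMod 2) → ZMod 2)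
    (hfar : ∀ g : (Fin n → ZMod 2) → ZMod 2, (∀ x y, g (x + y) = g x + g y) →
      ε * 2 ^ n ≤ ((Finset.univ.filter (fun x => f x ≠ g x)).card : ℝ)) :
    (1 - (1 - 2 * ε) ^ (k - 1)) / 2 * 2 ^ (n * k) ≤
      ((Finset.univ.filter (fun x : Fin k → Fin n → ZMod 2 =>
        f (∑ i, x i) ≠ ∑ i, f (x i))).card : ℝ) ∧
    min (1 / 4) (k * ε / 2) * 2 ^ (n * k) ≤
      ((Finset.univ.filter (fun x : Fin k → Fin n → ZMod 2 =>
        f (∑ i, x i) ≠ ∑ i, f (x i))).card : ℝ) :=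
  stmt_0_general n ε hε k hk hkeven f hfar
end

section
/- Fix integers d ≥ 1, n ≥ 1, and k ≥ 1, and let y_1, …, y_k ∈ F_2^n. Let Z = {x ∈ F_2^n : ext_d(x) lies in the F_2-linear span of ext_d(y_1), …, ext_d(y_k)}, and let r = |Z| (note r ≥ 1 since each y_i ∈ Z). Then the binomial coefficient C(⌊log_2 r⌋, d) is at most k. -/
/-!
Write `Z` for the set in question and `m = ⌊log₂ |Z|⌋`. Going through the monomials in colex
order and keeping those whose restriction to `Z` is not in the span of the restrictions of the
earlier ones yields a basis of the functions `Z → F₂` (every function on the cube is a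
polynomial), indexed by a family `D` of sets with `|D| = |Z| ≥ 2^m`. Since `x_S² = x_S` on the
cube, multiplying by a monomial on a disjoint set of variables respects the colex order, so `D`
is down-closed. By Kruskal–Katona, a down-closed family of at least `2^m` subsets of `[n]` has
at least `C(m, d)` members of size at most `d`. Their monomials are independent on `Z` and lie
in the row space of the matrix whose columns are the `ext_d(x)`, `x ∈ Z`; the column space has
the same dimension and lies in the span of the `ext_d(y_i)`, of dimension at most `k`.
-/

open scoped Classical

/-- The extension `ext_d(x)` of a vector `x ∈ F₂ⁿ`: the vector indexed by sets
`S ⊆ [n]` with `|S| ≤ d` whose `S`-entry is the monomial `∏_{i ∈ S} x_i`. -/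
def extVec (n d : ℕ) (x : Fin n → ZMod 2) :
    {S : Finset (Fin n) // S.card ≤ d} → ZMod 2 :=
  fun S => ∏ i ∈ S.1, x i

open Finset Submodule Module

theorem Finset.prod_mul_prod_eq_prod_union_of_isIdempotentElem {ι M : Type*} [DecidableEq ι]
    [CommMonoid M] {f : ι → M} (hf : ∀ i, IsIdempotentElem (f i)) (s t : Finset ι) :
    (∏ i ∈ s, f i) * ∏ i ∈ t, f i = ∏ i ∈ s ∪ t, f i := by
  induction t using Finset.induction_on with
  | empty => simp
  | insert a t ha ih =>
    rw [prod_insert ha, mul_left_comm, ih, union_insert]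
    by_cases has : a ∈ s ∪ t
    · rw [insert_eq_of_mem has, ← mul_prod_erase _ _ has, ← mul_assoc, (hf a).eq]
    · rw [prod_insert has]

theorem Finset.Colex.toColex_union_lt_toColex_union {α : Type*} [PartialOrder α] [DecidableEq α]
    {s t u : Finset α} (hus : Disjoint u s) (hts : toColex t < toColex s) :
    toColex (u ∪ t) < toColex (u ∪ s) := by
  rw [← Colex.toColex_sdiff_lt_toColex_sdiff subset_union_left subset_union_left,
    union_sdiff_left, union_sdiff_left, sdiff_eq_self_of_disjoint hus.symm]
  exact (Colex.toColex_le_toColex_of_subset sdiff_subset).trans_lt hts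

theorem ZMod.isIdempotentElem_two (a : ZMod 2) : IsIdempotentElem a := by
  rw [IsIdempotentElem, ← sq, ZMod.pow_card]

section Greedy

variable (K : Type*) {ι κ M : Type*} [Field K] [AddCommGroup M] [Module K M] [LinearOrder κ]

def greedySet (v : ι → M) (w : ι → κ) : Set ι :=
  {i | v i ∉ span K (v '' {j | w j < w i})}

variable {K} {v : ι → M} {w : ι → κ}

theorem linearIndepOn_greedySet (hw : Function.Injective w) :
    LinearIndepOn K v (greedySet K v w) := by
  refine linearIndepOn_of_finite _ fun t ht htfin => ?_
  obtain ⟨u, rfl⟩ := htfin.exists_finset_coe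
  clear htfin
  induction u using Finset.induction_on_max_value w with
  | empty => simp
  | insert a u hau hmax ih =>
    rw [coe_insert] at ht ⊢
    refine (linearIndepOn_insert (mod_cast hau)).2 ⟨ih ((Set.subset_insert _ _).trans ht), ?_⟩
    refine fun hspan => ht (Set.mem_insert a _) (span_mono ?_ hspan)
    refine Set.image_mono fun j hj => (hmax j hj).lt_of_ne fun h => ?_
    exact hau (hw h ▸ hj)

theorem span_image_greedySet [WellFoundedLT κ] :
    span K (v '' greedySet K v w) = span K (Set.range v) := by
  refine le_antisymm (span_mono (Set.image_subset_range _ _)) (span_le.2 ?_)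
  rintro _ ⟨i, rfl⟩
  induction i using (wellFounded_lt.onFun (f := w)).induction with
  | _ i ih =>
    by_cases hi : i ∈ greedySet K v w
    · exact subset_span (Set.mem_image_of_mem v hi)
    · refine span_le.2 ?_ (not_not.1 hi)
      rintro _ ⟨j, hj, rfl⟩
      exact ih j hj

end Greedy

section Monomials

variable {σ : Type*}

theorem span_range_prod_eq_top [Fintype σ] :
    span (ZMod 2) (Set.range fun (S : Finset σ) (x : σ → ZMod 2) => S.prod x) = ⊤ := by
  rw [eq_top_iff, ← MvPolynomial.map_restrict_dom_evalₗ, map_le_iff_le_comap]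
  intro p _
  rw [mem_comap, p.as_sum, map_sum]
  refine sum_mem fun s _ => ?_
  have heval : MvPolynomial.evalₗ (ZMod 2) σ (MvPolynomial.monomial s (p.coeff s)) =
      p.coeff s • fun x => s.support.prod x := by
    funext x
    simp only [MvPolynomial.evalₗ, LinearMap.coe_mk, AddHom.coe_mk, MvPolynomial.eval_monomial,
      Finsupp.prod, Pi.smul_apply, smul_eq_mul]
    congr 1
    refine prod_congr rfl fun i hi => ?_
    obtain ⟨e, he⟩ := Nat.exists_eq_succ_of_ne_zero (Finsupp.mem_support_iff.1 hi)
    rw [he, (ZMod.isIdempotentElem_two _).pow_succ_eq]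
  rw [heval]
  exact smul_mem _ _ (subset_span ⟨_, rfl⟩)

def monomialOn (Z : Set (σ → ZMod 2)) (S : Finset σ) (x : Z) : ZMod 2 :=
  ∏ i ∈ S, (x : σ → ZMod 2) i

variable {Z : Set (σ → ZMod 2)}

theorem monomialOn_mul [DecidableEq σ] (T R : Finset σ) :
    monomialOn Z T * monomialOn Z R = monomialOn Z (T ∪ R) := by
  funext x
  exact prod_mul_prod_eq_prod_union_of_isIdempotentElem (fun _ => ZMod.isIdempotentElem_two _) _ _

theorem span_range_monomialOn [Fintype σ] : span (ZMod 2) (Set.range (monomialOn Z)) = ⊤ := by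
  have hrestrict : monomialOn Z = LinearMap.funLeft (ZMod 2) (ZMod 2) (Subtype.val : Z → _) ∘
      fun (S : Finset σ) (x : σ → ZMod 2) => S.prod x := rfl
  rw [hrestrict, Set.range_comp, ← map_span, span_range_prod_eq_top, Submodule.map_top,
    LinearMap.range_eq_top]
  exact LinearMap.funLeft_surjective_of_injective _ _ _ Subtype.val_injective

end Monomials

section StandardMonomials

variable {σ : Type*} [LinearOrder σ] (Z : Set (σ → ZMod 2))

def standardMonomials : Set (Finset σ) := greedySet (ZMod 2) (monomialOn Z) toColex

theorem isLowerSet_standardMonomials : IsLowerSet (standardMonomials Z) := by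
  intro S S' hsub hS hS'
  apply hS
  have hdisj : Disjoint (S \ S') S' := sdiff_disjoint
  have hS_eq : (S \ S') ∪ S' = S := sdiff_union_of_subset hsub
  have hmul :=
    Submodule.mem_map_of_mem (f := LinearMap.mulLeft (ZMod 2) (monomialOn Z (S \ S'))) hS'
  rw [map_span, LinearMap.mulLeft_apply, monomialOn_mul, hS_eq] at hmul
  refine span_mono ?_ hmul
  rintro _ ⟨_, ⟨T, hT, rfl⟩, rfl⟩
  refine ⟨S \ S' ∪ T, ?_, (monomialOn_mul _ _).symm⟩
  have hlt := Colex.toColex_union_lt_toColex_union hdisj hT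
  rwa [hS_eq] at hlt

theorem card_le_card_standardMonomials [Fintype σ] :
    Nat.card Z ≤ #(standardMonomials Z).toFinset := by
  have : Finite (Colex (Finset σ)) := Finite.of_equiv _ toColex
  calc Nat.card Z = finrank (ZMod 2) (Z → ZMod 2) := by
        rw [Module.finrank_pi, Nat.card_eq_fintype_card]
    _ = finrank (ZMod 2) (span (ZMod 2) (monomialOn Z '' standardMonomials Z)) := by
        rw [standardMonomials, span_image_greedySet, span_range_monomialOn, finrank_top]
    _ ≤ #(monomialOn Z '' standardMonomials Z).toFinset := finrank_span_le_card _
    _ ≤ #(standardMonomials Z).toFinset := by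
        rw [Set.toFinset_image]
        exact card_image_le

theorem card_filter_standardMonomials_le_finrank [Fintype σ] (d : ℕ) :
    #{S ∈ (standardMonomials Z).toFinset | #S ≤ d} ≤
      finrank (ZMod 2)
        (span (ZMod 2) (Set.range fun S : {S : Finset σ // #S ≤ d} => monomialOn Z S)) := by
  set s := {S ∈ (standardMonomials Z).toFinset | #S ≤ d}
  have hindep : LinearIndepOn (ZMod 2) (monomialOn Z) (s : Set (Finset σ)) :=
    (linearIndepOn_greedySet toColex.injective).mono fun S hS =>
      Set.mem_toFinset.1 (mem_filter.1 hS).1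
  calc #s = finrank (ZMod 2)
        (span (ZMod 2) (Set.range fun S : (s : Set (Finset σ)) => monomialOn Z S)) := by
        rw [finrank_span_eq_card hindep]
        simp
    _ ≤ _ := by
        refine Submodule.finrank_mono (span_mono ?_)
        rintro _ ⟨⟨S, hS⟩, rfl⟩
        exact ⟨⟨S, (mem_filter.1 hS).2⟩, rfl⟩

end StandardMonomials

section LowerSet

variable {α : Type*} {d : ℕ}

theorem IsLowerSet.choose_card_le_card_filter_card_le {𝒜 : Finset (Finset α)}
    (h𝒜 : IsLowerSet (𝒜 : Set (Finset α))) {s : Finset α} (hs : s ∈ 𝒜) :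
    (#s).choose d ≤ #{t ∈ 𝒜 | #t ≤ d} := by
  rw [← card_powersetCard]
  refine card_le_card fun t ht => ?_
  rw [mem_powersetCard] at ht
  exact mem_filter.2 ⟨h𝒜 ht.1 hs, ht.2.le⟩

variable {n m : ℕ} {𝒜 : Finset (Finset (Fin n))}

theorem IsLowerSet.choose_le_card_filter_card_le_of_choose_le_card_slice
    (h𝒜 : IsLowerSet (𝒜 : Set (Finset (Fin n)))) {j : ℕ} (hdj : d ≤ j) (hjm : j ≤ m)
    (hmn : m ≤ n) (h : m.choose j ≤ #(𝒜 # j)) : m.choose d ≤ #{t ∈ 𝒜 | #t ≤ d} := by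
  have hKK := kruskal_katona_lovasz_form (Nat.sub_le j d) hjm hmn sized_slice h
  rw [Nat.sub_sub_self hdj] at hKK
  refine hKK.trans (card_le_card fun t ht => ?_)
  obtain ⟨s, hs, hts, -⟩ := mem_shadow_iterate_iff_exists_sdiff.1 ht
  have hcard : #t = j - (j - d) := sized_slice.shadow_iterate ht
  exact mem_filter.2 ⟨h𝒜 hts (mem_slice.1 hs).1, by omega⟩

theorem Nat.choose_add_sum_Ico_choose_le_two_pow (m d : ℕ) :
    m.choose d + ∑ j ∈ Ico (d + 1) m, m.choose j ≤ 2 ^ m := by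
  rw [← sum_insert (by simp), ← Nat.sum_range_choose]
  refine sum_le_sum_of_ne_zero fun j _ hj => mem_range.2 (Nat.lt_succ_of_le ?_)
  by_contra h
  exact hj (Nat.choose_eq_zero_of_lt (not_le.1 h))

theorem IsLowerSet.choose_le_card_filter_card_le_of_two_pow_le_card
    (h𝒜 : IsLowerSet (𝒜 : Set (Finset (Fin n)))) (hcard : 2 ^ m ≤ #𝒜) :
    m.choose d ≤ #{t ∈ 𝒜 | #t ≤ d} := by
  have hmn : m ≤ n := by
    have := hcard.trans (card_le_univ 𝒜)
    rwa [Fintype.card_finset, Fintype.card_fin, Nat.pow_le_pow_iff_right one_lt_two] at this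
  -- Otherwise every set of `𝒜` has fewer than `m` elements and, by Kruskal–Katona, no level
  -- above `d` is larger than that of the cube `2^[m]`; so `#𝒜 < 2^m`.
  by_contra! hlt
  have hsmall : ∀ s ∈ 𝒜, #s < m := fun s hs => by
    by_contra! h
    exact hlt.not_ge
      ((Nat.choose_le_choose d h).trans (h𝒜.choose_card_le_card_filter_card_le hs))
  have hslice : ∀ j ∈ Ico (d + 1) m, #(𝒜 # j) ≤ m.choose j := fun j hj => by
    rw [mem_Ico] at hj
    by_contra! h
    exact hlt.not_ge
      (h𝒜.choose_le_card_filter_card_le_of_choose_le_card_slice (by omega) hj.2.le hmn h.le)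
  have hlarge : #{t ∈ 𝒜 | ¬#t ≤ d} ≤ ∑ j ∈ Ico (d + 1) m, #(𝒜 # j) := by
    rw [card_eq_sum_card_fiberwise (f := card) (t := Ico (d + 1) m)]
    · exact sum_le_sum fun j _ => card_le_card fun t ht => by
        simp only [mem_filter, mem_slice] at ht ⊢
        exact ⟨ht.1.1, ht.2⟩
    · intro t ht
      simp only [mem_coe, mem_filter, mem_Ico] at ht ⊢
      exact ⟨by omega, hsmall t ht.1⟩
  refine (?_ : #𝒜 < 2 ^ m).not_ge hcard
  calc #𝒜 = #{t ∈ 𝒜 | #t ≤ d} + #{t ∈ 𝒜 | ¬#t ≤ d} :=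
        (card_filter_add_card_filter_not _).symm
    _ < m.choose d + ∑ j ∈ Ico (d + 1) m, m.choose j :=
        add_lt_add_of_lt_of_le hlt (hlarge.trans (sum_le_sum hslice))
    _ ≤ 2 ^ m := Nat.choose_add_sum_Ico_choose_le_two_pow m d

end LowerSet

theorem finrank_span_monomialOn_eq_finrank_span_extVec {n : ℕ} (Z : Set (Fin n → ZMod 2))
    (d : ℕ) :
    finrank (ZMod 2) (span (ZMod 2) (Set.range fun S : {S : Finset (Fin n) // #S ≤ d} =>
      monomialOn Z S)) = finrank (ZMod 2) (span (ZMod 2) (Set.range fun x : Z => extVec n d x)) :=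
  let A : Matrix {S : Finset (Fin n) // #S ≤ d} Z (ZMod 2) := .of fun S x => monomialOn Z S x
  (Matrix.rank_eq_finrank_span_row A).symm.trans (Matrix.rank_eq_finrank_span_cols A)

theorem stmt_4_general (d n k : ℕ) (hk : 1 ≤ k)
    (y : Fin k → Fin n → ZMod 2) :
    (Nat.log 2
      ((Finset.univ.filter (fun x : Fin n → ZMod 2 =>
        extVec n d x ∈
          Submodule.span (ZMod 2) (Set.range (fun i => extVec n d (y i))))).card)).choose d
      ≤ k := by
  set V := span (ZMod 2) (Set.range fun i => extVec n d (y i))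
  set Z : Set (Fin n → ZMod 2) := {x | extVec n d x ∈ V}
  have hcardZ : #{x | extVec n d x ∈ V} = Nat.card Z := by
    rw [Nat.card_eq_fintype_card, Fintype.card_subtype]
    rfl
  have hZ : Nat.card Z ≠ 0 :=
    Nat.card_ne_zero.2 ⟨⟨y ⟨0, hk⟩, subset_span ⟨_, rfl⟩⟩, inferInstance⟩
  rw [hcardZ]
  calc (Nat.log 2 (Nat.card Z)).choose d
      ≤ #{S ∈ (standardMonomials Z).toFinset | #S ≤ d} :=
        IsLowerSet.choose_le_card_filter_card_le_of_two_pow_le_card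
          (by simpa using isLowerSet_standardMonomials Z)
          ((Nat.pow_log_le_self 2 hZ).trans (card_le_card_standardMonomials Z))
    _ ≤ finrank (ZMod 2) (span (ZMod 2) (Set.range fun S : {S : Finset (Fin n) // #S ≤ d} =>
          monomialOn Z S)) := card_filter_standardMonomials_le_finrank Z d
    _ = finrank (ZMod 2) (span (ZMod 2) (Set.range fun x : Z => extVec n d x)) :=
        finrank_span_monomialOn_eq_finrank_span_extVec Z d
    _ ≤ finrank (ZMod 2) V := Submodule.finrank_mono (span_le.2 (Set.range_subset_iff.2 (·.2)))
    _ ≤ k := (finrank_range_le_card (R := ZMod 2) _).trans_eq (Fintype.card_fin k)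

theorem stmt_4 (d n k : ℕ) (hd : 1 ≤ d) (hn : 1 ≤ n) (hk : 1 ≤ k)
    (y : Fin k → Fin n → ZMod 2) :
    (Nat.log 2
      ((Finset.univ.filter (fun x : Fin n → ZMod 2 =>
        extVec n d x ∈
          Submodule.span (ZMod 2) (Set.range (fun i => extVec n d (y i))))).card)).choose d
      ≤ k :=
  stmt_4_general d n k hk y
end

section
/- Fix integers d ≥ 1, n ≥ d + 1, and a testing pattern X ∈ F_2^{ℓ×m}. Then X is good for P_d (for functions on F_2^n) if and only if the following two conditions hold: (i) for every set S ⊆ [m] with |S| ≤ d, Σ_{i=1}^{ℓ} ∏_{j ∈ S} X_{ij} = 0 in F_2; and (ii) there exists a set S ⊆ [m] with |S| = d + 1 such that Σ_{i=1}^{ℓ} ∏_{j ∈ S} X_{ij} = 1 in F_2. -/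
/-- `PolyDeg n d` : the set of functions `F₂ⁿ → F₂` that are polynomials of degree
at most `d` over `F₂`. -/
def PolyDeg (n d : ℕ) : Set ((Fin n → ZMod 2) → ZMod 2) :=
  {f | ∃ c : Finset (Fin n) → ZMod 2, ∀ x, f x =
    ∑ S ∈ Finset.univ.filter (fun S : Finset (Fin n) => S.card ≤ d),
      c S * ∏ i ∈ S, x i}

/-- `T_{X,f}(M) = Σ_i f(y_i)` where `y_1, …, y_ℓ` are the rows of `X * M`. -/
def patternSum {ℓ m n : ℕ} (X : Matrix (Fin ℓ) (Fin m) (ZMod 2))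
    (f : (Fin n → ZMod 2) → ZMod 2) (M : Matrix (Fin m) (Fin n) (ZMod 2)) : ZMod 2 :=
  ∑ i, f ((X * M) i)

/-- `X` is complete for `P_d`: `T_{X,f}(M) = 0` for every `f ∈ P_d` and every `M`. -/
def IsCompletePattern {ℓ m : ℕ} (n d : ℕ) (X : Matrix (Fin ℓ) (Fin m) (ZMod 2)) : Prop :=
  ∀ f ∈ PolyDeg n d, ∀ M : Matrix (Fin m) (Fin n) (ZMod 2), patternSum X f M = 0

/-- `X` is minimally sound for `P_d`: for every `f ∉ P_d` there is `M` with
`T_{X,f}(M) = 1`. -/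
def IsMinimallySoundPattern {ℓ m : ℕ} (n d : ℕ) (X : Matrix (Fin ℓ) (Fin m) (ZMod 2)) : Prop :=
  ∀ f : (Fin n → ZMod 2) → ZMod 2, f ∉ PolyDeg n d →
    ∃ M : Matrix (Fin m) (Fin n) (ZMod 2), patternSum X f M = 1

/-! Every `f : F₂ⁿ → F₂` is `f x = ∑_S a_S(f) x^S` with the Möbius coefficients
`a_S(f) = ∑_{T ⊆ S} f(1_T)`, and `f ∈ P_d` iff `a_S(f) = 0` whenever `|S| > d`. For `g = f(· M)`,
which has degree at most that of `f`, this turns the pattern sum into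
`T_{X,f}(M) = ∑_S a_S(g) ∑_i X_i^S`: completeness follows from (i), and soundness applied to a
monomial of degree `d + 1` gives (ii). Conversely, a nonzero `a_S(f)` can be moved along
derivatives `f(x + e_j) + f(x)` to a nonzero `a_{S₀}(f(· M))` for every nonempty `S₀` with
`|S₀| ≤ |S|`; zeroing the rows of `M` outside `S₀` then leaves the single term
`a_{S₀}(g) ∑_i X_i^{S₀}`, which gives soundness from (i) and (ii), and (i) from completeness by
strong induction on `S₀`. -/

open Finset Matrix

section AlgebraicNormalForm

variable {σ τ : Type*} [DecidableEq σ]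

def charVec (T : Finset σ) : σ → ZMod 2 := fun i => if i ∈ T then 1 else 0

def anfCoeff (f : (σ → ZMod 2) → ZMod 2) (S : Finset σ) : ZMod 2 :=
  ∑ T ∈ S.powerset, f (charVec T)

lemma charVec_insert {j : σ} {T : Finset σ} (hj : j ∉ T) :
    charVec (insert j T) = charVec T + Pi.single j 1 := by
  ext i
  by_cases hi : i = j
  · subst hi; simp [charVec, hj]
  · simp [charVec, hi]

lemma prod_charVec (S T : Finset σ) :
    ∏ i ∈ S, charVec T i = if S ⊆ T then 1 else 0 := by
  split_ifs with h
  · exact prod_eq_one fun i hi => by simp [charVec, h hi]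
  · obtain ⟨i, hiS, hiT⟩ := not_subset.1 h
    exact prod_eq_zero hiS (by simp [charVec, hiT])

lemma charVec_vecMul [Fintype σ] (T : Finset σ) (M : Matrix σ τ (ZMod 2)) :
    charVec T ᵥ* M = fun t => ∑ i ∈ T, M i t := by
  ext t
  simp [vecMul, dotProduct, charVec]

/-- Möbius inversion on the Boolean lattice, where signs disappear in characteristic two. -/
lemma sum_powerset_sum_powerset (U : Finset σ) (F : Finset σ → ZMod 2) :
    ∑ S ∈ U.powerset, ∑ T ∈ S.powerset, F T = F U := by
  induction U using Finset.induction generalizing F with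
  | empty => simp
  | insert a U ha ih =>
    have hsplit : ∀ S ∈ U.powerset, ∑ T ∈ (insert a S).powerset, F T
        = ∑ T ∈ S.powerset, F T + ∑ T ∈ S.powerset, F (insert a T) := fun S hS =>
      sum_powerset_insert (fun h => ha (mem_powerset.1 hS h)) _
    rw [sum_powerset_insert ha, sum_congr rfl hsplit, sum_add_distrib, ih, ih, ← add_assoc,
      CharTwo.add_self_eq_zero, zero_add]

lemma anfCoeff_insert (f : (σ → ZMod 2) → ZMod 2) {j : σ} {S : Finset σ} (hj : j ∉ S) :
    anfCoeff f (insert j S) = ∑ T ∈ S.powerset, (f (charVec T) + f (charVec (insert j T))) := by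
  rw [anfCoeff, sum_powerset_insert hj, sum_add_distrib]

lemma anfCoeff_insert_eq_anfCoeff_add_single (f : (σ → ZMod 2) → ZMod 2) {j : σ} {S : Finset σ}
    (hj : j ∉ S) :
    anfCoeff f (insert j S) = anfCoeff (fun x => f (x + Pi.single j 1) + f x) S := by
  rw [anfCoeff_insert f hj, anfCoeff]
  refine sum_congr rfl fun T hT => ?_
  rw [charVec_insert fun h => hj (mem_powerset.1 hT h), add_comm]

lemma anfCoeff_eq_zero_of_mem {f : (σ → ZMod 2) → ZMod 2} {j : σ} {S : Finset σ} (hj : j ∈ S)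
    (hf : ∀ T, j ∉ T → f (charVec (insert j T)) = f (charVec T)) : anfCoeff f S = 0 := by
  rw [← insert_erase hj, anfCoeff_insert f (notMem_erase j S)]
  refine sum_eq_zero fun T hT => ?_
  rw [hf T fun h => notMem_erase j S (mem_powerset.1 hT h), CharTwo.add_self_eq_zero]

lemma anfCoeff_sum_mul {ι : Type*} (s : Finset ι) (c : ι → ZMod 2)
    (g : ι → (σ → ZMod 2) → ZMod 2) (S : Finset σ) :
    anfCoeff (fun x => ∑ i ∈ s, c i * g i x) S = ∑ i ∈ s, c i * anfCoeff (g i) S := by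
  simp only [anfCoeff, mul_sum]
  exact sum_comm

lemma sum_anfCoeff_mul_prod [Fintype σ] (f : (σ → ZMod 2) → ZMod 2) (x : σ → ZMod 2) :
    ∑ S, anfCoeff f S * ∏ i ∈ S, x i = f x := by
  obtain ⟨U, rfl⟩ : ∃ U, charVec U = x := ⟨univ.filter (x · = 1), funext fun i => by
    rcases (by decide : ∀ a : ZMod 2, a = 0 ∨ a = 1) (x i) with h | h <;> simp [charVec, h]⟩
  simp_rw [prod_charVec, mul_ite, mul_one, mul_zero, ← sum_filter]
  rw [← sum_powerset_sum_powerset U (fun T => f (charVec T))]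
  exact sum_congr (by ext; simp) fun _ _ => rfl

lemma sum_apply_row_eq_sum_anfCoeff {ι : Type*} [Fintype ι] [Fintype σ] (X : Matrix ι σ (ZMod 2))
    (g : (σ → ZMod 2) → ZMod 2) :
    ∑ i, g (X i) = ∑ S, anfCoeff g S * ∑ i, ∏ j ∈ S, X i j := by
  simp_rw [← sum_anfCoeff_mul_prod g, mul_sum]
  exact sum_comm

lemma anfCoeff_comp_vecMul [Fintype σ] (f : (τ → ZMod 2) → ZMod 2) (M : Matrix σ τ (ZMod 2))
    (S : Finset σ) :
    anfCoeff (fun z => f (z ᵥ* M)) S = ∑ T ∈ S.powerset, f (fun t => ∑ i ∈ T, M i t) := by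
  simp only [anfCoeff, charVec_vecMul]

lemma anfCoeff_coord_mul_eq_zero {f : (σ → ZMod 2) → ZMod 2} {k : ℕ}
    (hf : ∀ S : Finset σ, k < S.card → anfCoeff f S = 0) (j : σ) {S : Finset σ}
    (hS : k + 1 < S.card) : anfCoeff (fun x => x j * f x) S = 0 := by
  by_cases hj : j ∈ S
  · obtain ⟨S, hjS, rfl⟩ : ∃ S', j ∉ S' ∧ S = insert j S' :=
      ⟨S.erase j, notMem_erase j S, (insert_erase hj).symm⟩
    have hcoord : anfCoeff (fun x => x j * f x) (insert j S)
        = anfCoeff f S + anfCoeff f (insert j S) := by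
      rw [anfCoeff_insert _ hjS, anfCoeff_insert f hjS, anfCoeff, ← sum_add_distrib]
      refine sum_congr rfl fun T hT => ?_
      have hjT : j ∉ T := fun h => hjS (mem_powerset.1 hT h)
      simp [charVec, hjT, ← add_assoc, CharTwo.add_self_eq_zero]
    rw [card_insert_of_notMem hjS] at hS
    rw [hcoord, hf S (by omega), hf _ (by rw [card_insert_of_notMem hjS]; omega), add_zero]
  · refine sum_eq_zero fun T hT => ?_
    have hjT : j ∉ T := fun h => hj (mem_powerset.1 hT h)
    simp [charVec, hjT]

lemma anfCoeff_prod_vecMul_eq_zero [Fintype σ] (M : Matrix σ τ (ZMod 2)) (U : Finset τ)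
    {S : Finset σ} (hS : U.card < S.card) :
    anfCoeff (fun z => ∏ t ∈ U, (z ᵥ* M) t) S = 0 := by
  classical
  induction U using Finset.induction generalizing S with
  | empty =>
    obtain ⟨j, hj⟩ := card_pos.1 hS
    exact anfCoeff_eq_zero_of_mem hj fun _ _ => rfl
  | insert a U ha ih =>
    rw [card_insert_of_notMem ha] at hS
    have hexpand : ∀ z : σ → ZMod 2, ∏ t ∈ insert a U, (z ᵥ* M) t
        = ∑ j, M j a * (z j * ∏ t ∈ U, (z ᵥ* M) t) := fun z => by
      rw [prod_insert ha, vecMul, dotProduct, sum_mul]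
      exact sum_congr rfl fun j _ => by ring
    simp only [hexpand]
    rw [anfCoeff_sum_mul]
    exact sum_eq_zero fun j _ => by
      rw [anfCoeff_coord_mul_eq_zero (fun S hS => ih hS) j hS, mul_zero]

lemma anfCoeff_prod_self (U : Finset σ) : anfCoeff (fun x => ∏ i ∈ U, x i) U = 1 := by
  rw [anfCoeff, sum_eq_single_of_mem U (mem_powerset_self U)]
  · simp [prod_charVec]
  · intro T hT hne
    rw [prod_charVec, if_neg fun h => hne (subset_antisymm (mem_powerset.1 hT) h)]

lemma exists_anfCoeff_comp_vecMul_ne_zero [Fintype σ] [DecidableEq τ] {S₀ : Finset σ}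
    (hS₀ : S₀.Nonempty) {f : (τ → ZMod 2) → ZMod 2} {U : Finset τ} (hU : S₀.card ≤ U.card)
    (hf : anfCoeff f U ≠ 0) : ∃ M : Matrix σ τ (ZMod 2), anfCoeff (fun z => f (z ᵥ* M)) S₀ ≠ 0 := by
  induction hS₀ using Finset.Nonempty.cons_induction generalizing f U with
  | singleton a =>
    obtain ⟨j, hj⟩ : U.Nonempty := card_pos.1 (by simpa using hU)
    by_contra! h
    have hconst : ∀ v, f v = f 0 := fun v => by
      have := h (Matrix.of fun _ => v)
      rw [anfCoeff_comp_vecMul f, ← insert_empty, sum_powerset_insert (notMem_empty a)] at this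
      simp only [powerset_empty, sum_singleton, sum_empty, insert_empty, of_apply] at this
      exact (CharTwo.add_eq_zero.1 this).symm
    exact hf (anfCoeff_eq_zero_of_mem hj fun T _ => by rw [hconst, hconst (charVec T)])
  | cons a s ha hs ih =>
    rw [card_cons] at hU
    obtain ⟨j, hj⟩ : U.Nonempty := card_pos.1 (by omega)
    rw [← insert_erase hj, anfCoeff_insert_eq_anfCoeff_add_single f (notMem_erase j U)] at hf
    obtain ⟨M, hM⟩ := ih (by rw [card_erase_of_mem hj]; omega) hf
    -- the new row `a` supplies the direction `e_j` of the derivative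
    refine ⟨updateRow M a (Pi.single j 1), ?_⟩
    rw [cons_eq_insert, anfCoeff_insert _ ha]
    convert hM using 1
    refine sum_congr rfl fun T hT => ?_
    have haT : a ∉ T := fun h => ha (mem_powerset.1 hT h)
    have hrows : ∀ t, ∑ i ∈ T, updateRow M a (Pi.single j 1) i t = ∑ i ∈ T, M i t := fun t =>
      sum_congr rfl fun i hi => by rw [updateRow_ne (ne_of_mem_of_not_mem hi haT)]
    simp only [charVec_vecMul, sum_insert haT, updateRow_self, hrows]
    rw [add_comm]
    congr 2
    ext t
    exact add_comm _ _

end AlgebraicNormalForm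

section PolyDeg

variable {n d : ℕ}

lemma anfCoeff_comp_vecMul_eq_zero {σ : Type*} [Fintype σ] [DecidableEq σ]
    {f : (Fin n → ZMod 2) → ZMod 2} (hf : f ∈ PolyDeg n d) (M : Matrix σ (Fin n) (ZMod 2))
    {S : Finset σ} (hS : d < S.card) : anfCoeff (fun z => f (z ᵥ* M)) S = 0 := by
  obtain ⟨c, hc⟩ := hf
  simp only [hc]
  rw [anfCoeff_sum_mul]
  refine sum_eq_zero fun U hU => ?_
  rw [anfCoeff_prod_vecMul_eq_zero M U ((mem_filter.1 hU).2.trans_lt hS), mul_zero]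

lemma mem_polyDeg_iff {f : (Fin n → ZMod 2) → ZMod 2} :
    f ∈ PolyDeg n d ↔ ∀ S : Finset (Fin n), d < S.card → anfCoeff f S = 0 := by
  refine ⟨fun hf S hS => by simpa using anfCoeff_comp_vecMul_eq_zero hf 1 hS,
    fun hf => ⟨anfCoeff f, fun x => ?_⟩⟩
  rw [← sum_anfCoeff_mul_prod f x, sum_filter]
  refine sum_congr rfl fun S _ => ?_
  rw [ite_eq_left_iff.2 fun h => by rw [hf S (not_le.1 h), zero_mul]]

lemma prod_mem_polyDeg {U : Finset (Fin n)} (hU : U.card ≤ d) :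
    (fun x => ∏ i ∈ U, x i) ∈ PolyDeg n d :=
  mem_polyDeg_iff.2 fun _ hS => by
    simpa using anfCoeff_prod_vecMul_eq_zero 1 U (hU.trans_lt hS)

lemma prod_notMem_polyDeg {U : Finset (Fin n)} (hU : d < U.card) :
    (fun x => ∏ i ∈ U, x i) ∉ PolyDeg n d := fun h =>
  one_ne_zero ((anfCoeff_prod_self U).symm.trans (mem_polyDeg_iff.1 h U hU))

end PolyDeg

section Pattern

variable {ℓ m n d : ℕ} (X : Matrix (Fin ℓ) (Fin m) (ZMod 2))

lemma patternSum_eq_sum_anfCoeff (f : (Fin n → ZMod 2) → ZMod 2)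
    (M : Matrix (Fin m) (Fin n) (ZMod 2)) :
    patternSum X f M = ∑ S, anfCoeff (fun z => f (z ᵥ* M)) S * ∑ i, ∏ j ∈ S, X i j := by
  simp only [patternSum, mul_apply_eq_vecMul]
  exact sum_apply_row_eq_sum_anfCoeff X fun z => f (z ᵥ* M)

lemma patternSum_diagonal_mul {S₀ : Finset (Fin m)}
    (hX : ∀ S ⊂ S₀, ∑ i, ∏ j ∈ S, X i j = 0) (f : (Fin n → ZMod 2) → ZMod 2)
    (M : Matrix (Fin m) (Fin n) (ZMod 2)) :
    patternSum X f (diagonal (charVec S₀) * M)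
      = anfCoeff (fun z => f (z ᵥ* M)) S₀ * ∑ i, ∏ j ∈ S₀, X i j := by
  rw [patternSum_eq_sum_anfCoeff, sum_eq_single S₀]
  · simp only [anfCoeff_comp_vecMul]
    congr 1
    refine sum_congr rfl fun T hT => congrArg f (funext fun t => sum_congr rfl fun i hi => ?_)
    simp [diagonal_mul, charVec, mem_powerset.1 hT hi]
  · intro S _ hne
    by_cases hS : S ⊆ S₀
    · rw [hX S (ssubset_of_subset_of_ne hS hne), mul_zero]
    · obtain ⟨j, hjS, hj⟩ := not_subset.1 hS
      rw [anfCoeff_eq_zero_of_mem hjS fun T hjT => ?_, zero_mul]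
      simp [charVec_vecMul, sum_insert hjT, diagonal_mul, charVec, hj]
  · simp

lemma isCompletePattern_of_sum_prod_eq_zero
    (hX : ∀ S : Finset (Fin m), S.card ≤ d → ∑ i, ∏ j ∈ S, X i j = 0) :
    IsCompletePattern n d X := by
  intro f hf M
  rw [patternSum_eq_sum_anfCoeff]
  refine sum_eq_zero fun S _ => ?_
  rcases le_or_gt S.card d with hS | hS
  · rw [hX S hS, mul_zero]
  · rw [anfCoeff_comp_vecMul_eq_zero hf M hS, zero_mul]

lemma sum_prod_eq_zero_of_isCompletePattern (hdn : d ≤ n) (hX : IsCompletePattern n d X)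
    (S : Finset (Fin m)) (hS : S.card ≤ d) : ∑ i, ∏ j ∈ S, X i j = 0 := by
  induction S using Finset.strongInduction with
  | H S ih =>
    obtain rfl | hne := S.eq_empty_or_nonempty
    · simpa [patternSum] using hX _ (prod_mem_polyDeg (U := ∅) (Nat.zero_le d)) 0
    obtain ⟨U, -, hU⟩ := exists_subset_card_eq (s := (univ : Finset (Fin n))) (n := S.card)
      (by rw [card_univ, Fintype.card_fin]; exact hS.trans hdn)
    obtain ⟨M, hM⟩ := exists_anfCoeff_comp_vecMul_ne_zero hne hU.ge
      ((anfCoeff_prod_self U).trans_ne one_ne_zero)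
    have hzero := hX _ (prod_mem_polyDeg (hU.trans_le hS)) (diagonal (charVec S) * M)
    rw [patternSum_diagonal_mul X fun R hR => ih R hR ((card_le_card hR.subset).trans hS)] at hzero
    exact (mul_eq_zero.1 hzero).resolve_left hM

lemma isMinimallySoundPattern_of_sum_prod
    (hX : ∀ S : Finset (Fin m), S.card ≤ d → ∑ i, ∏ j ∈ S, X i j = 0)
    {S₀ : Finset (Fin m)} (hS₀ : S₀.card = d + 1) (hXS₀ : ∑ i, ∏ j ∈ S₀, X i j = 1) :
    IsMinimallySoundPattern n d X := by
  intro f hf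
  obtain ⟨U, hU, hfU⟩ : ∃ U, d < U.card ∧ anfCoeff f U ≠ 0 := by
    simpa [mem_polyDeg_iff] using hf
  obtain ⟨M, hM⟩ :=
    exists_anfCoeff_comp_vecMul_ne_zero (S₀ := S₀) (card_pos.1 (by omega)) (by omega) hfU
  refine ⟨diagonal (charVec S₀) * M, ?_⟩
  rw [patternSum_diagonal_mul X fun S hS => hX S (by have := card_lt_card hS; omega), hXS₀,
    mul_one]
  exact Fin.eq_one_of_ne_zero _ hM

lemma exists_sum_prod_eq_one_of_isMinimallySoundPattern (hn : d + 1 ≤ n)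
    (hX : ∀ S : Finset (Fin m), S.card ≤ d → ∑ i, ∏ j ∈ S, X i j = 0)
    (hsound : IsMinimallySoundPattern n d X) :
    ∃ S : Finset (Fin m), S.card = d + 1 ∧ ∑ i, ∏ j ∈ S, X i j = 1 := by
  obtain ⟨U, -, hU⟩ := exists_subset_card_eq (s := (univ : Finset (Fin n))) (n := d + 1)
    (by rwa [card_univ, Fintype.card_fin])
  obtain ⟨M, hM⟩ := hsound _ (prod_notMem_polyDeg (d := d) (U := U) (by omega))
  rw [patternSum_eq_sum_anfCoeff] at hM
  obtain ⟨S, -, hS⟩ := exists_ne_zero_of_sum_ne_zero (hM.trans_ne one_ne_zero)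
  refine ⟨S, le_antisymm ?_ ?_, Fin.eq_one_of_ne_zero _ (right_ne_zero_of_mul hS)⟩
  · by_contra! h
    exact hS (by rw [anfCoeff_prod_vecMul_eq_zero M U (by omega), zero_mul])
  · by_contra! h
    exact hS (by rw [hX S (by omega), mul_zero])

end Pattern

theorem stmt_6_general (d n ℓ m : ℕ) (hn : d + 1 ≤ n)
    (X : Matrix (Fin ℓ) (Fin m) (ZMod 2)) :
    (IsCompletePattern n d X ∧ IsMinimallySoundPattern n d X) ↔
      ((∀ S : Finset (Fin m), S.card ≤ d → ∑ i, ∏ j ∈ S, X i j = 0) ∧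
        (∃ S : Finset (Fin m), S.card = d + 1 ∧ ∑ i, ∏ j ∈ S, X i j = 1)) := by
  constructor
  · rintro ⟨hcomplete, hsound⟩
    have hX := sum_prod_eq_zero_of_isCompletePattern X (by omega) hcomplete
    exact ⟨hX, exists_sum_prod_eq_one_of_isMinimallySoundPattern X hn hX hsound⟩
  · rintro ⟨hX, S₀, hS₀, hXS₀⟩
    exact ⟨isCompletePattern_of_sum_prod_eq_zero X hX,
      isMinimallySoundPattern_of_sum_prod X hX hS₀ hXS₀⟩

theorem stmt_6 (d n ℓ m : ℕ) (hd : 1 ≤ d) (hn : d + 1 ≤ n)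
    (X : Matrix (Fin ℓ) (Fin m) (ZMod 2)) (hlm : m ≤ ℓ)
    (hrows : Function.Injective X) (hrank : X.rank = m) :
    (IsCompletePattern n d X ∧ IsMinimallySoundPattern n d X) ↔
      ((∀ S : Finset (Fin m), S.card ≤ d → ∑ i, ∏ j ∈ S, X i j = 0) ∧
        (∃ S : Finset (Fin m), S.card = d + 1 ∧ ∑ i, ∏ j ∈ S, X i j = 1)) :=
  stmt_6_general d n ℓ m hn X
end

section
/- Let d ≥ 1 and n ≥ 1 be integers, let ε ∈ (0, 1], and let X ∈ F_2^{ℓ×m} be a testing pattern with ℓ ≥ 3 whose rows are pairwise distinct and nonzero and which is good for P_d (for functions on F_2^n). Then for every function f : F_2^n → F_2 that is ε-far from P_d, the number of matrices M ∈ F_2^{m×n} with T_{X,f}(M) = 1 is at least min{ℓε/2, 1/(2ℓ²)} · 2^{mn}. Equivalently, for uniformly random M, the probability that T_{X,f}(M) = 1 is at least min{ℓε/2, 1/(2ℓ²)}. -/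
/-!
Self-correction. Let `ρ` be the probability that the test rejects `f`. Each parameter matrix `M`
casts the vote `∑_{i ≠ 0} f (X_i M)` for the value of `f` at `X_0 M`, and `g` is the majority
vote. A random tensor `R ∈ 𝔽₂^{m × m × n}` yields an `ℓ × ℓ` grid of points `X_i R X_j` whose
rows and columns are again sets of testing points, and any two rows (or two columns) come from
independent uniform parameter matrices. Two independent votes on one point can be placed as row `0`
and column `0` of such a grid, so they disagree only if one of the `2 (ℓ - 1)` other row and column
tests rejects: the votes are nearly unanimous. If `ρ < 1 / (2 ℓ²)`, a union bound then finds, for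
every `M₀`, a grid with column `0` equal to `M₀` on which every row vote is the majority vote and
every other column test accepts; summing the grid in both orders gives `T_{X,g}(M₀) = 0`. So
`g ∈ P_d` by minimal soundness, and `δ = Pr[f ≠ g] ≥ ε`. Where `f ≠ g`, at least half of the votes
come from rejected tests, so `δ ≤ 2 ρ`. Finally the test rejects whenever exactly one testing point
lies in `{f ≠ g}`, and inclusion–exclusion gives `ρ ≥ ℓ δ - ℓ (ℓ - 1) δ² ≥ ℓ ε / 2`.
-/

open Finset

namespace LowDegreeTest

section Probability

variable {α β ι : Type*} [Fintype α] [Fintype β]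

open Classical in
noncomputable def prob (P : α → Prop) : ℝ := #{a | P a} / Fintype.card α

lemma prob_eq_card_div (P : α → Prop) [DecidablePred P] :
    prob P = #{a | P a} / Fintype.card α := by
  rw [prob]
  congr 3
  exact filter_congr_decidable _ _ _

lemma prob_nonneg (P : α → Prop) : 0 ≤ prob P := by
  unfold prob
  positivity

lemma prob_mono {P Q : α → Prop} (h : ∀ a, P a → Q a) : prob P ≤ prob Q := by
  classical
  rw [prob_eq_card_div, prob_eq_card_div]
  gcongr
  exact h _

lemma prob_congr {P Q : α → Prop} (h : ∀ a, P a ↔ Q a) : prob P = prob Q :=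
  le_antisymm (prob_mono fun a => (h a).1) (prob_mono fun a => (h a).2)

lemma prob_true [Nonempty α] : prob (fun _ : α => True) = 1 := by
  classical
  rw [prob_eq_card_div, filter_true, card_univ, div_self]
  exact_mod_cast Fintype.card_ne_zero

lemma prob_false : prob (fun _ : α => False) = 0 := by simp [prob]

lemma prob_eq (a₀ : α) : prob (· = a₀) = (Fintype.card α : ℝ)⁻¹ := by
  classical
  rw [prob_eq_card_div, filter_eq' univ a₀, if_pos (mem_univ _), card_singleton, Nat.cast_one,
    one_div]

lemma prob_and_add_prob_and_not (P Q : α → Prop) :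
    prob (fun a => P a ∧ Q a) + prob (fun a => P a ∧ ¬Q a) = prob P := by
  classical
  simp only [prob_eq_card_div, ← add_div, ← filter_filter]
  rw [← Nat.cast_add, card_filter_add_card_filter_not]

lemma prob_or_le (P Q : α → Prop) : prob (fun a => P a ∨ Q a) ≤ prob P + prob Q := by
  classical
  simp only [prob_eq_card_div, ← add_div, filter_or]
  gcongr
  exact_mod_cast card_union_le _ _

lemma prob_or_of_disjoint {P Q : α → Prop} (h : ∀ a, P a → ¬Q a) :
    prob (fun a => P a ∨ Q a) = prob P + prob Q := by
  classical
  simp only [prob_eq_card_div, ← add_div, filter_or]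
  rw [card_union_of_disjoint (disjoint_filter.mpr fun a _ => h a), Nat.cast_add]

lemma prob_exists_le (s : Finset ι) (P : ι → α → Prop) :
    prob (fun a => ∃ i ∈ s, P i a) ≤ ∑ i ∈ s, prob (P i) := by
  classical
  simp only [prob_eq_card_div, ← sum_div]
  gcongr
  have hsub : ({a | ∃ i ∈ s, P i a} : Finset α) ⊆ s.biUnion fun i => {a | P i a} := by
    intro a ha
    obtain ⟨i, hi, hPa⟩ := (mem_filter.mp ha).2
    exact mem_biUnion.mpr ⟨i, hi, mem_filter.mpr ⟨mem_univ a, hPa⟩⟩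
  exact_mod_cast (card_le_card hsub).trans card_biUnion_le

lemma sum_prob_le_of_pairwise_disjoint (s : Finset ι) (P : ι → α → Prop) {Q : α → Prop}
    (hdisj : ∀ i ∈ s, ∀ j ∈ s, i ≠ j → ∀ a, P i a → ¬P j a) (hQ : ∀ i ∈ s, ∀ a, P i a → Q a) :
    ∑ i ∈ s, prob (P i) ≤ prob Q := by
  classical
  simp only [prob_eq_card_div, ← sum_div]
  gcongr
  rw [← Nat.cast_sum, ← card_biUnion fun i hi j hj hij =>
    disjoint_filter.mpr fun a _ => hdisj i hi j hj hij a]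
  refine Nat.cast_le.mpr (card_le_card fun a ha => ?_)
  obtain ⟨i, hi, ha⟩ := mem_biUnion.mp ha
  exact mem_filter.mpr ⟨mem_univ a, hQ i hi a (mem_filter.mp ha).2⟩

lemma exists_of_sum_prob_lt (s : Finset ι) {P : α → Prop} {Q : ι → α → Prop}
    (h : ∑ i ∈ s, prob (fun a => P a ∧ Q i a) < prob P) :
    ∃ a, P a ∧ ∀ i ∈ s, ¬Q i a := by
  by_contra! hcon
  refine (h.trans_le ?_).false
  calc prob P ≤ prob (fun a => ∃ i ∈ s, P a ∧ Q i a) :=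
        prob_mono fun a ha => (hcon a ha).imp fun i hi => ⟨hi.1, ha, hi.2⟩
    _ ≤ _ := prob_exists_le s _

lemma prob_prod (P : α → Prop) (Q : β → Prop) :
    prob (fun p : α × β => P p.1 ∧ Q p.2) = prob P * prob Q := by
  classical
  simp only [prob_eq_card_div]
  rw [← univ_product_univ, filter_product, card_product, Fintype.card_prod, Nat.cast_mul,
    Nat.cast_mul, mul_div_mul_comm]

end Probability

section Pushforward

variable {G H : Type*} [AddGroup G] [AddGroup H] [Fintype G] [Fintype H]

lemma card_filter_comp_eq_mul_card_ker [DecidableEq H] (φ : G →+ H) (Q : H → Prop)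
    [DecidablePred Q] :
    #{g | Q (φ g)} = #{h | h ∈ Set.range φ ∧ Q h} * #{g | φ g = 0} := by
  rw [card_eq_sum_card_fiberwise (f := φ) (t := {h | h ∈ Set.range φ ∧ Q h})
    fun g hg => by simpa using (mem_filter.mp hg).2]
  refine sum_const_nat fun h hh => ?_
  obtain ⟨hrange, hQ⟩ := (mem_filter.mp hh).2
  rw [filter_filter, ← AddMonoidHom.card_fiber_eq_of_mem_range φ hrange ⟨0, map_zero φ⟩]
  congr 1
  exact filter_congr fun g _ => ⟨And.right, fun hg => ⟨hg ▸ hQ, hg⟩⟩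

lemma prob_comp_mul_prob_range (φ : G →+ H) {C : H → Prop} (hC : ∀ h, C h ↔ h ∈ Set.range φ)
    (P : H → Prop) :
    prob (fun g => P (φ g)) * prob C = prob (fun h => C h ∧ P h) := by
  classical
  obtain rfl : C = (· ∈ Set.range φ) := funext fun h => propext (hC h)
  have hP := card_filter_comp_eq_mul_card_ker φ P
  have hG := card_filter_comp_eq_mul_card_ker φ fun _ => True
  simp only [filter_true, card_univ, and_true] at hG
  have hk : #{g | φ g = 0} ≠ 0 := (card_pos.mpr ⟨0, by simp⟩).ne'
  have hr : #{h | h ∈ Set.range φ} ≠ 0 :=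
    (card_pos.mpr ⟨0, by simpa using ⟨0, map_zero φ⟩⟩).ne'
  simp only [prob_eq_card_div, hP, hG]
  push_cast
  field_simp

lemma prob_comp_of_surjective (φ : G →+ H) (hφ : Function.Surjective φ) (P : H → Prop) :
    prob (fun g => P (φ g)) = prob P := by
  simpa [prob_true] using
    prob_comp_mul_prob_range φ (C := fun _ => True) (fun h => by simpa using hφ h) P

end Pushforward

section Contraction

variable {K E ι κ : Type*} [Fintype ι] [Fintype κ]

def contract [Semiring K] [AddCommMonoid E] [Module K E] (y : ι → K) : (ι → E) →+ E where
  toFun R := ∑ i, y i • R i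
  map_zero' := by simp
  map_add' R S := by simp [smul_add, sum_add_distrib]

def contractSnd {α : Type*} [Semiring K] [AddCommMonoid E] [Module K E] (z : κ → K) :
    (α → κ → E) →+ (α → E) :=
  (contract z).compLeft α

lemma contract_apply [Semiring K] [AddCommMonoid E] [Module K E] (y : ι → K) (R : ι → E) :
    contract y R = ∑ i, y i • R i := rfl

lemma contract_smul_const [CommSemiring K] [AddCommMonoid E] [Module K E] (y u : ι → K) (e : E) :
    contract y (fun i => u i • e) = (y ⬝ᵥ u) • e := by
  simp [contract_apply, dotProduct, sum_smul, smul_smul]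

lemma contract_comm [CommSemiring K] [AddCommMonoid E] [Module K E] (y : ι → K) (z : κ → K)
    (R : ι → κ → E) :
    contract z (contract y R) = contract y (contractSnd z R) := by
  simp only [contract_apply, contractSnd, AddMonoidHom.compLeft_apply, Function.comp_apply,
    Finset.sum_apply, Pi.smul_apply, Finset.smul_sum, smul_smul]
  rw [sum_comm]
  simp_rw [mul_comm]

variable [Field K] [AddCommGroup E] [Module K E]

lemma exists_dotProduct_eq_one {y : ι → K} (hy : y ≠ 0) : ∃ u, y ⬝ᵥ u = 1 := by
  classical
  obtain ⟨c, hc⟩ := Function.ne_iff.mp hy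
  exact ⟨Pi.single c (y c)⁻¹, by simpa [dotProduct_single] using mul_inv_cancel₀ hc⟩

lemma exists_dotProduct_eq_one_eq_zero {y z : ι → K} (h : LinearIndependent K ![y, z]) :
    ∃ u, y ⬝ᵥ u = 1 ∧ z ⬝ᵥ u = 0 := by
  have hrank : (Matrix.of ![y, z]).rank = 2 := by
    simpa using LinearIndependent.rank_matrix (M := Matrix.of ![y, z]) h
  have htop : LinearMap.range (Matrix.of ![y, z]).mulVecLin = ⊤ :=
    Submodule.eq_top_of_finrank_eq (by rw [Module.finrank_fin_fun]; exact hrank)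
  obtain ⟨u, hu⟩ := LinearMap.range_eq_top.mp htop ![1, 0]
  exact ⟨u, by simpa using congrFun hu 0, by simpa using congrFun hu 1⟩

lemma contract_surjective {y : ι → K} (hy : y ≠ 0) :
    Function.Surjective (contract (E := E) y) := by
  obtain ⟨u, hu⟩ := exists_dotProduct_eq_one hy
  exact fun e => ⟨fun i => u i • e, by rw [contract_smul_const, hu, one_smul]⟩

lemma contract_prod_surjective {y z : ι → K} (h : LinearIndependent K ![y, z]) :
    Function.Surjective ((contract (E := E) y).prod (contract z)) := by
  obtain ⟨u, hyu, hzu⟩ := exists_dotProduct_eq_one_eq_zero h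
  obtain ⟨w, hzw, hyw⟩ := exists_dotProduct_eq_one_eq_zero
    (LinearIndependent.pair_symm_iff (x := y) (y := z) |>.mp h)
  intro p
  refine ⟨(fun i => u i • p.1) + fun i => w i • p.2, Prod.ext ?_ ?_⟩
  · change contract y _ = p.1
    rw [map_add, contract_smul_const, contract_smul_const, hyu, hyw, one_smul, zero_smul, add_zero]
  · change contract z _ = p.2
    rw [map_add, contract_smul_const, contract_smul_const, hzu, hzw, one_smul, zero_smul, zero_add]

lemma contractSnd_prod_surjective {y z : κ → K} (h : LinearIndependent K ![y, z]) (α : Type*) :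
    Function.Surjective ((contractSnd (E := E) (α := α) y).prod (contractSnd z)) := by
  rintro ⟨M, M'⟩
  choose R hR using fun a => contract_prod_surjective (E := E) h (M a, M' a)
  exact ⟨R, Prod.ext (funext fun a => congrArg Prod.fst (hR a))
    (funext fun a => congrArg Prod.snd (hR a))⟩

lemma mem_range_contract_prod_contractSnd {y : ι → K} {z : κ → K} (hy : y ≠ 0) (hz : z ≠ 0)
    (p : (κ → E) × (ι → E)) :
    p ∈ Set.range ((contract y).prod (contractSnd z)) ↔ contract z p.1 = contract y p.2 := by
  refine ⟨fun ⟨R, hR⟩ => hR ▸ contract_comm y z R, fun hc => ?_⟩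
  obtain ⟨M, M'⟩ := p
  obtain ⟨u, hu⟩ := exists_dotProduct_eq_one hy
  obtain ⟨v, hv⟩ := exists_dotProduct_eq_one hz
  simp only [contract_apply, dotProduct] at hc hu hv
  refine ⟨fun a => u a • M + fun b => v b • (M' a - u a • contract z M), Prod.ext ?_ ?_⟩
  · funext b
    simp only [AddMonoidHom.prod_apply, contract_apply, Finset.sum_apply, Pi.add_apply,
      Pi.smul_apply, smul_add, smul_sub, smul_smul, sum_add_distrib, sum_sub_distrib, ← sum_smul,
      hu, one_smul]
    simp only [mul_comm (y _) (v b), mul_smul, ← Finset.smul_sum, ← hc, mul_left_comm (y _) (v b),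
      ← mul_sum, hu, mul_one, sub_self, add_zero]
  · funext a
    simp only [AddMonoidHom.prod_apply, contractSnd, AddMonoidHom.compLeft_apply,
      Function.comp_apply, contract_apply, Pi.add_apply, Pi.smul_apply, smul_add, smul_sub,
      smul_smul, sum_add_distrib, sum_sub_distrib, ← sum_smul, hv, one_smul]
    simp only [mul_comm (z _) (u a), mul_smul, ← Finset.smul_sum, ← mul_assoc, ← sum_mul, hv,
      one_mul]
    abel

end Contraction

lemma linearIndependent_pair_of_ne {V : Type*} [AddCommGroup V] [Module (ZMod 2) V] {x y : V}
    (hx : x ≠ 0) (hy : y ≠ 0) (hxy : x ≠ y) : LinearIndependent (ZMod 2) ![x, y] :=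
  (LinearIndependent.pair_iff' hx).mpr fun a => by
    obtain rfl | rfl : a = 0 ∨ a = 1 := by revert a; decide
    · simpa using hy.symm
    · simpa using hxy

section ContractionProb

variable {K E ι κ α : Type*} [Field K] [AddCommGroup E] [Module K E] [Fintype E]
  [Fintype ι] [Fintype κ] [DecidableEq ι] [DecidableEq κ] [Fintype α] [DecidableEq α]

lemma prob_contract_eq {y : ι → K} (hy : y ≠ 0) (e : E) :
    prob (fun R : ι → E => contract y R = e) = (Fintype.card E : ℝ)⁻¹ :=
  (prob_comp_of_surjective _ (contract_surjective hy) (· = e)).trans (prob_eq e)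

lemma prob_contract_and_contract {y z : ι → K} (h : LinearIndependent K ![y, z])
    (P Q : E → Prop) :
    prob (fun R : ι → E => P (contract y R) ∧ Q (contract z R)) = prob P * prob Q :=
  (prob_comp_of_surjective _ (contract_prod_surjective (E := E) h) fun p => P p.1 ∧ Q p.2).trans
    (prob_prod P Q)

lemma prob_contractSnd_eq {z : κ → K} (hz : z ≠ 0) (M : α → E) :
    prob (fun R : α → κ → E => contractSnd z R = M) = (Fintype.card (α → E) : ℝ)⁻¹ :=
  (prob_comp_of_surjective _ (contract_surjective (E := E) hz).comp_left (· = M)).trans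
    (prob_eq M)

lemma prob_contractSnd_and_contractSnd {y z : κ → K} (h : LinearIndependent K ![y, z])
    (P Q : (α → E) → Prop) :
    prob (fun R : α → κ → E => P (contractSnd y R) ∧ Q (contractSnd z R)) = prob P * prob Q :=
  (prob_comp_of_surjective _ (contractSnd_prod_surjective (E := E) h α)
    fun p => P p.1 ∧ Q p.2).trans (prob_prod P Q)

lemma prob_contract_contractSnd {y : ι → K} {z : κ → K} (hy : y ≠ 0) (hz : z ≠ 0)
    (P : (κ → E) × (ι → E) → Prop) :
    prob (fun R : ι → κ → E => P (contract y R, contractSnd z R)) * (Fintype.card E : ℝ)⁻¹ =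
      prob (fun p => contract z p.1 = contract y p.2 ∧ P p) := by
  let ψ : (κ → E) × (ι → E) →+ E :=
    (contract z).comp (AddMonoidHom.fst _ _) - (contract y).comp (AddMonoidHom.snd _ _)
  have hψ : Function.Surjective ψ := fun e =>
    let ⟨M, hM⟩ := contract_surjective hz e
    ⟨(M, 0), by simp [ψ, hM]⟩
  have hC : prob (fun p : (κ → E) × (ι → E) => contract z p.1 = contract y p.2) =
      (Fintype.card E : ℝ)⁻¹ := by
    rw [← prob_eq (0 : E), ← prob_comp_of_surjective ψ hψ]
    exact prob_congr fun p => by simp [ψ, sub_eq_zero]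
  rw [← hC]
  exact prob_comp_mul_prob_range _
    (fun p => (mem_range_contract_prod_contractSnd (E := E) hy hz p).symm) P

end ContractionProb

lemma zmod_two_ne_zero_iff (a : ZMod 2) : a ≠ 0 ↔ a = 1 := by revert a; decide

lemma zmod_two_ne_one_iff (a : ZMod 2) : a ≠ 1 ↔ a = 0 := by revert a; decide

section Pattern

variable {ℓ m n : ℕ} (X : Matrix (Fin ℓ) (Fin m) (ZMod 2)) (f g : (Fin n → ZMod 2) → ZMod 2)

local notation "𝕍" => Fin n → ZMod 2

local notation "𝕄" => Fin m → Fin n → ZMod 2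

-- `patternSum` on plain functions rather than `Matrix`, so that it composes with `contract`.
def testSum (M : 𝕄) : ZMod 2 := ∑ i, f (contract (X i) M)

lemma patternSum_eq_testSum (M : Matrix (Fin m) (Fin n) (ZMod 2)) :
    patternSum X f M = testSum X f M := by
  refine sum_congr rfl fun i _ => congrArg f (funext fun t => ?_)
  change _ = (∑ k, X i k • M k) t
  simp only [Finset.sum_apply, Pi.smul_apply, smul_eq_mul]
  exact Matrix.mul_apply

lemma card_filter_patternSum_eq (c : ZMod 2) :
    (#{M : Matrix (Fin m) (Fin n) (ZMod 2) | patternSum X f M = c} : ℝ) =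
      prob (fun M => testSum X f M = c) * 2 ^ (m * n) := by
  have hprob : prob (fun M : Matrix (Fin m) (Fin n) (ZMod 2) => patternSum X f M = c) =
      prob fun M => testSum X f M = c := by
    change prob (fun M : 𝕄 => patternSum X f M = c) = _
    exact prob_congr fun M => (congrArg (· = c) (patternSum_eq_testSum X f M)).to_iff
  have hcard : (Fintype.card (Matrix (Fin m) (Fin n) (ZMod 2)) : ℝ) = 2 ^ (m * n) := by
    change (Fintype.card 𝕄 : ℝ) = _
    simp [pow_mul']
  rw [← hprob, prob_eq_card_div, hcard, div_mul_cancel₀ _ (by positivity)]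

lemma mem_polyDeg_of_testSum_eq_zero {d : ℕ} (hsound : IsMinimallySoundPattern n d X)
    (hg : ∀ M, testSum X g M = 0) : g ∈ PolyDeg n d := by
  by_contra h
  obtain ⟨M, hM⟩ := hsound g h
  exact zero_ne_one (((hg M).symm.trans (patternSum_eq_testSum X g M).symm).trans hM)

lemma prob_ne_mul_two_pow : prob (fun v => g v ≠ f v) * 2 ^ n = #{v | f v ≠ g v} := by
  have hcard : (Fintype.card 𝕍 : ℝ) = 2 ^ n := by simp
  rw [prob_eq_card_div, hcard, div_mul_cancel₀ _ (by positivity)]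
  simp only [ne_comm]

lemma testSum_eq_one_of_unique_ne {M : 𝕄} (hg : testSum X g M = 0) {i : Fin ℓ}
    (hi : g (contract (X i) M) ≠ f (contract (X i) M))
    (hj : ∀ j ≠ i, g (contract (X j) M) = f (contract (X j) M)) :
    testSum X f M = 1 := by
  have hsplit : testSum X f M =
      testSum X g M + ∑ j, (g (contract (X j) M) + f (contract (X j) M)) := by
    rw [testSum, testSum, ← sum_add_distrib]
    exact sum_congr rfl fun j _ => by grind
  rw [hsplit, hg, zero_add, sum_eq_single i
    (fun j _ hji => by rw [hj j hji, CharTwo.add_self_eq_zero]) (absurd (mem_univ i))]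
  revert hi
  generalize g (contract (X i) M) = a
  generalize f (contract (X i) M) = b
  revert a b
  decide

lemma mul_prob_ne_le_of_testSum_eq_zero (hX : ∀ i, X i ≠ 0) (hXinj : Function.Injective X)
    (hg : ∀ M, testSum X g M = 0) :
    ℓ * prob (fun v => g v ≠ f v) ≤
      prob (fun M => testSum X f M = 1) + ℓ * (ℓ - 1) * prob (fun v => g v ≠ f v) ^ 2 := by
  classical
  set δ := prob fun v => g v ≠ f v
  let bad : Fin ℓ → 𝕄 → Prop := fun i M => g (contract (X i) M) ≠ f (contract (X i) M)
  let only : Fin ℓ → 𝕄 → Prop := fun i M => bad i M ∧ ∀ j ≠ i, ¬bad j M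
  have hbad : ∀ i, prob (bad i) = δ := fun i =>
    prob_comp_of_surjective _ (contract_surjective (E := 𝕍) (hX i)) fun v => g v ≠ f v
  have hpair : ∀ i, ∀ j ∈ univ.erase i, prob (fun M => bad i M ∧ bad j M) = δ * δ :=
    fun i j hj => prob_contract_and_contract
      (linearIndependent_pair_of_ne (hX i) (hX j) (hXinj.ne (ne_of_mem_erase hj).symm))
      (fun v => g v ≠ f v) fun v => g v ≠ f v
  have honly : ∑ i, prob (only i) ≤ prob fun M => testSum X f M = 1 :=
    sum_prob_le_of_pairwise_disjoint univ _ (fun i _ j _ hij M hi hj => hi.2 j (Ne.symm hij) hj.1)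
      fun i _ M h => testSum_eq_one_of_unique_ne X f g (hg M) h.1 fun j hj => not_not.mp (h.2 j hj)
  have hi : ∀ i, δ ≤ prob (only i) + (ℓ - 1) * δ ^ 2 := by
    intro i
    calc δ = prob (bad i) := (hbad i).symm
      _ ≤ prob (fun M => only i M ∨ ∃ j ∈ univ.erase i, bad i M ∧ bad j M) := by
          refine prob_mono fun M hM => ?_
          by_cases h : ∃ j ≠ i, bad j M
          · obtain ⟨j, hji, hj⟩ := h
            exact Or.inr ⟨j, mem_erase.mpr ⟨hji, mem_univ j⟩, hM, hj⟩
          · exact Or.inl ⟨hM, fun j hji hj => h ⟨j, hji, hj⟩⟩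
      _ ≤ prob (only i) + ∑ j ∈ univ.erase i, δ * δ :=
          (prob_or_le _ _).trans (add_le_add_right ((prob_exists_le _ _).trans
            (sum_le_sum fun j hj => (hpair i j hj).le)) _)
      _ = prob (only i) + (ℓ - 1) * δ ^ 2 := by
          rw [sum_const, card_erase_of_mem (mem_univ _), card_univ, Fintype.card_fin,
            nsmul_eq_mul, Nat.cast_pred (Fin.pos i)]
          ring
  calc ℓ * δ = ∑ _i : Fin ℓ, δ := by simp
    _ ≤ ∑ i, (prob (only i) + (ℓ - 1) * δ ^ 2) := sum_le_sum fun i _ => hi i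
    _ ≤ _ := by
        rw [sum_add_distrib, sum_const, card_univ, Fintype.card_fin, nsmul_eq_mul]
        linarith

lemma sum_testSum_contract (R : Fin m → 𝕄) :
    ∑ j, testSum X f (contract (X j) R) = ∑ j, testSum X f (contractSnd (X j) R) :=
  (sum_congr rfl fun j _ => sum_congr rfl fun i _ =>
    congrArg f (contract_comm (X j) (X i) R)).trans sum_comm

variable [NeZero ℓ]

/-- In characteristic two this is `∑ i ≠ 0, f (X_i M)`: the value that the other testing points
predict for `f (X_0 M)`. -/
def vote (M : 𝕄) : ZMod 2 := testSum X f M + f (contract (X 0) M)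

lemma vote_contract_add_vote_contractSnd (R : Fin m → 𝕄) :
    vote X f (contract (X 0) R) + vote X f (contractSnd (X 0) R) =
      ∑ j ∈ univ.erase 0,
        (testSum X f (contract (X j) R) + testSum X f (contractSnd (X j) R)) := by
  have hgrid := sum_testSum_contract X f R
  rw [← add_sum_erase _ _ (mem_univ 0), ← add_sum_erase _ _ (mem_univ 0)] at hgrid
  rw [vote, vote, contract_comm, sum_add_distrib]
  grind

lemma sum_vote_contract (R : Fin m → 𝕄) :
    ∑ i, vote X f (contract (X i) R) = ∑ j ∈ univ.erase 0, testSum X f (contractSnd (X j) R) := by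
  have hrow : ∑ i, f (contract (X 0) (contract (X i) R)) = testSum X f (contractSnd (X 0) R) :=
    sum_congr rfl fun i _ => congrArg f (contract_comm _ _ R)
  simp only [vote, sum_add_distrib, hrow, sum_testSum_contract,
    ← add_sum_erase univ (fun j => testSum X f (contractSnd (X j) R)) (mem_univ 0)]
  grind

lemma exists_testSum_eq_one_of_vote_ne (R : Fin m → 𝕄)
    (h : vote X f (contract (X 0) R) ≠ vote X f (contractSnd (X 0) R)) :
    ∃ j ∈ univ.erase 0,
      testSum X f (contract (X j) R) = 1 ∨ testSum X f (contractSnd (X j) R) = 1 := by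
  by_contra! hcon
  refine h (CharTwo.add_eq_zero.mp ?_)
  rw [vote_contract_add_vote_contractSnd]
  refine sum_eq_zero fun j hj => ?_
  rw [(zmod_two_ne_one_iff _).mp (hcon j hj).1, (zmod_two_ne_one_iff _).mp (hcon j hj).2, add_zero]

noncomputable def voteProb (c : ZMod 2) (x : 𝕍) : ℝ :=
  prob fun M : 𝕄 => contract (X 0) M = x ∧ vote X f M = c

noncomputable def corrected (x : 𝕍) : ZMod 2 :=
  if voteProb X f 0 x < voteProb X f 1 x then 1 else 0

lemma voteProb_zero_add_voteProb_one (hX0 : X 0 ≠ 0) (x : 𝕍) :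
    voteProb X f 0 x + voteProb X f 1 x = (Fintype.card 𝕍 : ℝ)⁻¹ := by
  rw [← prob_contract_eq hX0 x, ← prob_and_add_prob_and_not _ fun M => vote X f M = 0]
  congr 1
  exact prob_congr fun M => and_congr_right' (zmod_two_ne_zero_iff _).symm

lemma prob_vote_ne_corrected (x : 𝕍) :
    prob (fun M : 𝕄 => contract (X 0) M = x ∧ vote X f M ≠ corrected X f x) =
      min (voteProb X f 0 x) (voteProb X f 1 x) := by
  unfold corrected
  split_ifs with h
  · exact (prob_congr fun M => and_congr_right' (zmod_two_ne_one_iff _)).trans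
      (min_eq_left h.le).symm
  · exact (prob_congr fun M => and_congr_right' (zmod_two_ne_zero_iff _)).trans
      (min_eq_right (not_lt.mp h)).symm

lemma prob_vote_eq_corrected (x : 𝕍) :
    prob (fun M : 𝕄 => contract (X 0) M = x ∧ vote X f M = corrected X f x) =
      max (voteProb X f 0 x) (voteProb X f 1 x) := by
  unfold corrected
  split_ifs with h
  · exact (max_eq_right h.le).symm
  · exact (max_eq_left (not_lt.mp h)).symm

lemma prob_vote_ne_vote_mul (hX0 : X 0 ≠ 0) (x : 𝕍) :
    prob (fun R : Fin m → 𝕄 => contract (X 0) (contractSnd (X 0) R) = x ∧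
        vote X f (contract (X 0) R) ≠ vote X f (contractSnd (X 0) R)) * (Fintype.card 𝕍 : ℝ)⁻¹ =
      2 * voteProb X f 0 x * voteProb X f 1 x := by
  have hne : ∀ a b : ZMod 2, a ≠ b ↔ a = 0 ∧ b = 1 ∨ a = 1 ∧ b = 0 := by decide
  set A : ZMod 2 → 𝕄 → Prop := fun c M => contract (X 0) M = x ∧ vote X f M = c
  have e01 : prob (fun p : 𝕄 × 𝕄 => A 0 p.1 ∧ A 1 p.2) = voteProb X f 0 x * voteProb X f 1 x :=
    prob_prod _ _
  have e10 : prob (fun p : 𝕄 × 𝕄 => A 1 p.1 ∧ A 0 p.2) = voteProb X f 1 x * voteProb X f 0 x :=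
    prob_prod _ _
  have hsplit : prob (fun p : 𝕄 × 𝕄 => contract (X 0) p.1 = contract (X 0) p.2 ∧
        contract (X 0) p.2 = x ∧ vote X f p.1 ≠ vote X f p.2) =
      prob (fun p : 𝕄 × 𝕄 => A 0 p.1 ∧ A 1 p.2) + prob (fun p : 𝕄 × 𝕄 => A 1 p.1 ∧ A 0 p.2) := by
    refine (prob_congr fun p => ?_).trans (prob_or_of_disjoint fun p h h' => ?_)
    · simp only [A, hne]
      constructor
      · rintro ⟨h12, h2, ⟨h0, h1⟩ | ⟨h0, h1⟩⟩
        · exact Or.inl ⟨⟨h12.trans h2, h0⟩, h2, h1⟩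
        · exact Or.inr ⟨⟨h12.trans h2, h0⟩, h2, h1⟩
      · rintro (⟨⟨h1, h0⟩, h2, h1'⟩ | ⟨⟨h1, h0⟩, h2, h1'⟩)
        · exact ⟨h1.trans h2.symm, h2, Or.inl ⟨h0, h1'⟩⟩
        · exact ⟨h1.trans h2.symm, h2, Or.inr ⟨h0, h1'⟩⟩
    · exact absurd (h.1.2.symm.trans h'.1.2) (by decide)
  rw [prob_contract_contractSnd hX0 hX0
    fun p => contract (X 0) p.2 = x ∧ vote X f p.1 ≠ vote X f p.2, hsplit, e01, e10]
  ring

lemma prob_vote_ne_vote_le (hX : ∀ i, X i ≠ 0) (hXinj : Function.Injective X) (x : 𝕍) :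
    prob (fun R : Fin m → 𝕄 => contract (X 0) (contractSnd (X 0) R) = x ∧
        vote X f (contract (X 0) R) ≠ vote X f (contractSnd (X 0) R)) ≤
      2 * (ℓ - 1) * prob (fun M => testSum X f M = 1) * (Fintype.card 𝕍 : ℝ)⁻¹ := by
  set ρ := prob fun M => testSum X f M = 1
  set a := (Fintype.card 𝕍 : ℝ)⁻¹
  have hLI : ∀ j ∈ univ.erase (0 : Fin ℓ), LinearIndependent (ZMod 2) ![X j, X 0] := fun j hj =>
    linearIndependent_pair_of_ne (hX j) (hX 0) (hXinj.ne (ne_of_mem_erase hj))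
  calc _ ≤ prob (fun R => ∃ j ∈ univ.erase (0 : Fin ℓ),
          (testSum X f (contract (X j) R) = 1 ∧ contract (X 0) (contract (X 0) R) = x) ∨
          (testSum X f (contractSnd (X j) R) = 1 ∧ contract (X 0) (contractSnd (X 0) R) = x)) := by
        refine prob_mono fun R ⟨hx, hvote⟩ => ?_
        obtain ⟨j, hj, hT⟩ := exists_testSum_eq_one_of_vote_ne X f R hvote
        rw [contract_comm] at *
        exact ⟨j, hj, hT.imp (⟨·, hx⟩) (⟨·, hx⟩)⟩
    _ ≤ ∑ j ∈ univ.erase (0 : Fin ℓ), (ρ * a + ρ * a) := by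
        refine (prob_exists_le _ _).trans (sum_le_sum fun j hj => (prob_or_le _ _).trans ?_)
        have hrow := prob_contract_and_contract (hLI j hj) (fun M => testSum X f M = 1)
          fun M => contract (X 0) M = x
        have hcol := prob_contractSnd_and_contractSnd (hLI j hj) (fun M => testSum X f M = 1)
          fun M => contract (X 0) M = x
        rw [prob_contract_eq (hX 0)] at hrow hcol
        exact add_le_add hrow.le hcol.le
    _ = 2 * (ℓ - 1) * ρ * a := by
        rw [sum_const, card_erase_of_mem (mem_univ _), card_univ, Fintype.card_fin,
          nsmul_eq_mul, Nat.cast_pred (Nat.pos_of_neZero ℓ)]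
        ring

lemma min_voteProb_le (hX : ∀ i, X i ≠ 0) (hXinj : Function.Injective X) (x : 𝕍) :
    min (voteProb X f 0 x) (voteProb X f 1 x) ≤
      2 * (ℓ - 1) * prob (fun M => testSum X f M = 1) * (Fintype.card 𝕍 : ℝ)⁻¹ := by
  have hbound := prob_vote_ne_vote_le X f hX hXinj x
  have hdis := prob_vote_ne_vote_mul X f (hX 0) x
  have hsum := voteProb_zero_add_voteProb_one X f (hX 0) x
  have ha : (0 : ℝ) < (Fintype.card 𝕍 : ℝ)⁻¹ := inv_pos.mpr (Nat.cast_pos.mpr Fintype.card_pos)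
  have h0 : 0 ≤ voteProb X f 0 x := prob_nonneg _
  have h1 : 0 ≤ voteProb X f 1 x := prob_nonneg _
  rcases min_cases (voteProb X f 0 x) (voteProb X f 1 x) with ⟨hmin, hle⟩ | ⟨hmin, hle⟩ <;>
    rw [hmin] <;> nlinarith [mul_le_mul_of_nonneg_right hbound ha.le]

lemma prob_contractSnd_eq_and_vote_ne_le (hX : ∀ i, X i ≠ 0) (hXinj : Function.Injective X)
    (i : Fin ℓ) (M₀ : 𝕄) :
    prob (fun R : Fin m → 𝕄 => contractSnd (X 0) R = M₀ ∧
        vote X f (contract (X i) R) ≠ corrected X f (contract (X i) M₀)) ≤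
      2 * (ℓ - 1) * prob (fun M => testSum X f M = 1) * (Fintype.card 𝕄 : ℝ)⁻¹ := by
  set x := contract (X i) M₀
  set N := (Fintype.card 𝕍 : ℝ)
  have hN : 0 < N := Nat.cast_pos.mpr Fintype.card_pos
  have h : prob (fun R : Fin m → 𝕄 => contractSnd (X 0) R = M₀ ∧
        vote X f (contract (X i) R) ≠ corrected X f x) * N⁻¹ =
      min (voteProb X f 0 x) (voteProb X f 1 x) * (Fintype.card 𝕄 : ℝ)⁻¹ := by
    rw [prob_contract_contractSnd (hX i) (hX 0)
      fun p => p.2 = M₀ ∧ vote X f p.1 ≠ corrected X f x,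
      ← prob_vote_ne_corrected, ← prob_eq M₀, ← prob_prod]
    exact prob_congr fun p => ⟨fun ⟨h, h2, hv⟩ => ⟨⟨h.trans (congrArg _ h2), hv⟩, h2⟩,
      fun ⟨⟨h, hv⟩, h2⟩ => ⟨h.trans (congrArg (contract (X i)) h2).symm, h2, hv⟩⟩
  calc _ = _ * N⁻¹ * N := by field_simp
    _ = min (voteProb X f 0 x) (voteProb X f 1 x) * (Fintype.card 𝕄 : ℝ)⁻¹ * N := by rw [h]
    _ ≤ 2 * (ℓ - 1) * prob (fun M => testSum X f M = 1) * N⁻¹ * (Fintype.card 𝕄 : ℝ)⁻¹ * N := by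
        gcongr
        exact min_voteProb_le X f hX hXinj x
    _ = _ := by field_simp

lemma prob_contractSnd_eq_and_testSum_eq_one (hX : ∀ i, X i ≠ 0) (hXinj : Function.Injective X)
    {i : Fin ℓ} (hi : i ≠ 0) (M₀ : 𝕄) :
    prob (fun R : Fin m → 𝕄 => contractSnd (X 0) R = M₀ ∧ testSum X f (contractSnd (X i) R) = 1) =
      prob (fun M => testSum X f M = 1) * (Fintype.card 𝕄 : ℝ)⁻¹ := by
  have h := prob_contractSnd_and_contractSnd
    (linearIndependent_pair_of_ne (hX 0) (hX i) (hXinj.ne (Ne.symm hi)))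
    (· = M₀) fun M => testSum X f M = 1
  rw [prob_eq] at h
  exact h.trans (mul_comm _ _)

lemma testSum_corrected_eq_zero (hX : ∀ i, X i ≠ 0) (hXinj : Function.Injective X)
    (hρ : 2 * ℓ ^ 2 * prob (fun M => testSum X f M = 1) < 1) (M₀ : 𝕄) :
    testSum X (corrected X f) M₀ = 0 := by
  set ρ := prob fun M => testSum X f M = 1
  set d := (Fintype.card 𝕄 : ℝ)⁻¹
  have hd : 0 < d := inv_pos.mpr (Nat.cast_pos.mpr Fintype.card_pos)
  -- A tensor with column `M₀` avoiding every event `Q i` certifies `T_{X,g}(M₀) = 0`.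
  let Q : Fin ℓ → (Fin m → 𝕄) → Prop := fun i R =>
    vote X f (contract (X i) R) ≠ corrected X f (contract (X i) M₀) ∨
      (i ≠ 0 ∧ testSum X f (contractSnd (X i) R) = 1)
  have hcol : ∀ i, prob (fun R => contractSnd (X 0) R = M₀ ∧
      (i ≠ 0 ∧ testSum X f (contractSnd (X i) R) = 1)) ≤ ρ * d := by
    intro i
    by_cases hi : i = 0
    · simp only [hi, ne_eq, not_true_eq_false, false_and, and_false, prob_false]
      exact mul_nonneg (prob_nonneg _) hd.le
    · refine ((prob_congr fun R => ?_).trans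
        (prob_contractSnd_eq_and_testSum_eq_one X f hX hXinj hi M₀)).le
      simp only [hi, ne_eq, not_false_eq_true, true_and]
  have hsum : ∑ i, prob (fun R => contractSnd (X 0) R = M₀ ∧ Q i R) <
      prob fun R => contractSnd (X 0) R = M₀ := by
    calc ∑ i, prob (fun R => contractSnd (X 0) R = M₀ ∧ Q i R)
        ≤ ∑ _i : Fin ℓ, (2 * (ℓ - 1) * ρ * d + ρ * d) :=
          sum_le_sum fun i _ => (prob_mono fun R => and_or_left.mp).trans ((prob_or_le _ _).trans
            (add_le_add (prob_contractSnd_eq_and_vote_ne_le X f hX hXinj i M₀) (hcol i)))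
      _ < d := by
          rw [sum_const, card_univ, Fintype.card_fin, nsmul_eq_mul]
          have hρ0 : 0 ≤ ρ := prob_nonneg _
          nlinarith [mul_lt_mul_of_pos_right hρ hd,
            mul_nonneg (mul_nonneg (Nat.cast_nonneg ℓ : (0 : ℝ) ≤ ℓ) hρ0) hd.le]
      _ = _ := (prob_contractSnd_eq (hX 0) M₀).symm
  obtain ⟨R, -, hgood⟩ := exists_of_sum_prob_lt univ hsum
  have hmajority : ∀ i, corrected X f (contract (X i) M₀) = vote X f (contract (X i) R) :=
    fun i => not_not.mp fun h => hgood i (mem_univ i) (Or.inl (Ne.symm h))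
  calc testSum X (corrected X f) M₀ = ∑ i, vote X f (contract (X i) R) :=
        sum_congr rfl fun i _ => hmajority i
    _ = ∑ j ∈ univ.erase 0, testSum X f (contractSnd (X j) R) := sum_vote_contract X f R
    _ = 0 := sum_eq_zero fun j hj => (zmod_two_ne_one_iff _).mp fun h =>
        hgood j (mem_univ j) (Or.inr ⟨ne_of_mem_erase hj, h⟩)

lemma prob_corrected_ne_le (hX0 : X 0 ≠ 0) :
    prob (fun v => corrected X f v ≠ f v) ≤ 2 * prob (fun M => testSum X f M = 1) := by
  classical
  set N := (Fintype.card 𝕍 : ℝ)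
  set S : Finset 𝕍 := {v | corrected X f v ≠ f v}
  have hflip : ∀ a b c : ZMod 2, c ≠ b → (a + b = c ↔ a = 1) := by decide
  have hfiber : ∀ v ∈ S, N⁻¹ / 2 ≤ prob (fun M => contract (X 0) M = v ∧ testSum X f M = 1) := by
    intro v hv
    have hmax : prob (fun M => contract (X 0) M = v ∧ testSum X f M = 1) =
        max (voteProb X f 0 v) (voteProb X f 1 v) := by
      refine (prob_congr fun M => and_congr_right fun hM => ?_).trans
        (prob_vote_eq_corrected X f v)
      rw [vote, hM, hflip _ _ _ (mem_filter.mp hv).2]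
    have hsum := voteProb_zero_add_voteProb_one X f hX0 v
    rw [hmax]
    linarith [le_max_left (voteProb X f 0 v) (voteProb X f 1 v),
      le_max_right (voteProb X f 0 v) (voteProb X f 1 v)]
  calc prob (fun v => corrected X f v ≠ f v) = 2 * ∑ _v ∈ S, N⁻¹ / 2 := by
        rw [prob_eq_card_div, sum_const, nsmul_eq_mul]
        ring
    _ ≤ 2 * ∑ v ∈ S, prob (fun M => contract (X 0) M = v ∧ testSum X f M = 1) := by
        gcongr with v hv
        exact hfiber v hv
    _ ≤ 2 * prob (fun M => testSum X f M = 1) := by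
        gcongr
        exact sum_prob_le_of_pairwise_disjoint S _
          (fun v _ w _ hvw M h h' => hvw (h.1.symm.trans h'.1)) fun _ _ M h => h.2

end Pattern

lemma mul_div_two_le_of_correction_bounds {ℓ ε δ ρ : ℝ} (hℓ : 2 ≤ ℓ) (hεδ : ε ≤ δ)
    (hδ0 : 0 ≤ δ) (hδρ : δ ≤ 2 * ρ) (hρ : 2 * ℓ ^ 2 * ρ < 1)
    (hD : ℓ * δ ≤ ρ + ℓ * (ℓ - 1) * δ ^ 2) :
    ℓ * ε / 2 ≤ ρ := by
  have hpair : ℓ * (ℓ - 1) * δ ^ 2 ≤ δ := by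
    have : ℓ * (ℓ - 1) * δ ≤ 1 := by nlinarith
    nlinarith
  nlinarith

end LowDegreeTest

open LowDegreeTest

theorem stmt_8_general (d n ℓ m : ℕ) (hℓ : 3 ≤ ℓ)
    (ε : ℝ)
    (X : Matrix (Fin ℓ) (Fin m) (ZMod 2))
    (hrows : Function.Injective X) (hnonzero : ∀ i, X i ≠ 0)
    (hsound : IsMinimallySoundPattern n d X)
    (f : (Fin n → ZMod 2) → ZMod 2)
    (hfar : ∀ g ∈ PolyDeg n d,
      ε * 2 ^ n ≤ ((Finset.univ.filter (fun x => f x ≠ g x)).card : ℝ)) :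
    min (ℓ * ε / 2) (1 / (2 * ℓ ^ 2)) * 2 ^ (m * n) ≤
      ((Finset.univ.filter (fun M : Matrix (Fin m) (Fin n) (ZMod 2) =>
        patternSum X f M = 1)).card : ℝ) := by
  have : NeZero ℓ := ⟨by omega⟩
  rw [card_filter_patternSum_eq]
  refine mul_le_mul_of_nonneg_right ?_ (by positivity)
  set ρ := prob fun M => testSum X f M = 1
  by_cases hρ : 1 / (2 * ℓ ^ 2) ≤ ρ
  · exact (min_le_right _ _).trans hρ
  have hρ' : 2 * ℓ ^ 2 * ρ < 1 := by
    rw [not_le, lt_div_iff₀ (by positivity)] at hρ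
    linarith
  have hT := testSum_corrected_eq_zero X f hnonzero hrows hρ'
  have hδ : ε ≤ prob fun v => corrected X f v ≠ f v :=
    le_of_mul_le_mul_right ((hfar _ (mem_polyDeg_of_testSum_eq_zero X _ hsound hT)).trans_eq
      (prob_ne_mul_two_pow f _).symm) (by positivity)
  exact (min_le_left _ _).trans (mul_div_two_le_of_correction_bounds
    (by exact_mod_cast (by omega : 2 ≤ ℓ)) hδ (prob_nonneg _)
    (prob_corrected_ne_le X f (hnonzero 0)) hρ'
    (mul_prob_ne_le_of_testSum_eq_zero X f _ hnonzero hrows hT))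

theorem stmt_8 (d n ℓ m : ℕ) (hd : 1 ≤ d) (hn : 1 ≤ n) (hℓ : 3 ≤ ℓ) (hlm : m ≤ ℓ)
    (ε : ℝ) (hε : 0 < ε) (hε1 : ε ≤ 1)
    (X : Matrix (Fin ℓ) (Fin m) (ZMod 2))
    (hrows : Function.Injective X) (hnonzero : ∀ i, X i ≠ 0) (hrank : X.rank = m)
    (hcomplete : IsCompletePattern n d X) (hsound : IsMinimallySoundPattern n d X)
    (f : (Fin n → ZMod 2) → ZMod 2)
    (hfar : ∀ g ∈ PolyDeg n d,
      ε * 2 ^ n ≤ ((Finset.univ.filter (fun x => f x ≠ g x)).card : ℝ)) :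
    min (ℓ * ε / 2) (1 / (2 * ℓ ^ 2)) * 2 ^ (m * n) ≤
      ((Finset.univ.filter (fun M : Matrix (Fin m) (Fin n) (ZMod 2) =>
        patternSum X f M = 1)).card : ℝ) :=
  stmt_8_general d n ℓ m hℓ ε X hrows hnonzero hsound f hfar
end

section
/- Let d ≥ 1 and n ≥ 1 be integers, and let X ∈ F_2^{ℓ×m} be a testing pattern whose rows are pairwise distinct and nonzero and which is complete for P_d (for functions on F_2^n). Let f : F_2^n → F_2 and let ε = dist(f, P_d) be the exact relative distance from f to P_d. Then the number of matrices M ∈ F_2^{m×n} with T_{X,f}(M) = 1 is at least ℓ·ε·(1 − ℓ·ε) · 2^{mn}. Equivalently, for uniformly random M, the probability that T_{X,f}(M) = 1 is at least ℓε(1 − ℓε). -/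
open Finset Matrix

section PairwiseIndependentEvents

variable {Ω ι : Type*} [Fintype Ω] [Fintype ι] [DecidableEq Ω]

lemma two_mul_sub_sq_le_ite_odd (k : ℕ) : 2 * (k : ℝ) - k ^ 2 ≤ if Odd k then 1 else 0 := by
  rcases k with _ | _ | k
  · norm_num
  · norm_num
  · split_ifs <;> push_cast <;> nlinarith

lemma sum_card_filter_mem (E : ι → Finset Ω) :
    ∑ ω, (#{i | ω ∈ E i} : ℝ) = ∑ i, (#(E i) : ℝ) := by
  simp only [natCast_card_filter]
  rw [sum_comm]
  simp

lemma sum_card_filter_mem_sq (E : ι → Finset Ω) :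
    ∑ ω, (#{i | ω ∈ E i} : ℝ) ^ 2 = ∑ i, ∑ j, (#(E i ∩ E j) : ℝ) := by
  simp only [natCast_card_filter, sq, sum_mul_sum]
  rw [sum_comm]
  refine sum_congr rfl fun i _ => ?_
  rw [sum_comm]
  refine sum_congr rfl fun j _ => ?_
  simp only [← ite_and, sum_boole, mul_boole]
  congr 2
  ext
  simp [and_comm]

theorem le_card_filter_odd_of_pairwise_indep (E : ι → Finset Ω) (p : ℝ)
    (h₁ : ∀ i, (#(E i) : ℝ) = p * Fintype.card Ω)
    (h₂ : ∀ i j, i ≠ j → (#(E i ∩ E j) : ℝ) = p ^ 2 * Fintype.card Ω) :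
    Fintype.card ι * p * (1 - Fintype.card ι * p) * Fintype.card Ω ≤
      #{ω | Odd #{i | ω ∈ E i}} := by
  classical
  set Q := Fintype.card Ω
  have hpair : ∀ i j, (#(E i ∩ E j) : ℝ) = p ^ 2 * Q + if i = j then p * Q - p ^ 2 * Q else 0 := by
    intro i j
    split_ifs with hij
    · rw [hij, inter_self, h₁]; ring
    · rw [h₂ i j hij, add_zero]
  have hfirst := sum_card_filter_mem E
  have hsecond := sum_card_filter_mem_sq E
  simp only [h₁, hpair, sum_add_distrib, sum_ite_eq, mem_univ, if_true, sum_const, card_univ,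
    nsmul_eq_mul] at hfirst hsecond
  calc _ ≤ ∑ ω, (2 * (#{i | ω ∈ E i} : ℝ) - (#{i | ω ∈ E i} : ℝ) ^ 2) := by
        rw [sum_sub_distrib, ← mul_sum, hfirst, hsecond]
        nlinarith [mul_nonneg (Nat.cast_nonneg (Fintype.card ι) : (0:ℝ) ≤ _)
          (mul_nonneg (sq_nonneg p) (Nat.cast_nonneg Q : (0:ℝ) ≤ Q))]
    _ ≤ ∑ ω, (if Odd #{i | ω ∈ E i} then (1 : ℝ) else 0) :=
        sum_le_sum fun ω _ => two_mul_sub_sq_le_ite_odd _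
    _ = _ := by rw [sum_boole]

end PairwiseIndependentEvents

lemma AddMonoidHom.card_filter_mem_mul_card {V W : Type*} [AddGroup V] [Fintype V] [AddGroup W]
    [Fintype W] [DecidableEq W] (φ : V →+ W) (hφ : Function.Surjective φ) (T : Finset W) :
    #{v | φ v ∈ T} * Fintype.card W = #T * Fintype.card V := by
  have hfiber : ∀ w, #{v | φ v = w} = #{v | φ v = 0} := fun w =>
    AddMonoidHom.card_fiber_eq_of_mem_range φ (hφ w) (hφ 0)
  have hT : #{v | φ v ∈ T} = ∑ w ∈ T, #{v | φ v = w} :=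
    (sum_card_fiberwise_eq_card_filter _ _ _).symm
  have hV : Fintype.card V = ∑ w, #{v | φ v = w} :=
    card_eq_sum_card_fiberwise fun v _ => mem_univ (φ v)
  simp only [hfiber, sum_const, smul_eq_mul, card_univ] at hT hV
  rw [hT, hV]
  ring

section LinearAlgebra

variable {K k m n : Type*} [Field K] [Fintype k] [Fintype m]

lemma surjective_vecMul_of_linearIndependent (v : k → m → K) (hv : LinearIndependent K v) :
    Function.Surjective fun (M : Matrix m n K) a => v a ᵥ* M := by
  have hrange : LinearMap.range (Matrix.of v).mulVecLin = ⊤ := by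
    apply Submodule.eq_top_of_finrank_eq
    rw [Module.finrank_fintype_fun_eq_card]
    exact LinearIndependent.rank_matrix (M := Matrix.of v) hv
  intro Y
  have hcol : ∀ j, ∃ c : m → K, Matrix.of v *ᵥ c = fun a => Y a j := fun j =>
    LinearMap.range_eq_top.1 hrange _
  choose c hc using hcol
  refine ⟨Matrix.of fun i j => c j i, funext fun a => funext fun j => ?_⟩
  simpa [Matrix.vecMul, Matrix.mulVec, dotProduct, mul_comm] using congrFun (hc j) a

lemma card_filter_forall_vecMul_mem [Fintype K] [DecidableEq K] [Fintype n] [DecidableEq k]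
    [DecidableEq m] [DecidableEq n]
    (v : k → m → K) (hv : LinearIndependent K v) (S : Finset (n → K)) :
    (#{M : Matrix m n K | ∀ a, v a ᵥ* M ∈ S} : ℝ) =
      (#S / Fintype.card (n → K)) ^ Fintype.card k * Fintype.card (Matrix m n K) := by
  let φ : Matrix m n K →+ (k → n → K) :=
    AddMonoidHom.mk' (fun M a => v a ᵥ* M) fun M N => funext fun a => Matrix.vecMul_add _ _ _
  have h := φ.card_filter_mem_mul_card (surjective_vecMul_of_linearIndependent v hv)
    (Fintype.piFinset fun _ => S)
  simp only [Fintype.mem_piFinset, Fintype.card_piFinset, prod_const, card_univ, Fintype.card_fun,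
    AddMonoidHom.mk'_apply, φ] at h
  rw [div_pow, div_mul_eq_mul_div, eq_div_iff (by positivity), Fintype.card_fun]
  exact_mod_cast h

end LinearAlgebra

lemma linearIndependent_pair_zmod_two {V : Type*} [AddCommGroup V] [Module (ZMod 2) V] {x y : V}
    (hx : x ≠ 0) (hy : y ≠ 0) (hxy : x ≠ y) : LinearIndependent (ZMod 2) ![x, y] := by
  rw [LinearIndependent.pair_iff]
  have hyy : y + y = 0 := by rw [← two_nsmul]; exact ZModModule.char_nsmul_eq_zero 2 y
  have h01 : ∀ a : ZMod 2, a = 0 ∨ a = 1 := by decide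
  intro s t hst
  rcases h01 s with rfl | rfl <;> rcases h01 t with rfl | rfl
  · exact ⟨rfl, rfl⟩
  · exact absurd (by simpa using hst) hy
  · exact absurd (by simpa using hst) hx
  · rw [one_smul, one_smul] at hst
    exact absurd (by rw [← add_zero x, ← hyy, ← add_assoc, hst, zero_add]) hxy

lemma patternSum_eq_one_iff_odd {ℓ m n d : ℕ} {X : Matrix (Fin ℓ) (Fin m) (ZMod 2)}
    (hX : IsCompletePattern n d X) {f g : (Fin n → ZMod 2) → ZMod 2} (hg : g ∈ PolyDeg n d)
    (M : Matrix (Fin m) (Fin n) (ZMod 2)) :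
    patternSum X f M = 1 ↔ Odd #{i | f ((X * M) i) ≠ g ((X * M) i)} := by
  have hsum : patternSum X f M = ∑ i, (f ((X * M) i) + g ((X * M) i)) := by
    rw [sum_add_distrib, ← patternSum, ← patternSum, hX g hg M, add_zero]
  have hadd : ∀ a b : ZMod 2, a + b = if a ≠ b then 1 else 0 := by decide
  simp only [hsum, hadd, sum_boole, ZMod.natCast_eq_one_iff_odd]

theorem stmt_9_general (d n ℓ m : ℕ)
    (X : Matrix (Fin ℓ) (Fin m) (ZMod 2))
    (hrows : Function.Injective X) (hnonzero : ∀ i, X i ≠ 0)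
    (hcomplete : IsCompletePattern n d X)
    (f : (Fin n → ZMod 2) → ZMod 2) (ε : ℝ)
    (hdist : IsLeast {r : ℝ | ∃ g ∈ PolyDeg n d,
      r = ((Finset.univ.filter (fun x => f x ≠ g x)).card : ℝ) / 2 ^ n} ε) :
    ℓ * ε * (1 - ℓ * ε) * 2 ^ (m * n) ≤
      ((Finset.univ.filter (fun M : Matrix (Fin m) (Fin n) (ZMod 2) =>
        patternSum X f M = 1)).card : ℝ) := by
  obtain ⟨⟨g, hg, rfl⟩, -⟩ := hdist
  set S : Finset (Fin n → ZMod 2) := {x | f x ≠ g x}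
  let E : Fin ℓ → Finset (Matrix (Fin m) (Fin n) (ZMod 2)) := fun i => {M | X i ᵥ* M ∈ S}
  have hE : ∀ i, (#(E i) : ℝ) = #S / 2 ^ n * Fintype.card (Matrix (Fin m) (Fin n) (ZMod 2)) := by
    intro i
    have h := card_filter_forall_vecMul_mem ![X i] (linearIndependent_unique_iff.2 (hnonzero i)) S
    simpa using h
  have hEE : ∀ i j, i ≠ j → (#(E i ∩ E j) : ℝ) =
      (#S / 2 ^ n) ^ 2 * Fintype.card (Matrix (Fin m) (Fin n) (ZMod 2)) := by
    intro i j hij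
    have h := card_filter_forall_vecMul_mem ![X i, X j]
      (linearIndependent_pair_zmod_two (hnonzero i) (hnonzero j) (hrows.ne hij)) S
    simpa [Fin.forall_fin_two, filter_and, E] using h
  have hparity : ∀ M, patternSum X f M = 1 ↔ Odd #{i | M ∈ E i} := fun M => by
    rw [patternSum_eq_one_iff_odd hcomplete hg]
    simp only [E, S, mem_filter, mem_univ, true_and, mul_apply_eq_vecMul]
    congr!
  have hQ : Fintype.card (Matrix (Fin m) (Fin n) (ZMod 2)) = 2 ^ (m * n) := by
    rw [← Nat.card_eq_fintype_card]
    simp [Matrix, pow_mul']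
  simpa [filter_congr fun M _ => hparity M, hQ] using le_card_filter_odd_of_pairwise_indep E _ hE hEE

theorem stmt_9 (d n ℓ m : ℕ) (hd : 1 ≤ d) (hn : 1 ≤ n) (hlm : m ≤ ℓ)
    (X : Matrix (Fin ℓ) (Fin m) (ZMod 2))
    (hrows : Function.Injective X) (hnonzero : ∀ i, X i ≠ 0) (hrank : X.rank = m)
    (hcomplete : IsCompletePattern n d X)
    (f : (Fin n → ZMod 2) → ZMod 2) (ε : ℝ)
    (hdist : IsLeast {r : ℝ | ∃ g ∈ PolyDeg n d,
      r = ((Finset.univ.filter (fun x => f x ≠ g x)).card : ℝ) / 2 ^ n} ε) :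
    ℓ * ε * (1 - ℓ * ε) * 2 ^ (m * n) ≤
      ((Finset.univ.filter (fun M : Matrix (Fin m) (Fin n) (ZMod 2) =>
        patternSum X f M = 1)).card : ℝ) :=
  stmt_9_general d n ℓ m X hrows hnonzero hcomplete f ε hdist
end

section
/- Let ε ∈ (0, 1] and let n be an integer with εn ≥ 16. Let P be a local property of sequences f : [n] → ℝ, and let f : [n] → ℝ be ε-far from P. Set ℓ = ⌊log_2(εn/4)⌋, let w be the largest integer divisible by 2^ℓ with w ≤ n − εn/4, and let a be any integer with 1 ≤ a ≤ ⌈εn/4⌉. Let T = (T_0, …, T_ℓ) be the a-shifted (ℓ, w)-hierarchical partition of [n], and let U be the set of maximal witness intervals of f with respect to T and P. Then Σ_{i=0}^{ℓ} |T_i ∩ U| / |T_i| ≥ ε/8. -/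
open scoped Classical

/-- A sequence `f` (restricted to positions `1, …, n`) satisfies the local property
characterized by the family `F` of forbidden pairs. -/
def SatLocal (F : Set (ℝ × ℝ)) (n : ℕ) (f : ℕ → ℝ) : Prop :=
  ∀ i : ℕ, 1 ≤ i → i + 1 ≤ n → (f i, f (i + 1)) ∉ F

/-- The interval `[I.1 : I.2]` is a witness interval for `f` (with respect to the
local property characterized by `F`): every sequence agreeing with `f` at those
endpoints of the interval that are not `1` or `n` contains a forbidden consecutive
pair inside the interval. -/
def WitnessInterval (F : Set (ℝ × ℝ)) (n : ℕ) (f : ℕ → ℝ) (I : ℕ × ℕ) : Prop :=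
  ∀ f' : ℕ → ℝ, (1 < I.1 → f' I.1 = f I.1) → (I.2 < n → f' I.2 = f I.2) →
    ∃ i : ℕ, I.1 ≤ i ∧ i + 1 ≤ I.2 ∧ (f' i, f' (i + 1)) ∈ F

/-- Layer `T_i` of the `a`-shifted `(ℓ, w)`-hierarchical partition of `[n]`
(intervals are recorded as pairs of endpoints). -/
def Tlevel (a w n i : ℕ) : Finset (ℕ × ℕ) :=
  ((Finset.Icc 1 (w / 2 ^ i - 2)).image
      (fun j => (a + j * 2 ^ i, a + (j + 1) * 2 ^ i))) ∪
    {(1, a + 2 ^ i), (a + w - 2 ^ i, n)}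

/-- `J` is an ancestor of `I` in the hierarchical partition `(T_0, …, T_ℓ)`:
`I ∈ T_i`, `J ∈ T_j` for levels `i < j ≤ ℓ`, and `I ⊊ J` as intervals. -/
def IsAncestor (a w n ℓ : ℕ) (I J : ℕ × ℕ) : Prop :=
  ∃ i j : ℕ, i < j ∧ j ≤ ℓ ∧ I ∈ Tlevel a w n i ∧ J ∈ Tlevel a w n j ∧
    Set.Icc I.1 I.2 ⊂ Set.Icc J.1 J.2

/-- `I` is a maximal witness: it is a witness interval for `f`, and no ancestor of
`I` in the hierarchical partition is a witness interval. -/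
def MaximalWitness (F : Set (ℝ × ℝ)) (n : ℕ) (f : ℕ → ℝ) (a w ℓ : ℕ)
    (I : ℕ × ℕ) : Prop :=
  WitnessInterval F n f I ∧
    ∀ J : ℕ × ℕ, IsAncestor a w n ℓ I J → ¬ WitnessInterval F n f J

/-!
If some top-level interval is a witness, it has no ancestor, so it is a maximal witness and
level `ℓ` alone contributes `2^ℓ / w > ε / 8` to the sum. Otherwise `f` is repaired bottom-up
along the tree. A node that is not a witness and has no witness ancestor gets a repair agreeing
with `f` at its inner endpoints: the two repairs of its children glued at their common endpoint,
or, when a child is a witness, any completion of the node, which changes at most its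
`2^(i+1) - 1` interior points; that child is then a maximal witness, and twice its weight `2^i`
pays for the changes. Gluing the top-level repairs gives a sequence with the property that differs
from `f` in at most `n + 1 - w + 2 ∑ᵢ 2^i |Tᵢ ∩ U| = n + 1 - w + 2w ∑ᵢ |Tᵢ ∩ U| / |Tᵢ|` points,
and `n - w < εn/2`, so `ε`-farness forces the sum to be at least `ε/8`.
-/

section LocalRepair

variable {F : Set (ℝ × ℝ)} {n : ℕ} {f : ℕ → ℝ}

def IsRepair (F : Set (ℝ × ℝ)) (n : ℕ) (f g : ℕ → ℝ) (I : ℕ × ℕ) : Prop :=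
  (1 < I.1 → g I.1 = f I.1) ∧ (I.2 < n → g I.2 = f I.2) ∧
    ∀ p, I.1 ≤ p → p + 1 ≤ I.2 → (g p, g (p + 1)) ∉ F

-- Only the interior of `I` is counted: a repair agrees with `f` at the endpoints of `I`,
-- except possibly at `1` and `n`.
noncomputable def mismatches (f g : ℕ → ℝ) (I : ℕ × ℕ) : ℕ :=
  ((Finset.Ioo I.1 I.2).filter (fun p => g p ≠ f p)).card

lemma exists_isRepair_of_not_witnessInterval {I : ℕ × ℕ}
    (h : ¬ WitnessInterval F n f I) :
    ∃ g, IsRepair F n f g I ∧ mismatches f g I ≤ I.2 - I.1 - 1 := by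
  simp only [WitnessInterval, not_forall, not_exists, not_and] at h
  obtain ⟨g, hb, hc, hpairs⟩ := h
  refine ⟨g, ⟨hb, hc, hpairs⟩, ?_⟩
  exact (Finset.card_filter_le _ _).trans (Nat.card_Ioo _ _).le

lemma exists_isRepair_glue {I J : ℕ × ℕ} {g₁ g₂ : ℕ → ℝ}
    (h₁ : IsRepair F n f g₁ I) (h₂ : IsRepair F n f g₂ J) (hIJ : I.2 = J.1)
    (hI : I.1 ≤ I.2) (hJ : J.1 ≤ J.2) (hc : 1 < J.1) (hcn : J.1 < n) :
    ∃ g, IsRepair F n f g (I.1, J.2) ∧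
      mismatches f g (I.1, J.2) ≤ mismatches f g₁ I + mismatches f g₂ J := by
  obtain ⟨b, c⟩ := I
  obtain ⟨c', d⟩ := J
  obtain rfl : c = c' := hIJ
  dsimp only at hI hJ hc hcn ⊢
  have hg₁c : g₁ c = f c := h₁.2.1 hcn
  have hg₂c : g₂ c = f c := h₂.1 hc
  set g : ℕ → ℝ := fun p => if p < c then g₁ p else g₂ p
  refine ⟨g, ⟨fun hb => ?_, fun hd => ?_, fun p hbp hpd => ?_⟩, ?_⟩
  · by_cases hbc : b < c
    · simp only [g, if_pos hbc, h₁.1 hb]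
    · obtain rfl : b = c := by omega
      simp only [g, lt_irrefl, if_false, hg₂c]
  · simp only [g, if_neg (not_lt.2 hJ), h₂.2.1 hd]
  · rcases lt_trichotomy (p + 1) c with hp | hp | hp
    · simp only [g, if_pos hp, if_pos (Nat.lt_of_succ_lt hp)]
      exact h₁.2.2 p hbp hp.le
    · simp only [g, if_pos (show p < c by omega), if_neg (show ¬ p + 1 < c by omega)]
      rw [hp, hg₂c, ← hg₁c, ← hp]
      exact h₁.2.2 p hbp hp.le
    · simp only [g, if_neg (show ¬ p < c by omega), if_neg (show ¬ p + 1 < c by omega)]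
      exact h₂.2.2 p (by omega) hpd
  · unfold mismatches
    refine (Finset.card_le_card fun p hp => ?_).trans (Finset.card_union_le _ _)
    simp only [Finset.mem_filter, Finset.mem_Ioo, Finset.mem_union, g] at hp ⊢
    obtain ⟨⟨hbp, hpd⟩, hne⟩ := hp
    by_cases hpc : p < c
    · exact Or.inl ⟨⟨hbp, hpc⟩, by simpa [hpc] using hne⟩
    · rw [if_neg hpc] at hne
      have hpc' : p ≠ c := fun h => hne (h ▸ hg₂c)
      exact Or.inr ⟨⟨by omega, hpd⟩, hne⟩

lemma IsRepair.satLocal {g : ℕ → ℝ} (h : IsRepair F n f g (1, n)) : SatLocal F n g :=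
  h.2.2

lemma card_filter_ne_le_mismatches (g : ℕ → ℝ) :
    ((Finset.Icc 1 n).filter (fun x => g x ≠ f x)).card ≤ mismatches f g (1, n) + 2 := by
  unfold mismatches
  refine (Finset.card_le_card fun p hp => ?_).trans (Finset.card_union_le _ {1, n})
    |>.trans (add_le_add_right Finset.card_le_two _)
  simp only [Finset.mem_filter, Finset.mem_Icc, Finset.mem_Ioo, Finset.mem_union,
    Finset.mem_insert, Finset.mem_singleton] at hp ⊢
  by_cases hp1 : p = 1
  · exact Or.inr (Or.inl hp1)
  by_cases hpn : p = n
  · exact Or.inr (Or.inr hpn)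
  exact Or.inl ⟨⟨by omega, by omega⟩, hp.2⟩

end LocalRepair

section Grid

variable {a w n : ℕ}

-- The dyadic point `k ∈ [0, w]` of the partition is `a + k`, except that the two extreme points
-- are moved to `1` and `n`: the first and last interval of each level reach the ends of `[n]`.
def gridPt (a w n k : ℕ) : ℕ :=
  if k = 0 then 1 else if k = w then n else a + k

def Tnode (a w n i j : ℕ) : ℕ × ℕ :=
  (gridPt a w n (j * 2 ^ i), gridPt a w n ((j + 1) * 2 ^ i))

lemma gridPt_add_le (ha : 1 ≤ a) (haw : a + w ≤ n) {s t : ℕ} (hst : s ≤ t) (ht : t ≤ w) :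
    gridPt a w n s + t ≤ gridPt a w n t + s := by
  unfold gridPt
  split_ifs <;> omega

lemma gridPt_strictMonoOn (ha : 1 ≤ a) (haw : a + w ≤ n) :
    StrictMonoOn (gridPt a w n) (Set.Iic w) := fun s _ t ht hst => by
  have := gridPt_add_le ha haw hst.le ht
  omega

lemma one_lt_gridPt (ha : 1 ≤ a) (haw : a + w ≤ n) {k : ℕ} (hk : 0 < k) :
    1 < gridPt a w n k := by
  unfold gridPt
  split_ifs <;> omega

lemma gridPt_lt (ha : 1 ≤ a) (haw : a + w ≤ n) {k : ℕ} (hk : k < w) : gridPt a w n k < n := by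
  unfold gridPt
  split_ifs <;> omega

lemma gridPt_mul_pow {m i j : ℕ} (hw : w = m * 2 ^ i) :
    gridPt a w n (j * 2 ^ i) = if j = 0 then 1 else if j = m then n else a + j * 2 ^ i := by
  subst hw
  simp [gridPt, mul_left_inj' (pow_ne_zero i two_ne_zero)]

lemma Tlevel_eq_image {i : ℕ} (hdvd : 2 ^ i ∣ w) (h2 : 2 ≤ w / 2 ^ i) :
    Tlevel a w n i = (Finset.range (w / 2 ^ i)).image (Tnode a w n i) := by
  obtain ⟨m, rfl⟩ := hdvd
  have hw : 2 ^ i * m = m * 2 ^ i := mul_comm _ _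
  unfold Tlevel
  rw [Nat.mul_div_cancel_left _ (by positivity)] at h2 ⊢
  have hlast : a + 2 ^ i * m - 2 ^ i = a + (m - 1) * 2 ^ i := by
    rw [Nat.sub_mul, one_mul, hw]
    have : 2 ^ i ≤ m * 2 ^ i := Nat.le_mul_of_pos_left _ (by omega)
    omega
  ext ⟨x, y⟩
  simp only [Tnode, gridPt_mul_pow hw, Finset.mem_union, Finset.mem_image,
    Finset.mem_Icc, Finset.mem_range, Finset.mem_insert, Finset.mem_singleton, hlast]
  constructor
  · rintro (⟨j, ⟨hj1, hjm⟩, hxy⟩ | hxy | hxy)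
    · exact ⟨j, by omega, by
        simp [hxy, show j ≠ 0 by omega, show j ≠ m by omega, show j + 1 ≠ m by omega]⟩
    · exact ⟨0, by omega, by simp [if_neg (show 1 ≠ m by omega), hxy]⟩
    · exact ⟨m - 1, by omega, by
        simp [hxy, show m - 1 ≠ 0 by omega, show m - 1 ≠ m by omega, show m - 1 + 1 = m by omega,
          show m ≠ 0 by omega]⟩
  · rintro ⟨j, hjm, hxy⟩
    rw [← hxy]
    rcases Nat.eq_zero_or_pos j with rfl | hj0
    · exact Or.inr (Or.inl (by simp [if_neg (show 1 ≠ m by omega)]))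
    rcases (show j + 1 < m ∨ j + 1 = m by omega) with hjm' | hjm'
    · refine Or.inl ⟨j, ⟨hj0, by omega⟩, ?_⟩
      simp [show j ≠ 0 by omega, show j ≠ m by omega, show j + 1 ≠ m by omega]
    · refine Or.inr (Or.inr ?_)
      simp [show j ≠ 0 by omega, show j ≠ m by omega, hjm', show m - 1 = j by omega,
        show m ≠ 0 by omega]

lemma succ_mul_two_pow_le {i j : ℕ} (hj : j < w / 2 ^ i) : (j + 1) * 2 ^ i ≤ w :=
  (Nat.le_div_iff_mul_le (by positivity)).1 hj

lemma Tnode_fst_add_le (ha : 1 ≤ a) (haw : a + w ≤ n) {i j : ℕ} (hj : j < w / 2 ^ i) :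
    (Tnode a w n i j).1 + 2 ^ i ≤ (Tnode a w n i j).2 := by
  have := gridPt_add_le (n := n) ha haw (Nat.mul_le_mul_right _ (Nat.le_add_right j 1))
    (succ_mul_two_pow_le hj)
  have e : (j + 1) * 2 ^ i = j * 2 ^ i + 2 ^ i := by ring
  simp only [Tnode]
  omega

lemma Tnode_injective (ha : 1 ≤ a) (haw : a + w ≤ n) {i i' j j' : ℕ} (hj : j < w / 2 ^ i)
    (hj' : j' < w / 2 ^ i') (h : Tnode a w n i j = Tnode a w n i' j') : i = i' ∧ j = j' := by
  have hmono := gridPt_strictMonoOn (n := n) ha haw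
  have hle := succ_mul_two_pow_le hj
  have hle' := succ_mul_two_pow_le hj'
  have hL : j * 2 ^ i = j' * 2 ^ i' :=
    hmono.injOn (Set.mem_Iic.2 (by nlinarith)) (Set.mem_Iic.2 (by nlinarith))
      (congrArg Prod.fst h)
  have hR : (j + 1) * 2 ^ i = (j' + 1) * 2 ^ i' :=
    hmono.injOn (Set.mem_Iic.2 hle) (Set.mem_Iic.2 hle') (congrArg Prod.snd h)
  have hpow : 2 ^ i = 2 ^ i' := by linarith
  obtain rfl : i = i' := Nat.pow_right_injective le_rfl hpow
  exact ⟨rfl, Nat.eq_of_mul_eq_mul_right (by positivity) hL⟩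

lemma eq_div_of_Icc_subset (ha : 1 ≤ a) (haw : a + w ≤ n) {i d j k : ℕ}
    (hj : j < w / 2 ^ i) (hk : k < w / 2 ^ (i + d))
    (h : Set.Icc (Tnode a w n i j).1 (Tnode a w n i j).2 ⊆
      Set.Icc (Tnode a w n (i + d) k).1 (Tnode a w n (i + d) k).2) :
    k = j / 2 ^ d := by
  have hmono := gridPt_strictMonoOn (n := n) ha haw
  have hle := succ_mul_two_pow_le hj
  have hle' := succ_mul_two_pow_le hk
  rw [Set.Icc_subset_Icc_iff (le_of_add_le_left (Tnode_fst_add_le ha haw hj))] at h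
  have hL : k * 2 ^ (i + d) ≤ j * 2 ^ i :=
    (hmono.le_iff_le (Set.mem_Iic.2 (by nlinarith)) (Set.mem_Iic.2 (by nlinarith))).1 h.1
  have hR : (j + 1) * 2 ^ i ≤ (k + 1) * 2 ^ (i + d) :=
    (hmono.le_iff_le (Set.mem_Iic.2 hle) (Set.mem_Iic.2 hle')).1 h.2
  rw [pow_add] at hL hR
  have hL' : k * 2 ^ d ≤ j :=
    Nat.le_of_mul_le_mul_left (c := 2 ^ i) (by linarith) (by positivity)
  have hR' : j + 1 ≤ (k + 1) * 2 ^ d :=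
    Nat.le_of_mul_le_mul_left (c := 2 ^ i) (by linarith) (by positivity)
  exact (Nat.div_eq_of_lt_le hL' hR').symm

end Grid

-- `Tnode (i + d) (j / 2 ^ d)` is the ancestor of `Tnode i j` at level `i + d`.
def NoWitnessAncestor (F : Set (ℝ × ℝ)) (n : ℕ) (f : ℕ → ℝ) (a w ℓ i j : ℕ) : Prop :=
  ∀ d, 0 < d → i + d ≤ ℓ → ¬ WitnessInterval F n f (Tnode a w n (i + d) (j / 2 ^ d))

structure Admissible (a w n ℓ : ℕ) : Prop where
  one_le : 1 ≤ a
  add_le : a + w ≤ n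
  pow_dvd : 2 ^ ℓ ∣ w
  two_le_div : 2 ≤ w / 2 ^ ℓ

namespace Admissible

variable {F : Set (ℝ × ℝ)} {f : ℕ → ℝ} {a w n ℓ i : ℕ}

lemma pow_dvd_of_le (h : Admissible a w n ℓ) (hi : i ≤ ℓ) : 2 ^ i ∣ w :=
  (pow_dvd_pow 2 hi).trans h.pow_dvd

lemma two_le_div_of_le (h : Admissible a w n ℓ) (hi : i ≤ ℓ) : 2 ≤ w / 2 ^ i :=
  h.two_le_div.trans (Nat.div_le_div_left (pow_le_pow_right₀ one_le_two hi) (by positivity))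

lemma div_mul_pow_sub (h : Admissible a w n ℓ) (hi : i ≤ ℓ) :
    w / 2 ^ ℓ * 2 ^ (ℓ - i) = w / 2 ^ i := by
  obtain ⟨m, hm⟩ := h.pow_dvd
  have hpow : 2 ^ ℓ = 2 ^ i * 2 ^ (ℓ - i) := by rw [← pow_add, Nat.add_sub_cancel' hi]
  rw [hm, Nat.mul_div_cancel_left _ (by positivity), hpow, mul_assoc,
    Nat.mul_div_cancel_left _ (by positivity), mul_comm]

lemma div_pow_eq_two_mul (h : Admissible a w n ℓ) (hi : i < ℓ) :
    w / 2 ^ i = 2 * (w / 2 ^ (i + 1)) := by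
  rw [← h.div_mul_pow_sub hi.le, ← h.div_mul_pow_sub hi, show ℓ - i = ℓ - (i + 1) + 1 by omega,
    pow_succ]
  ring

lemma mem_Tlevel (h : Admissible a w n ℓ) (hi : i ≤ ℓ) {p : ℕ × ℕ} :
    p ∈ Tlevel a w n i ↔ ∃ j < w / 2 ^ i, Tnode a w n i j = p := by
  simp [Tlevel_eq_image (h.pow_dvd_of_le hi) (h.two_le_div_of_le hi)]

lemma card_filter_Tlevel (h : Admissible a w n ℓ) (hi : i ≤ ℓ) (P : ℕ × ℕ → Prop) :
    ((Tlevel a w n i).filter P).card =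
      ((Finset.range (w / 2 ^ i)).filter (fun j => P (Tnode a w n i j))).card := by
  rw [Tlevel_eq_image (h.pow_dvd_of_le hi) (h.two_le_div_of_le hi), Finset.filter_image,
    Finset.card_image_of_injOn]
  intro j hj j' hj' hjj'
  simp only [Finset.coe_filter, Finset.mem_range, Set.mem_ofPred_eq] at hj hj'
  exact (Tnode_injective h.one_le h.add_le hj.1 hj'.1 hjj').2

lemma card_Tlevel (h : Admissible a w n ℓ) (hi : i ≤ ℓ) :
    (Tlevel a w n i).card = w / 2 ^ i := by
  simpa using h.card_filter_Tlevel hi (fun _ => True)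

lemma sum_card_filter_div_card (h : Admissible a w n ℓ) (P : ℕ × ℕ → Prop) :
    ∑ i ∈ Finset.range (ℓ + 1), (((Tlevel a w n i).filter P).card : ℝ) / (Tlevel a w n i).card =
      ((∑ i ∈ Finset.range (ℓ + 1), 2 ^ i * ((Tlevel a w n i).filter P).card : ℕ) : ℝ) / w := by
  push_cast
  rw [Finset.sum_div]
  refine Finset.sum_congr rfl fun i hi => ?_
  have hi : i ≤ ℓ := Nat.lt_succ_iff.1 (Finset.mem_range.1 hi)
  have hw : (w : ℝ) ≠ 0 := by
    have := h.two_le_div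
    exact Nat.cast_ne_zero.2 (by rintro rfl; simp at this)
  rw [h.card_Tlevel hi, Nat.cast_div (h.pow_dvd_of_le hi) (by positivity)]
  push_cast
  field_simp

lemma maximalWitness_Tnode (h : Admissible a w n ℓ) {j : ℕ} (hj : j < w / 2 ^ i)
    (hW : WitnessInterval F n f (Tnode a w n i j)) (hanc : NoWitnessAncestor F n f a w ℓ i j) :
    MaximalWitness F n f a w ℓ (Tnode a w n i j) := by
  refine ⟨hW, ?_⟩
  rintro J ⟨i₀, i₁, hlt, hi₁, hI, hJ, hsub⟩
  obtain ⟨j₀, hj₀, hI⟩ := (h.mem_Tlevel (hlt.le.trans hi₁)).1 hI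
  obtain ⟨k, hk, rfl⟩ := (h.mem_Tlevel hi₁).1 hJ
  obtain ⟨rfl, rfl⟩ := Tnode_injective h.one_le h.add_le hj₀ hj hI
  obtain ⟨d, rfl⟩ := Nat.exists_eq_add_of_le hlt.le
  rw [eq_div_of_Icc_subset h.one_le h.add_le hj hk hsub.subset]
  exact hanc d (by omega) hi₁

end Admissible

lemma NoWitnessAncestor.of_parent {F : Set (ℝ × ℝ)} {n : ℕ} {f : ℕ → ℝ} {a w ℓ i c : ℕ}
    (hW : ¬ WitnessInterval F n f (Tnode a w n (i + 1) (c / 2)))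
    (hanc : NoWitnessAncestor F n f a w ℓ (i + 1) (c / 2)) :
    NoWitnessAncestor F n f a w ℓ i c := by
  rintro (_ | _ | d) hd hid
  · omega
  · simpa using hW
  · have := hanc (d + 1) (by omega) (by omega)
    rwa [Nat.div_div_eq_div_mul, ← pow_succ', show i + 1 + (d + 1) = i + (d + 1 + 1) by omega]
      at this

lemma Tnode_succ (a w n i j : ℕ) :
    Tnode a w n (i + 1) j = ((Tnode a w n i (2 * j)).1, (Tnode a w n i (2 * j + 1)).2) := by
  simp only [Tnode, pow_succ]
  ring_nf

lemma Tnode_two_mul_snd (a w n i j : ℕ) :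
    (Tnode a w n i (2 * j)).2 = (Tnode a w n i (2 * j + 1)).1 := rfl

lemma Finset.sum_range_sum_Ico_mul {M : Type*} [AddCommMonoid M] (g : ℕ → M) (m d : ℕ) :
    ∑ j ∈ Finset.range m, ∑ k ∈ Finset.Ico (j * d) ((j + 1) * d), g k =
      ∑ k ∈ Finset.range (m * d), g k := by
  induction m with
  | zero => simp
  | succ m ih =>
    rw [Finset.sum_range_succ, ih, Finset.sum_range_add_sum_Ico _ (by nlinarith)]

section Mass

variable (F : Set (ℝ × ℝ)) (n : ℕ) (f : ℕ → ℝ) (a w ℓ : ℕ)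

noncomputable def witnessWeight (i k : ℕ) : ℕ :=
  if MaximalWitness F n f a w ℓ (Tnode a w n i k) then 2 ^ i else 0

-- The descendants at level `i'` of the node `(i, j)` are the nodes `k` with
-- `j 2^(i-i') ≤ k < (j+1) 2^(i-i')`.
noncomputable def subtreeMass (i j : ℕ) : ℕ :=
  ∑ i' ∈ Finset.range i, ∑ k ∈ Finset.Ico (j * 2 ^ (i - i')) ((j + 1) * 2 ^ (i - i')),
    witnessWeight F n f a w ℓ i' k

lemma subtreeMass_succ (i j : ℕ) :
    subtreeMass F n f a w ℓ (i + 1) j =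
      subtreeMass F n f a w ℓ i (2 * j) + subtreeMass F n f a w ℓ i (2 * j + 1) +
        ∑ k ∈ Finset.Ico (2 * j) (2 * j + 2), witnessWeight F n f a w ℓ i k := by
  unfold subtreeMass
  rw [Finset.sum_range_succ, Nat.add_sub_cancel_left, pow_one, ← Finset.sum_add_distrib]
  congr 1
  · refine Finset.sum_congr rfl fun i' hi' => ?_
    have hi' : i + 1 - i' = i - i' + 1 := by simp at hi'; omega
    rw [hi', Finset.sum_Ico_consecutive _ (by gcongr; omega) (by gcongr; omega), pow_succ]
    ring_nf
  · ring_nf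

variable {F n f a w ℓ}

lemma pow_le_subtreeMass {i c : ℕ} (h : Admissible a w n ℓ)
    (hc : c < w / 2 ^ i) (hW : WitnessInterval F n f (Tnode a w n i c))
    (hanc : NoWitnessAncestor F n f a w ℓ i c) :
    2 ^ i ≤ subtreeMass F n f a w ℓ (i + 1) (c / 2) := by
  have hweight : witnessWeight F n f a w ℓ i c = 2 ^ i :=
    if_pos (h.maximalWitness_Tnode hc hW hanc)
  rw [subtreeMass_succ, ← hweight]
  exact le_add_left (Finset.single_le_sum (fun _ _ => Nat.zero_le _)
    (Finset.mem_Ico.2 ⟨by omega, by omega⟩))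

lemma sum_subtreeMass (h : Admissible a w n ℓ) :
    ∑ j ∈ Finset.range (w / 2 ^ ℓ), subtreeMass F n f a w ℓ ℓ j =
      ∑ i ∈ Finset.range ℓ,
        2 ^ i * ((Tlevel a w n i).filter (MaximalWitness F n f a w ℓ)).card := by
  unfold subtreeMass
  rw [Finset.sum_comm]
  refine Finset.sum_congr rfl fun i hi => ?_
  have hi : i ≤ ℓ := (Finset.mem_range.1 hi).le
  rw [Finset.sum_range_sum_Ico_mul, h.div_mul_pow_sub hi, h.card_filter_Tlevel hi]
  simp only [witnessWeight, Finset.sum_ite, Finset.sum_const_zero, add_zero,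
    Finset.sum_const, smul_eq_mul, mul_comm]

end Mass

section HierarchicalRepair

variable {F : Set (ℝ × ℝ)} {n : ℕ} {f : ℕ → ℝ} {a w ℓ : ℕ}

lemma exists_isRepair_Tnode (h : Admissible a w n ℓ) {i j : ℕ} (hi : i ≤ ℓ)
    (hj : j < w / 2 ^ i) (hW : ¬ WitnessInterval F n f (Tnode a w n i j))
    (hanc : NoWitnessAncestor F n f a w ℓ i j) :
    ∃ g, IsRepair F n f g (Tnode a w n i j) ∧ mismatches f g (Tnode a w n i j) ≤
      (Tnode a w n i j).2 - (Tnode a w n i j).1 - 2 ^ i + 2 * subtreeMass F n f a w ℓ i j := by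
  induction i generalizing j with
  | zero =>
    obtain ⟨g, hg, hmis⟩ := exists_isRepair_of_not_witnessInterval hW
    exact ⟨g, hg, by simp only [pow_zero]; omega⟩
  | succ i ih =>
    have hm := h.div_pow_eq_two_mul hi
    have hlen := Tnode_fst_add_le h.one_le h.add_le hj
    rw [pow_succ] at hlen ⊢
    have hanc' : ∀ c, c / 2 = j → NoWitnessAncestor F n f a w ℓ i c := by
      rintro c rfl
      exact NoWitnessAncestor.of_parent hW hanc
    by_cases hchild : ∃ c, c / 2 = j ∧ WitnessInterval F n f (Tnode a w n i c)
    -- A witness child is a maximal witness of weight `2^i`, which pays for the at most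
    -- `2^(i+1) - 1` interior changes of an arbitrary repair of the node.
    · obtain ⟨c, rfl, hc⟩ := hchild
      obtain ⟨g, hg, hmis⟩ := exists_isRepair_of_not_witnessInterval hW
      have := pow_le_subtreeMass h (by omega) hc (hanc' c rfl)
      exact ⟨g, hg, by omega⟩
    push Not at hchild
    obtain ⟨g₁, hg₁, hmis₁⟩ :=
      ih (by omega) (j := 2 * j) (by omega) (hchild _ (by omega)) (hanc' _ (by omega))
    obtain ⟨g₂, hg₂, hmis₂⟩ :=
      ih (by omega) (j := 2 * j + 1) (by omega) (hchild _ (by omega)) (hanc' _ (by omega))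
    have hlen₁ := Tnode_fst_add_le (n := n) h.one_le h.add_le (i := i) (j := 2 * j) (by omega)
    have hlen₂ := Tnode_fst_add_le (n := n) h.one_le h.add_le (i := i) (j := 2 * j + 1)
      (by omega)
    have hmid : (2 * j + 1) * 2 ^ i < w :=
      (Nat.mul_lt_mul_of_pos_right (Nat.lt_succ_self _) (by positivity)).trans_le
        (succ_mul_two_pow_le (show 2 * j + 1 < w / 2 ^ i by omega))
    have hmass := subtreeMass_succ F n f a w ℓ i j
    have hsnd := Tnode_two_mul_snd a w n i j
    rw [Tnode_succ] at hlen ⊢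
    dsimp only at hlen ⊢
    obtain ⟨g, hg, hmis⟩ := exists_isRepair_glue hg₁ hg₂ hsnd (by omega) (by omega)
      (one_lt_gridPt h.one_le h.add_le (by positivity)) (gridPt_lt h.one_le h.add_le hmid)
    exact ⟨g, hg, by omega⟩

lemma exists_isRepair_prefix (h : Admissible a w n ℓ)
    (htop : ∀ j < w / 2 ^ ℓ, ¬ WitnessInterval F n f (Tnode a w n ℓ j))
    {k : ℕ} (hk : 1 ≤ k) (hkm : k ≤ w / 2 ^ ℓ) :
    ∃ g, IsRepair F n f g (1, gridPt a w n (k * 2 ^ ℓ)) ∧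
      mismatches f g (1, gridPt a w n (k * 2 ^ ℓ)) + k * 2 ^ ℓ + 1 ≤
        gridPt a w n (k * 2 ^ ℓ) + 2 * ∑ j ∈ Finset.range k, subtreeMass F n f a w ℓ ℓ j := by
  have hnode : ∀ j < w / 2 ^ ℓ, ∃ g, IsRepair F n f g (Tnode a w n ℓ j) ∧
      mismatches f g (Tnode a w n ℓ j) + 2 ^ ℓ + gridPt a w n (j * 2 ^ ℓ) ≤
        gridPt a w n ((j + 1) * 2 ^ ℓ) + 2 * subtreeMass F n f a w ℓ ℓ j := by
    intro j hj
    obtain ⟨g, hg, hmis⟩ :=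
      exists_isRepair_Tnode h le_rfl hj (htop j hj) (fun d hd hdℓ => by omega)
    have hlen := Tnode_fst_add_le h.one_le h.add_le hj
    exact ⟨g, hg, by simp only [Tnode] at hmis hlen ⊢; omega⟩
  induction k, hk using Nat.le_induction with
  | base =>
    obtain ⟨g, hg, hmis⟩ := hnode 0 (by omega)
    simp only [Tnode, zero_mul, zero_add, gridPt, if_true] at hg hmis ⊢
    exact ⟨g, hg, by simp only [Finset.sum_range_one]; omega⟩
  | succ k hk ih =>
    obtain ⟨g₁, hg₁, hmis₁⟩ := ih (by omega)
    obtain ⟨g₂, hg₂, hmis₂⟩ := hnode k (by omega)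
    have hkw : k * 2 ^ ℓ < w :=
      (Nat.mul_lt_mul_of_pos_right (Nat.lt_succ_self _) (by positivity)).trans_le
        (succ_mul_two_pow_le (show k < w / 2 ^ ℓ by omega))
    have hpos : 0 < k * 2 ^ ℓ := by positivity
    have hmid := one_lt_gridPt (n := n) h.one_le h.add_le hpos
    have hlen := Tnode_fst_add_le h.one_le h.add_le (show k < w / 2 ^ ℓ by omega)
    obtain ⟨g, hg, hmis⟩ := exists_isRepair_glue hg₁ hg₂ rfl hmid.le (le_of_add_le_left hlen)
      hmid (gridPt_lt h.one_le h.add_le hkw)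
    refine ⟨g, hg, ?_⟩
    simp only [Tnode] at hmis hmis₂ hlen
    have hsucc : (k + 1) * 2 ^ ℓ = k * 2 ^ ℓ + 2 ^ ℓ := by ring
    rw [Finset.sum_range_succ]
    omega

lemma exists_satLocal_of_no_top_witness (h : Admissible a w n ℓ)
    (htop : ∀ j < w / 2 ^ ℓ, ¬ WitnessInterval F n f (Tnode a w n ℓ j)) :
    ∃ g, SatLocal F n g ∧
      ((Finset.Icc 1 n).filter (fun x => g x ≠ f x)).card + w ≤
        n + 1 + 2 * ∑ i ∈ Finset.range ℓ,
          2 ^ i * ((Tlevel a w n i).filter (MaximalWitness F n f a w ℓ)).card := by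
  have hm := h.two_le_div
  obtain ⟨g, hg, hmis⟩ := exists_isRepair_prefix h htop (k := w / 2 ^ ℓ) (by omega) le_rfl
  have hw : w / 2 ^ ℓ * 2 ^ ℓ = w := Nat.div_mul_cancel h.pow_dvd
  have hn : gridPt a w n w = n := by
    simp [gridPt, show w ≠ 0 by rintro rfl; simp at hm]
  rw [hw, hn, sum_subtreeMass h] at hmis
  rw [hw, hn] at hg
  exact ⟨g, hg.satLocal, by have := card_filter_ne_le_mismatches (n := n) (f := f) g; omega⟩

end HierarchicalRepair

namespace Admissible

variable {F : Set (ℝ × ℝ)} {n : ℕ} {f : ℕ → ℝ} {a w ℓ : ℕ}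

lemma pow_le_or_exists_satLocal (h : Admissible a w n ℓ) :
    2 ^ ℓ ≤ ∑ i ∈ Finset.range (ℓ + 1),
        2 ^ i * ((Tlevel a w n i).filter (MaximalWitness F n f a w ℓ)).card ∨
      ∃ g, SatLocal F n g ∧ ((Finset.Icc 1 n).filter (fun x => g x ≠ f x)).card + w ≤
        n + 1 + 2 * ∑ i ∈ Finset.range (ℓ + 1),
          2 ^ i * ((Tlevel a w n i).filter (MaximalWitness F n f a w ℓ)).card := by
  rw [Finset.sum_range_succ]
  by_cases htop : ∃ j < w / 2 ^ ℓ, WitnessInterval F n f (Tnode a w n ℓ j)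
  · obtain ⟨j, hj, hW⟩ := htop
    have hmax := h.maximalWitness_Tnode hj hW (fun d hd hdℓ => by omega)
    have hpos : 0 < ((Tlevel a w n ℓ).filter (MaximalWitness F n f a w ℓ)).card :=
      Finset.card_pos.2 ⟨_, Finset.mem_filter.2 ⟨(h.mem_Tlevel le_rfl).2 ⟨j, hj, rfl⟩, hmax⟩⟩
    exact Or.inl (le_add_left (Nat.le_mul_of_pos_right _ hpos))
  · push Not at htop
    obtain ⟨g, hg, hcard⟩ := exists_satLocal_of_no_top_witness h htop
    exact Or.inr ⟨g, hg, by omega⟩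

end Admissible

lemma two_pow_floor_logb_le {x : ℝ} (hx : 1 ≤ x) :
    (2 : ℝ) ^ ⌊Real.logb 2 x⌋₊ ≤ x ∧ x < 2 * 2 ^ ⌊Real.logb 2 x⌋₊ := by
  have hx0 : 0 < x := zero_lt_one.trans_le hx
  constructor
  · rw [← Real.rpow_natCast, ← Real.le_logb_iff_rpow_le one_lt_two hx0]
    exact Nat.floor_le (Real.logb_nonneg one_lt_two hx)
  · have := (Real.logb_lt_iff_lt_rpow one_lt_two hx0).1 (Nat.lt_floor_add_one (Real.logb 2 x))
    rwa [Real.rpow_add two_pos, Real.rpow_natCast, Real.rpow_one, mul_comm] at this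

lemma lt_add_of_forall_dvd_le {x : ℝ} {P w : ℕ} (hx : 0 ≤ x) (hP : 0 < P)
    (hmax : ∀ w' : ℕ, w' % P = 0 → (w' : ℝ) ≤ x → w' ≤ w) : x < w + P := by
  have hq := hmax (⌊x⌋₊ / P * P) (Nat.mul_mod_left _ _)
    ((Nat.cast_le.2 (Nat.div_mul_le_self _ _)).trans (Nat.floor_le hx))
  have hfloor : ⌊x⌋₊ + 1 ≤ w + P := by
    have := Nat.lt_div_mul_add (a := ⌊x⌋₊) hP
    omega
  calc x < ⌊x⌋₊ + 1 := Nat.lt_floor_add_one x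
    _ ≤ w + P := by exact_mod_cast hfloor

theorem stmt_11_general (ε : ℝ) (n : ℕ) (hε1 : ε ≤ 1) (hn : 16 ≤ ε * n)
    (F : Set (ℝ × ℝ)) (f : ℕ → ℝ)
    (hfar : ∀ f' : ℕ → ℝ, SatLocal F n f' →
      ε * n ≤ (((Finset.Icc 1 n).filter (fun x => f' x ≠ f x)).card : ℝ))
    (ℓ : ℕ) (hℓ : ℓ = ⌊Real.logb 2 (ε * n / 4)⌋₊)
    (w : ℕ) (hwdvd : w % 2 ^ ℓ = 0) (hwle : (w : ℝ) ≤ n - ε * n / 4)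
    (hwmax : ∀ w' : ℕ, w' % 2 ^ ℓ = 0 → (w' : ℝ) ≤ n - ε * n / 4 → w' ≤ w)
    (a : ℕ) (ha : 1 ≤ a) (ha2 : a ≤ ⌈ε * n / 4⌉₊) :
    ε / 8 ≤ ∑ i ∈ Finset.range (ℓ + 1),
      (((Tlevel a w n i).filter (MaximalWitness F n f a w ℓ)).card : ℝ) /
        ((Tlevel a w n i).card : ℝ) := by
  have hεn : ε * n ≤ n := by nlinarith
  obtain ⟨hpow_le, hpow_gt⟩ := two_pow_floor_logb_le (x := ε * n / 4) (by linarith)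
  rw [← hℓ] at hpow_le hpow_gt
  have hw_gt : (n : ℝ) - ε * n / 4 < w + 2 ^ ℓ := by
    exact_mod_cast lt_add_of_forall_dvd_le (by linarith) (by positivity) hwmax
  have haw : a + w ≤ n := by
    have : (a : ℝ) < ε * n / 4 + 1 :=
      (Nat.cast_le.2 ha2).trans_lt (Nat.ceil_lt_add_one (by linarith))
    have : ((a + w : ℕ) : ℝ) < n + 1 := by push_cast; linarith
    exact Nat.lt_succ_iff.1 (by exact_mod_cast this)
  have hdiv : 2 ≤ w / 2 ^ ℓ := by
    refine (Nat.le_div_iff_mul_le (by positivity)).2 (le_of_lt ?_)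
    exact_mod_cast (show (2 * 2 ^ ℓ : ℝ) < w by linarith)
  have hA : Admissible a w n ℓ := ⟨ha, haw, Nat.dvd_of_mod_eq_zero hwdvd, hdiv⟩
  have hwpos : (0 : ℝ) < w := by linarith
  rw [hA.sum_card_filter_div_card, le_div_iff₀ hwpos]
  rcases hA.pow_le_or_exists_satLocal (F := F) (f := f) with hT | ⟨g, hg, hcard⟩
  · have hT := (Nat.cast_le (α := ℝ)).2 hT
    push_cast at hT ⊢
    nlinarith
  · have hfar := hfar g hg
    have hcard := (Nat.cast_le (α := ℝ)).2 hcard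
    push_cast at hcard ⊢
    nlinarith

theorem stmt_11 (ε : ℝ) (n : ℕ) (hε : 0 < ε) (hε1 : ε ≤ 1) (hn : 16 ≤ ε * n)
    (F : Set (ℝ × ℝ)) (f : ℕ → ℝ)
    (hfar : ∀ f' : ℕ → ℝ, SatLocal F n f' →
      ε * n ≤ (((Finset.Icc 1 n).filter (fun x => f' x ≠ f x)).card : ℝ))
    (ℓ : ℕ) (hℓ : ℓ = ⌊Real.logb 2 (ε * n / 4)⌋₊)
    (w : ℕ) (hwdvd : w % 2 ^ ℓ = 0) (hwle : (w : ℝ) ≤ n - ε * n / 4)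
    (hwmax : ∀ w' : ℕ, w' % 2 ^ ℓ = 0 → (w' : ℝ) ≤ n - ε * n / 4 → w' ≤ w)
    (a : ℕ) (ha : 1 ≤ a) (ha2 : a ≤ ⌈ε * n / 4⌉₊) :
    ε / 8 ≤ ∑ i ∈ Finset.range (ℓ + 1),
      (((Tlevel a w n i).filter (MaximalWitness F n f a w ℓ)).card : ℝ) /
        ((Tlevel a w n i).card : ℝ) :=
  stmt_11_general ε n hε1 hn F f hfar ℓ hℓ w hwdvd hwle hwmax a ha ha2
end

section
/- Let ε ∈ (0, 1] and let n be an integer with εn ≥ 16. Let P be a local property of sequences f : [n] → ℝ, and let f : [n] → ℝ. Set ℓ = ⌊log_2(εn/4)⌋, let w be the largest integer divisible by 2^ℓ with w ≤ n − εn/4, let a be any integer with 1 ≤ a ≤ ⌈εn/4⌉, let T = (T_0, …, T_ℓ) be the a-shifted (ℓ, w)-hierarchical partition of [n], and let U be the set of maximal witness intervals of f with respect to T and P. Suppose T_ℓ ∩ U = ∅, so every I ∈ U has a parent P(I) in T. Define S = (∪_{I ∈ U} Int(P(I))) ∪ [1:a] ∪ [a+w : n], where for an interval J = [b:c] the interior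 Int(J) is J with the elements of {b, c} \ {1, n} removed. Then there exists f' ∈ P such that f'(x) = f(x) for all x ∈ [n] \ S. -/
open scoped Classical

/-- `J` is the parent of `I`: for some level `i < ℓ`, `I ∈ T_i`, `J ∈ T_{i+1}`,
and `I ⊊ J` as intervals. -/
def IsParent (a w n ℓ : ℕ) (I J : ℕ × ℕ) : Prop :=
  ∃ i : ℕ, i < ℓ ∧ I ∈ Tlevel a w n i ∧ J ∈ Tlevel a w n (i + 1) ∧
    Set.Icc I.1 I.2 ⊂ Set.Icc J.1 J.2

/-- The interior of an interval `J = [b:c]`: `J` with the elements of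
`{b, c} \ {1, n}` removed. -/
def interiorSet (n : ℕ) (J : ℕ × ℕ) : Set ℕ :=
  Set.Icc J.1 J.2 \ (({J.1, J.2} : Set ℕ) \ ({1, n} : Set ℕ))

/-- The set `S = (⋃_{I ∈ U} Int(P(I))) ∪ [1:a] ∪ [a+w:n]`, where `U` is the set of
maximal witness intervals of `f` (w.r.t. the hierarchical partition) and `P(I)` is
the parent of `I`. -/
def badSet (F : Set (ℝ × ℝ)) (n : ℕ) (f : ℕ → ℝ) (a w ℓ : ℕ) : Set ℕ :=
  {x | ∃ I J : ℕ × ℕ, (∃ i ≤ ℓ, I ∈ Tlevel a w n i) ∧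
      MaximalWitness F n f a w ℓ I ∧ IsParent a w n ℓ I J ∧ x ∈ interiorSet n J} ∪
    Set.Icc 1 a ∪ Set.Icc (a + w) n

/-!
Every forbidden pair of `f` lies in an interval of level `0`. Unless this is one of the two end
intervals `[1 : a+1]`, `[a+w-1 : n]`, it is a witness, so it lies in a maximal witness `I`; by
assumption `I` is not on the top level, so it has a parent `P(I)`, which is no witness. Since
the levels refine each other, the parents together with the two end intervals form a laminar
family, and a member that were a witness would lie strictly inside some `P(I)`: the
inclusion-maximal members are no witnesses. On each of them replace `f` by a sequence without
forbidden pairs keeping the values of `f` at the endpoints other than `1` and `n`. Distinct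
maximal members share at most such an endpoint, so the replacements glue to an `f'` with the
property that differs from `f` only inside the interiors of members, which all lie in `S`.
-/

namespace LocalRepair

variable {F : Set (ℝ × ℝ)} {n : ℕ} {f : ℕ → ℝ}

lemma Icc_ssubset_Icc_iff {b c b' c' : ℕ} (h : b ≤ c) :
    Set.Icc b c ⊂ Set.Icc b' c' ↔ b' ≤ b ∧ c ≤ c' ∧ (b' < b ∨ c < c') := by
  rw [Set.ssubset_iff_subset_ne, Set.Icc_subset_Icc_iff h, Ne, Set.Icc_eq_Icc_iff h]
  omega

lemma add_le_of_dvd_of_lt {p d e : ℕ} (hd : p ∣ d) (he : p ∣ e) (h : d < e) : d + p ≤ e := by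
  have := Nat.le_of_dvd (Nat.sub_pos_of_lt h) (Nat.dvd_sub he hd)
  omega

def FillsInterval (F : Set (ℝ × ℝ)) (n : ℕ) (f g : ℕ → ℝ) (S : ℕ × ℕ) : Prop :=
  (1 < S.1 → g S.1 = f S.1) ∧ (S.2 < n → g S.2 = f S.2) ∧
    ∀ i, S.1 ≤ i → i + 1 ≤ S.2 → (g i, g (i + 1)) ∉ F

lemma exists_fillsInterval_of_not_witnessInterval {S : ℕ × ℕ}
    (h : ¬ WitnessInterval F n f S) : ∃ g, FillsInterval F n f g S := by
  unfold WitnessInterval at h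
  push Not at h
  exact h

lemma FillsInterval.apply_eq {g : ℕ → ℝ} {S : ℕ × ℕ} (hg : FillsInterval F n f g S) {x : ℕ}
    (hx : (x = S.1 ∧ 1 < x) ∨ (x = S.2 ∧ x < n)) : g x = f x := by
  rcases hx with ⟨rfl, h⟩ | ⟨rfl, h⟩
  exacts [hg.1 h, hg.2.1 h]

lemma witnessInterval_pair {i : ℕ} (hi : 1 < i) (hin : i + 1 < n)
    (hF : (f i, f (i + 1)) ∈ F) : WitnessInterval F n f (i, i + 1) :=
  fun g hgi hgi1 => ⟨i, le_rfl, le_rfl, by rw [hgi hi, hgi1 hin]; exact hF⟩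

lemma eq_endpoint_of_not_mem_interiorSet {J : ℕ × ℕ} {x : ℕ} (hx : J.1 ≤ x ∧ x ≤ J.2)
    (hxJ : x ∉ interiorSet n J) : (x = J.1 ∨ x = J.2) ∧ x ≠ 1 ∧ x ≠ n := by
  simpa [interiorSet, hx] using hxJ

def IntervalLaminar (E : Set (ℕ × ℕ)) : Prop :=
  ∀ I ∈ E, ∀ J ∈ E, (J.1 ≤ I.1 ∧ I.2 ≤ J.2) ∨ (I.1 ≤ J.1 ∧ J.2 ≤ I.2) ∨ I.2 ≤ J.1 ∨ J.2 ≤ I.1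

def IsMaximalInterval (E : Set (ℕ × ℕ)) (S : ℕ × ℕ) : Prop :=
  S ∈ E ∧ ∀ K ∈ E, K.1 ≤ S.1 → S.2 ≤ K.2 → K = S

lemma exists_isMaximalInterval_ge {E : Set (ℕ × ℕ)} (hE : E.Finite) {J : ℕ × ℕ} (hJ : J ∈ E)
    (hJ12 : J.1 ≤ J.2) : ∃ S, IsMaximalInterval E S ∧ S.1 ≤ J.1 ∧ J.2 ≤ S.2 := by
  obtain ⟨S, ⟨hSE, hS1, hS2⟩, hSmax⟩ :=
    (hE.subset fun _ hK => hK.1).exists_maximalFor (fun K => K.2 - K.1)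
      {K ∈ E | K.1 ≤ J.1 ∧ J.2 ≤ K.2} ⟨J, hJ, le_rfl, le_rfl⟩
  refine ⟨S, ⟨hSE, fun K hK h1 h2 => ?_⟩, hS1, hS2⟩
  have : K.2 - K.1 ≤ S.2 - S.1 := hSmax (j := K) ⟨hK, h1.trans hS1, hS2.trans h2⟩
    (show S.2 - S.1 ≤ K.2 - K.1 by omega)
  exact Prod.ext (by omega) (by omega)

lemma IsMaximalInterval.eq_endpoint {E : Set (ℕ × ℕ)} (hlam : IntervalLaminar E)
    {S S' : ℕ × ℕ} (hS : IsMaximalInterval E S) (hS' : IsMaximalInterval E S') (hne : S ≠ S')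
    {x : ℕ} (hx : S.1 ≤ x ∧ x ≤ S.2) (hx' : S'.1 ≤ x ∧ x ≤ S'.2) :
    (x = S.2 ∧ x = S'.1) ∨ (x = S.1 ∧ x = S'.2) := by
  rcases hlam S hS.1 S' hS'.1 with h | h | h | h
  · exact absurd (hS.2 S' hS'.1 h.1 h.2).symm hne
  · exact absurd (hS'.2 S hS.1 h.1 h.2) hne
  · omega
  · omega

noncomputable def patch (E : Set (ℕ × ℕ)) (g : ℕ × ℕ → ℕ → ℝ) (f : ℕ → ℝ) (x : ℕ) : ℝ :=
  if h : ∃ S, IsMaximalInterval E S ∧ S.1 ≤ x ∧ x ≤ S.2 then g h.choose x else f x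

section Patch

variable {E : Set (ℕ × ℕ)} {g : ℕ × ℕ → ℕ → ℝ}

lemma patch_eq_of_mem (hbd : ∀ J ∈ E, 1 ≤ J.1 ∧ J.1 < J.2 ∧ J.2 ≤ n)
    (hlam : IntervalLaminar E) (hg : ∀ S, IsMaximalInterval E S → FillsInterval F n f (g S) S)
    {S : ℕ × ℕ} (hS : IsMaximalInterval E S) {x : ℕ} (hx : S.1 ≤ x ∧ x ≤ S.2) :
    patch E g f x = g S x := by
  have h : ∃ S, IsMaximalInterval E S ∧ S.1 ≤ x ∧ x ≤ S.2 := ⟨S, hS, hx⟩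
  rw [patch, dif_pos h]
  obtain ⟨hS', hx'⟩ := h.choose_spec
  by_cases hne : h.choose = S
  · rw [hne]
  have hb := hbd S hS.1
  have hb' := hbd _ hS'.1
  -- the two maximal members only share the point `x`, where both replacements equal `f`
  rw [(hg _ hS').apply_eq (x := x) ?_, (hg S hS).apply_eq (x := x) ?_] <;>
    rcases hS'.eq_endpoint hlam hS hne hx' hx with h | h <;> omega

lemma patch_eq_self (hbd : ∀ J ∈ E, 1 ≤ J.1 ∧ J.1 < J.2 ∧ J.2 ≤ n)
    (hlam : IntervalLaminar E) (hg : ∀ S, IsMaximalInterval E S → FillsInterval F n f (g S) S)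
    {x : ℕ} (hx : ∀ S, IsMaximalInterval E S → S.1 ≤ x → x ≤ S.2 →
      (x = S.1 ∧ 1 < x) ∨ (x = S.2 ∧ x < n)) :
    patch E g f x = f x := by
  by_cases h : ∃ S, IsMaximalInterval E S ∧ S.1 ≤ x ∧ x ≤ S.2
  · obtain ⟨S, hS, hx1, hx2⟩ := h
    rw [patch_eq_of_mem hbd hlam hg hS ⟨hx1, hx2⟩]
    exact (hg S hS).apply_eq (hx S hS hx1 hx2)
  · rw [patch, dif_neg h]

lemma satLocal_patch (hE : E.Finite) (hbd : ∀ J ∈ E, 1 ≤ J.1 ∧ J.1 < J.2 ∧ J.2 ≤ n)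
    (hlam : IntervalLaminar E) (hg : ∀ S, IsMaximalInterval E S → FillsInterval F n f (g S) S)
    (hcover : ∀ i, 1 ≤ i → i + 1 ≤ n → (f i, f (i + 1)) ∈ F →
      ∃ J ∈ E, J.1 ≤ i ∧ i + 1 ≤ J.2) :
    SatLocal F n (patch E g f) := by
  intro i hi hin
  by_cases hc : ∃ S, IsMaximalInterval E S ∧ S.1 ≤ i ∧ i + 1 ≤ S.2
  · obtain ⟨S, hS, h1, h2⟩ := hc
    rw [patch_eq_of_mem hbd hlam hg hS ⟨h1, by omega⟩,
      patch_eq_of_mem hbd hlam hg hS ⟨by omega, h2⟩]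
    exact (hg S hS).2.2 i h1 h2
  have hfi : patch E g f i = f i := patch_eq_self hbd hlam hg fun S hS h1 h2 => by
    have : ¬ i + 1 ≤ S.2 := fun h => hc ⟨S, hS, h1, h⟩
    omega
  have hfi1 : patch E g f (i + 1) = f (i + 1) := patch_eq_self hbd hlam hg fun S hS h1 h2 => by
    have : ¬ S.1 ≤ i := fun h => hc ⟨S, hS, h, h2⟩
    omega
  rw [hfi, hfi1]
  intro hF
  obtain ⟨J, hJ, hJ1, hJ2⟩ := hcover i hi hin hF
  obtain ⟨S, hS, hS1, hS2⟩ := exists_isMaximalInterval_ge hE hJ (by omega)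
  exact hc ⟨S, hS, hS1.trans hJ1, hJ2.trans hS2⟩

end Patch

theorem exists_satLocal_eq_of_not_mem_interiorSet {E : Set (ℕ × ℕ)} (hE : E.Finite)
    (hbd : ∀ J ∈ E, 1 ≤ J.1 ∧ J.1 < J.2 ∧ J.2 ≤ n) (hlam : IntervalLaminar E)
    (hmax : ∀ S, IsMaximalInterval E S → ¬ WitnessInterval F n f S)
    (hcover : ∀ i, 1 ≤ i → i + 1 ≤ n → (f i, f (i + 1)) ∈ F →
      ∃ J ∈ E, J.1 ≤ i ∧ i + 1 ≤ J.2) :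
    ∃ f' : ℕ → ℝ, SatLocal F n f' ∧ ∀ x, (∀ J ∈ E, x ∉ interiorSet n J) → f' x = f x := by
  choose! g hg using fun S hS => exists_fillsInterval_of_not_witnessInterval (hmax S hS)
  refine ⟨patch E g f, satLocal_patch hE hbd hlam hg hcover, fun x hx => ?_⟩
  refine patch_eq_self hbd hlam hg fun S hS h1 h2 => ?_
  have := eq_endpoint_of_not_mem_interiorSet ⟨h1, h2⟩ (hx S hS.1)
  have := hbd S hS.1
  omega

section Hierarchy

variable {a w i : ℕ}

structure ValidHierarchy (a w n ℓ : ℕ) : Prop where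
  one_le : 1 ≤ a
  add_le : a + w ≤ n
  dvd : 2 ^ ℓ ∣ w
  two_mul_le : 2 * 2 ^ ℓ ≤ w

lemma ValidHierarchy.mono {ℓ : ℕ} (h : ValidHierarchy a w n ℓ) (hi : i ≤ ℓ) :
    ValidHierarchy a w n i where
  one_le := h.one_le
  add_le := h.add_le
  dvd := (pow_dvd_pow 2 hi).trans h.dvd
  two_mul_le := le_trans (Nat.mul_le_mul_left 2 (Nat.pow_le_pow_right two_pos hi)) h.two_mul_le

lemma mem_Tlevel_iff (hd : 2 ^ i ∣ w) {I : ℕ × ℕ} :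
    I ∈ Tlevel a w n i ↔
      (∃ d, 2 ^ i ∣ d ∧ 2 ^ i ≤ d ∧ d + 2 * 2 ^ i ≤ w ∧ I = (a + d, a + d + 2 ^ i)) ∨
        I = (1, a + 2 ^ i) ∨ I = (a + w - 2 ^ i, n) := by
  have hp : 0 < 2 ^ i := by positivity
  have hw : w / 2 ^ i * 2 ^ i = w := Nat.div_mul_cancel hd
  simp only [Tlevel, Finset.mem_union, Finset.mem_image, Finset.mem_Icc, Finset.mem_insert,
    Finset.mem_singleton]
  refine or_congr ⟨?_, ?_⟩ Iff.rfl
  · rintro ⟨j, ⟨hj1, hj2⟩, rfl⟩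
    have : (j + 2) * 2 ^ i ≤ w / 2 ^ i * 2 ^ i := Nat.mul_le_mul_right _ (by omega)
    refine ⟨j * 2 ^ i, dvd_mul_left _ _, Nat.le_mul_of_pos_left _ hj1, by linarith,
      Prod.ext rfl (by dsimp only; ring)⟩
  · rintro ⟨d, ⟨j, rfl⟩, h1, h2, rfl⟩
    have hj : 1 ≤ j := Nat.pos_of_ne_zero (by rintro rfl; simp at h1)
    have : j + 2 ≤ w / 2 ^ i := (Nat.le_div_iff_mul_le hp).2 (by linarith)
    refine ⟨j, ⟨hj, by omega⟩, ?_⟩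
    ext <;> simp only <;> ring

def IsBreakpoint (a w n i x : ℕ) : Prop :=
  x = 1 ∨ x = n ∨ ∃ d, 2 ^ i ∣ d ∧ 0 < d ∧ d < w ∧ x = a + d

lemma IsBreakpoint.of_le {m x : ℕ} (him : i ≤ m) (h : IsBreakpoint a w n m x) :
    IsBreakpoint a w n i x := by
  rcases h with h | h | ⟨d, hd, h⟩
  exacts [Or.inl h, Or.inr (Or.inl h), Or.inr (Or.inr ⟨d, (pow_dvd_pow 2 him).trans hd, h⟩)]

variable {I : ℕ × ℕ}

lemma bounds_of_mem_Tlevel (hT : ValidHierarchy a w n i) (hI : I ∈ Tlevel a w n i) :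
    1 ≤ I.1 ∧ I.1 < I.2 ∧ I.2 ≤ n := by
  have hp : 0 < 2 ^ i := by positivity
  have := hT.one_le
  have := hT.add_le
  have := hT.two_mul_le
  rcases (mem_Tlevel_iff hT.dvd).1 hI with ⟨d, -, -, hdw, rfl⟩ | rfl | rfl <;> dsimp only <;> omega

lemma isBreakpoint_of_mem_Tlevel (hT : ValidHierarchy a w n i) (hI : I ∈ Tlevel a w n i) :
    IsBreakpoint a w n i I.1 ∧ IsBreakpoint a w n i I.2 := by
  have hp : 0 < 2 ^ i := by positivity
  have := hT.two_mul_le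
  rcases (mem_Tlevel_iff hT.dvd).1 hI with ⟨d, hdd, hd1, hdw, rfl⟩ | rfl | rfl
  · exact ⟨Or.inr (Or.inr ⟨d, hdd, by omega, by omega, rfl⟩),
      Or.inr (Or.inr ⟨d + 2 ^ i, dvd_add hdd dvd_rfl, by omega, by omega, by ring⟩)⟩
  · exact ⟨Or.inl rfl, Or.inr (Or.inr ⟨2 ^ i, dvd_rfl, hp, by omega, rfl⟩)⟩
  · exact ⟨Or.inr (Or.inr ⟨w - 2 ^ i, Nat.dvd_sub hT.dvd dvd_rfl, by omega, by omega, by omega⟩),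
      Or.inr (Or.inl rfl)⟩

lemma IsBreakpoint.not_mem_Ioo (hT : ValidHierarchy a w n i) (hI : I ∈ Tlevel a w n i) {x : ℕ}
    (hx : IsBreakpoint a w n i x) : ¬ (I.1 < x ∧ x < I.2) := by
  rintro ⟨h1, h2⟩
  have := bounds_of_mem_Tlevel hT hI
  have := hT.two_mul_le
  rcases hx with rfl | rfl | ⟨e, he, he0, hew, rfl⟩
  · omega
  · omega
  rcases (mem_Tlevel_iff hT.dvd).1 hI with ⟨d, hdd, -, -, rfl⟩ | rfl | rfl <;>
    dsimp only at h1 h2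
  · have := add_le_of_dvd_of_lt hdd he (by omega)
    omega
  · have := Nat.le_of_dvd he0 he
    omega
  · have := add_le_of_dvd_of_lt (Nat.dvd_sub hT.dvd dvd_rfl) he (by omega)
    omega

/-- Breakpoints of a coarser level are breakpoints of a finer one, and no interval contains a
breakpoint of its own level in its interior. -/
lemma laminar_of_le {m : ℕ} {J : ℕ × ℕ} (him : i ≤ m) (hT : ValidHierarchy a w n m)
    (hI : I ∈ Tlevel a w n i) (hJ : J ∈ Tlevel a w n m) :
    (J.1 ≤ I.1 ∧ I.2 ≤ J.2) ∨ I.2 ≤ J.1 ∨ J.2 ≤ I.1 := by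
  obtain ⟨hJ1, hJ2⟩ := isBreakpoint_of_mem_Tlevel hT hJ
  have h1 := (hJ1.of_le him).not_mem_Ioo (hT.mono him) hI
  have h2 := (hJ2.of_le him).not_mem_Ioo (hT.mono him) hI
  have := bounds_of_mem_Tlevel (hT.mono him) hI
  have := bounds_of_mem_Tlevel hT hJ
  omega

lemma exists_parent (hT : ValidHierarchy a w n (i + 1)) (hI : I ∈ Tlevel a w n i) :
    ∃ J ∈ Tlevel a w n (i + 1), Set.Icc I.1 I.2 ⊂ Set.Icc J.1 J.2 := by
  have hTi := hT.mono i.le_succ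
  have hp : 0 < 2 ^ i := by positivity
  have h2 : 2 ^ (i + 1) = 2 * 2 ^ i := pow_succ' 2 i
  have := hT.one_le
  have := hT.add_le
  have := hT.two_mul_le
  have hb := bounds_of_mem_Tlevel hTi hI
  suffices ∃ J ∈ Tlevel a w n (i + 1), J.1 ≤ I.1 ∧ I.2 ≤ J.2 ∧ (J.1 < I.1 ∨ I.2 < J.2) by
    simpa only [Icc_ssubset_Icc_iff hb.2.1.le] using this
  simp only [mem_Tlevel_iff hT.dvd]
  rcases (mem_Tlevel_iff hTi.dvd).1 hI with ⟨d, hdd, hd1, hdw, rfl⟩ | rfl | rfl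
  · -- the parent starts at `d` rounded down to a multiple of `2 ^ (i + 1)`
    set D := d / 2 ^ (i + 1) * 2 ^ (i + 1)
    have hDd : D ≤ d := Nat.div_mul_le_self d _
    have hdD : d < D + 2 ^ (i + 1) := Nat.lt_div_mul_add (by positivity)
    have hD : 2 ^ (i + 1) ∣ D := dvd_mul_left _ _
    have hiD : 2 ^ i ∣ D + 2 ^ (i + 1) :=
      dvd_add ((pow_dvd_pow 2 i.le_succ).trans hD) (pow_dvd_pow 2 i.le_succ)
    have := add_le_of_dvd_of_lt hdd hiD hdD
    by_cases hD0 : D = 0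
    · exact ⟨_, Or.inr (Or.inl rfl), by dsimp only; omega⟩
    by_cases hDw : D + 2 * 2 ^ (i + 1) ≤ w
    · exact ⟨_, Or.inl ⟨D, hD, Nat.le_of_dvd (by omega) hD, hDw, rfl⟩, by dsimp only; omega⟩
    have hwD : w ≤ D + 2 ^ (i + 1) := by
      by_contra h
      have := add_le_of_dvd_of_lt (hD.add dvd_rfl) hT.dvd (by omega)
      omega
    exact ⟨_, Or.inr (Or.inr rfl), by dsimp only; omega⟩
  · exact ⟨_, Or.inr (Or.inl rfl), by dsimp only; omega⟩
  · exact ⟨_, Or.inr (Or.inr rfl), by dsimp only; omega⟩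

end Hierarchy

variable {a w ℓ : ℕ}

def MemHierarchy (a w n ℓ : ℕ) (I : ℕ × ℕ) : Prop :=
  ∃ i ≤ ℓ, I ∈ Tlevel a w n i

lemma finite_setOf_memHierarchy : {I | MemHierarchy a w n ℓ I}.Finite :=
  ((Set.finite_Iic ℓ).biUnion fun i _ => (Tlevel a w n i).finite_toSet).subset
    fun _ ⟨_, hi, hI⟩ => Set.mem_biUnion hi hI

lemma MemHierarchy.bounds (hT : ValidHierarchy a w n ℓ) {I : ℕ × ℕ}
    (hI : MemHierarchy a w n ℓ I) : 1 ≤ I.1 ∧ I.1 < I.2 ∧ I.2 ≤ n :=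
  let ⟨_, hi, hIi⟩ := hI
  bounds_of_mem_Tlevel (hT.mono hi) hIi

lemma intervalLaminar_of_subset (hT : ValidHierarchy a w n ℓ) {E : Set (ℕ × ℕ)}
    (hE : E ⊆ {I | MemHierarchy a w n ℓ I}) : IntervalLaminar E := by
  intro I hI J hJ
  obtain ⟨i, hi, hIi⟩ := hE hI
  obtain ⟨m, hm, hJm⟩ := hE hJ
  rcases le_total i m with him | hmi
  · have := laminar_of_le him (hT.mono hm) hIi hJm
    omega
  · have := laminar_of_le hmi (hT.mono hi) hJm hIi
    omega

lemma exists_maximalWitness_ge (hT : ValidHierarchy a w n ℓ)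
    (hnomax : ∀ I ∈ Tlevel a w n ℓ, ¬ MaximalWitness F n f a w ℓ I) {W : ℕ × ℕ}
    (hW : MemHierarchy a w n ℓ W) (hwit : WitnessInterval F n f W) :
    ∃ I, (∃ i < ℓ, I ∈ Tlevel a w n i) ∧ MaximalWitness F n f a w ℓ I ∧
      I.1 ≤ W.1 ∧ W.2 ≤ I.2 := by
  -- a longest witness of the hierarchy containing `W` has no witness ancestor
  obtain ⟨I, ⟨hI, hIwit, hI1, hI2⟩, hImax⟩ :=
    (finite_setOf_memHierarchy.subset fun _ h => h.1).exists_maximalFor (fun I => I.2 - I.1)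
      {I | MemHierarchy a w n ℓ I ∧ WitnessInterval F n f I ∧ I.1 ≤ W.1 ∧ W.2 ≤ I.2}
      ⟨W, hW, hwit, le_rfl, le_rfl⟩
  have hmw : MaximalWitness F n f a w ℓ I := by
    refine ⟨hIwit, fun J ⟨_, j, _, hj, _, hJ, hIJ⟩ hJwit => ?_⟩
    rw [Icc_ssubset_Icc_iff (hI.bounds hT).2.1.le] at hIJ
    have : J.2 - J.1 ≤ I.2 - I.1 := hImax (j := J) ⟨⟨j, hj, hJ⟩, hJwit, by omega, by omega⟩
      (show I.2 - I.1 ≤ J.2 - J.1 by omega)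
    have := hI.bounds hT
    omega
  obtain ⟨i, hi, hIi⟩ := hI
  exact ⟨I, ⟨i, lt_of_le_of_ne hi fun h => hnomax I (h ▸ hIi) hmw, hIi⟩, hmw, hI1, hI2⟩

def repairIntervals (F : Set (ℝ × ℝ)) (n : ℕ) (f : ℕ → ℝ) (a w ℓ : ℕ) : Set (ℕ × ℕ) :=
  {J | ∃ I, (∃ i ≤ ℓ, I ∈ Tlevel a w n i) ∧ MaximalWitness F n f a w ℓ I ∧
    IsParent a w n ℓ I J} ∪ {(1, a + 1), (a + w - 1, n)}

lemma repairIntervals_subset (hT : ValidHierarchy a w n ℓ) :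
    repairIntervals F n f a w ℓ ⊆ {I | MemHierarchy a w n ℓ I} := by
  rintro J (⟨I, -, -, i, hi, -, hJ, -⟩ | hJ)
  · exact ⟨i + 1, hi, hJ⟩
  · exact ⟨0, Nat.zero_le _, (mem_Tlevel_iff (hT.mono (Nat.zero_le _)).dvd).2
      (Or.inr (by simpa using hJ))⟩

lemma exists_mem_repairIntervals_Icc_ssubset (hT : ValidHierarchy a w n ℓ)
    (hnomax : ∀ I ∈ Tlevel a w n ℓ, ¬ MaximalWitness F n f a w ℓ I) {W : ℕ × ℕ}
    (hW : MemHierarchy a w n ℓ W) (hwit : WitnessInterval F n f W) :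
    ∃ J ∈ repairIntervals F n f a w ℓ, Set.Icc W.1 W.2 ⊂ Set.Icc J.1 J.2 := by
  obtain ⟨I, ⟨i, hi, hIi⟩, hmw, hI1, hI2⟩ := exists_maximalWitness_ge hT hnomax hW hwit
  obtain ⟨J, hJ, hIJ⟩ := exists_parent (hT.mono hi) hIi
  exact ⟨J, Or.inl ⟨I, ⟨i, hi.le, hIi⟩, hmw, i, hi, hIi, hJ, hIJ⟩,
    (Set.Icc_subset_Icc hI1 hI2).trans_ssubset hIJ⟩

lemma not_witnessInterval_of_isMaximalInterval (hT : ValidHierarchy a w n ℓ)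
    (hnomax : ∀ I ∈ Tlevel a w n ℓ, ¬ MaximalWitness F n f a w ℓ I) {S : ℕ × ℕ}
    (hS : IsMaximalInterval (repairIntervals F n f a w ℓ) S) : ¬ WitnessInterval F n f S := by
  intro hwit
  have hSH := repairIntervals_subset hT hS.1
  obtain ⟨J, hJ, hSJ⟩ := exists_mem_repairIntervals_Icc_ssubset hT hnomax hSH hwit
  rw [Icc_ssubset_Icc_iff (hSH.bounds hT).2.1.le] at hSJ
  obtain rfl := hS.2 J hJ hSJ.1 hSJ.2.1
  omega

lemma exists_mem_repairIntervals_pair (hT : ValidHierarchy a w n ℓ)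
    (hnomax : ∀ I ∈ Tlevel a w n ℓ, ¬ MaximalWitness F n f a w ℓ I) {i : ℕ} (hi : 1 ≤ i)
    (hin : i + 1 ≤ n) (hF : (f i, f (i + 1)) ∈ F) :
    ∃ J ∈ repairIntervals F n f a w ℓ, J.1 ≤ i ∧ i + 1 ≤ J.2 := by
  have := hT.one_le
  have := hT.add_le
  by_cases hia : i ≤ a
  · exact ⟨(1, a + 1), Or.inr (Or.inl rfl), hi, by dsimp only; omega⟩
  by_cases hiw : a + w - 1 ≤ i
  · exact ⟨(a + w - 1, n), Or.inr (Or.inr rfl), hiw, hin⟩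
  have hmem : (i, i + 1) ∈ Tlevel a w n 0 :=
    (mem_Tlevel_iff (hT.mono (Nat.zero_le _)).dvd).2
      (Or.inl ⟨i - a, by simp only [pow_zero, one_dvd], by rw [pow_zero]; omega,
        by rw [pow_zero]; omega, by simp only [pow_zero, Prod.mk.injEq]; omega⟩)
  obtain ⟨J, hJ, hiJ⟩ := exists_mem_repairIntervals_Icc_ssubset hT hnomax
    ⟨0, Nat.zero_le _, hmem⟩ (witnessInterval_pair (by omega) (by omega) hF)
  rw [Icc_ssubset_Icc_iff (by dsimp only; omega)] at hiJ
  exact ⟨J, hJ, hiJ.1, hiJ.2.1⟩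

lemma interiorSet_subset_badSet (hT : ValidHierarchy a w n ℓ) {J : ℕ × ℕ}
    (hJ : J ∈ repairIntervals F n f a w ℓ) : interiorSet n J ⊆ badSet F n f a w ℓ := by
  unfold badSet
  intro x hx
  have := hT.one_le
  have := hT.add_le
  have := hT.two_mul_le
  have : 1 ≤ 2 ^ ℓ := Nat.one_le_two_pow
  rcases hJ with ⟨I, hI, hmw, hIJ⟩ | rfl | rfl
  · exact Set.mem_union_left _ (Set.mem_union_left _ ⟨I, J, hI, hmw, hIJ, hx⟩)
  all_goals simp only [interiorSet, Set.mem_sdiff, Set.mem_Icc, Set.mem_insert_iff,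
    Set.mem_singleton_iff] at hx
  · exact Set.mem_union_left _ (Set.mem_union_right _ ⟨by omega, by omega⟩)
  · exact Set.mem_union_right _ ⟨by omega, by omega⟩

lemma two_pow_floor_logb_le {x : ℝ} (hx : 1 ≤ x) : (2 : ℝ) ^ ⌊Real.logb 2 x⌋₊ ≤ x := by
  rw [← Real.rpow_natCast, ← Real.le_logb_iff_rpow_le one_lt_two (by linarith)]
  exact Nat.floor_le (Real.logb_nonneg one_lt_two hx)

lemma validHierarchy_of_parameters {ε : ℝ} (hε1 : ε ≤ 1) (hn : 16 ≤ ε * n)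
    (hℓ : ℓ = ⌊Real.logb 2 (ε * n / 4)⌋₊) (hwdvd : w % 2 ^ ℓ = 0)
    (hwle : (w : ℝ) ≤ n - ε * n / 4)
    (hwmax : ∀ w' : ℕ, w' % 2 ^ ℓ = 0 → (w' : ℝ) ≤ n - ε * n / 4 → w' ≤ w)
    (ha : 1 ≤ a) (ha2 : a ≤ ⌈ε * n / 4⌉₊) : ValidHierarchy a w n ℓ where
  one_le := ha
  add_le := by
    have : (a : ℝ) < ε * n / 4 + 1 :=
      (Nat.cast_le.2 ha2).trans_lt (Nat.ceil_lt_add_one (by linarith))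
    have : ((a + w : ℕ) : ℝ) < n + 1 := by push_cast; linarith
    exact Nat.lt_succ_iff.1 (by exact_mod_cast this)
  dvd := Nat.dvd_of_mod_eq_zero hwdvd
  two_mul_le := by
    have : (2 : ℝ) ^ ℓ ≤ ε * n / 4 := hℓ ▸ two_pow_floor_logb_le (by linarith)
    have : ε * n ≤ n := mul_le_of_le_one_left n.cast_nonneg hε1
    exact hwmax _ (by simp) (by push_cast; linarith)

end LocalRepair

open LocalRepair

theorem stmt_12_general (ε : ℝ) (n : ℕ) (hε1 : ε ≤ 1) (hn : 16 ≤ ε * n)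
    (F : Set (ℝ × ℝ)) (f : ℕ → ℝ)
    (ℓ : ℕ) (hℓ : ℓ = ⌊Real.logb 2 (ε * n / 4)⌋₊)
    (w : ℕ) (hwdvd : w % 2 ^ ℓ = 0) (hwle : (w : ℝ) ≤ n - ε * n / 4)
    (hwmax : ∀ w' : ℕ, w' % 2 ^ ℓ = 0 → (w' : ℝ) ≤ n - ε * n / 4 → w' ≤ w)
    (a : ℕ) (ha : 1 ≤ a) (ha2 : a ≤ ⌈ε * n / 4⌉₊)
    (hnomax : ∀ I ∈ Tlevel a w n ℓ, ¬ MaximalWitness F n f a w ℓ I) :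
    ∃ f' : ℕ → ℝ, SatLocal F n f' ∧
      ∀ x : ℕ, 1 ≤ x → x ≤ n → x ∉ badSet F n f a w ℓ → f' x = f x := by
  have hT := validHierarchy_of_parameters hε1 hn hℓ hwdvd hwle hwmax ha ha2
  have hsub := repairIntervals_subset (F := F) (f := f) hT
  obtain ⟨f', hsat, hf'⟩ := exists_satLocal_eq_of_not_mem_interiorSet
    (finite_setOf_memHierarchy.subset hsub) (fun J hJ => (hsub hJ).bounds hT)
    (intervalLaminar_of_subset hT hsub)
    (fun _ => not_witnessInterval_of_isMaximalInterval hT hnomax)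
    (fun _ => exists_mem_repairIntervals_pair hT hnomax)
  exact ⟨f', hsat, fun x _ _ hx => hf' x fun J hJ hxJ => hx (interiorSet_subset_badSet hT hJ hxJ)⟩

theorem stmt_12 (ε : ℝ) (n : ℕ) (hε : 0 < ε) (hε1 : ε ≤ 1) (hn : 16 ≤ ε * n)
    (F : Set (ℝ × ℝ)) (f : ℕ → ℝ)
    (ℓ : ℕ) (hℓ : ℓ = ⌊Real.logb 2 (ε * n / 4)⌋₊)
    (w : ℕ) (hwdvd : w % 2 ^ ℓ = 0) (hwle : (w : ℝ) ≤ n - ε * n / 4)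
    (hwmax : ∀ w' : ℕ, w' % 2 ^ ℓ = 0 → (w' : ℝ) ≤ n - ε * n / 4 → w' ≤ w)
    (a : ℕ) (ha : 1 ≤ a) (ha2 : a ≤ ⌈ε * n / 4⌉₊)
    (hnomax : ∀ I ∈ Tlevel a w n ℓ, ¬ MaximalWitness F n f a w ℓ I) :
    ∃ f' : ℕ → ℝ, SatLocal F n f' ∧
      ∀ x : ℕ, 1 ≤ x → x ≤ n → x ∉ badSet F n f a w ℓ → f' x = f x :=
  stmt_12_general ε n hε1 hn F f ℓ hℓ w hwdvd hwle hwmax a ha ha2 hnomax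
end

section
/- Let ε ∈ (0, 1] and let n be an integer with εn ≥ 16. Let P be a local property of sequences f : [n] → ℝ, and let f : [n] → ℝ be ε-far from P. Set ℓ = ⌊log_2(εn/4)⌋. Then Σ_{i=0}^{ℓ} |{(x, y) ∈ D_{2^i}(n) : f is unrepairable on {x, y} with respect to P}| ≥ (ε / (64 · log_2(εn))) · n · (ℓ + 1). Equivalently, if i is chosen uniformly at random from {0, …, ℓ} and then (x, y) is chosen uniformly at random from D_{2^i}(n), the probability that f is unrepairable on {x, y} with respect to P is at least ε / (64 · log_2(εn)). -/
open scoped Classical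

/-- `f` is unrepairable on `S` with respect to the local property characterized by
`F`: every sequence agreeing with `f` on `S` fails the property. -/
def Unrepairable (F : Set (ℝ × ℝ)) (n : ℕ) (f : ℕ → ℝ) (S : Set ℕ) : Prop :=
  ∀ f' : ℕ → ℝ, (∀ x ∈ S, f' x = f x) → ¬ SatLocal F n f'

/-- The set `D_d(n)` of distance-`d` pairs:
`{(x, y) ∈ [n]² : y − x ≡ d (mod n)}`. -/
def Ddist (n d : ℕ) : Finset (ℕ × ℕ) :=
  ((Finset.Icc 1 n) ×ˢ (Finset.Icc 1 n)).filter
    (fun p => ((p.2 : ℤ) - (p.1 : ℤ)) % (n : ℤ) = (d : ℤ) % (n : ℤ))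

/-
Call an edge `(a, a + 2 ^ i)`, `i ≤ ℓ`, bad if `f` is unrepairable on its two endpoints, and
let `B` be the number of bad edges. For an offset `r`, a bad edge whose start is `≡ r` modulo
`2 ^ i` blocks a window of `3 · 2 ^ i` points; averaging over `r < 2 ^ ℓ`, some offset blocks
at most `3 B` points. If fewer than `2 ^ ℓ` points are blocked, two consecutive unblocked points
are joined by a dyadic path of good edges aligned with `r` (climbing to a highly aligned point,
then descending), and since the property is local, repairs of consecutive pieces glue along
their common endpoint. So `f` can be repaired keeping every unblocked point, and `ε`-farness
forces `εn` blocked points. Either way `3 B ≥ min (εn) (2 ^ ℓ) ≥ εn / 8`, while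
`ℓ + 1 ≤ log₂ (εn)`.
-/

theorem Nat.exists_modEq_mem_Ico (u r k : ℕ) (hk : 0 < k) :
    ∃ m ∈ Finset.Ico u (u + k), m ≡ r [MOD k] := by
  refine ⟨u + (r + k - u % k) % k, Finset.mem_Ico.mpr ⟨by omega, ?_⟩, ?_⟩
  · have := Nat.mod_lt (r + k - u % k) hk
    omega
  have hu : u + (r + k - u % k) = k * (u / k + 1) + r := by
    have := Nat.div_add_mod u k
    have := Nat.mod_lt u hk
    rw [Nat.mul_add_one]
    omega
  calc u + (r + k - u % k) % k ≡ u + (r + k - u % k) [MOD k] :=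
        (Nat.mod_modEq _ _).add_left u
    _ = k * (u / k + 1) + r := hu
    _ ≡ r [MOD k] := Nat.modulus_mul_add_modEq_iff.mpr rfl

theorem Real.pow_natFloor_logb_le {b x : ℝ} (hb : 1 < b) (hx : 1 ≤ x) :
    b ^ ⌊logb b x⌋₊ ≤ x := by
  rw [← rpow_natCast, ← le_logb_iff_rpow_le hb (by linarith)]
  exact Nat.floor_le (logb_nonneg hb hx)

theorem Real.lt_pow_natFloor_logb_add_one {b x : ℝ} (hb : 1 < b) (hx : 0 < x) :
    x < b ^ (⌊logb b x⌋₊ + 1) := by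
  rw [← rpow_natCast, ← logb_lt_iff_lt_rpow hb hx]
  push_cast
  exact Nat.lt_floor_add_one _

namespace LocalProperty

open Finset

variable {F : Set (ℝ × ℝ)} {n : ℕ} {f : ℕ → ℝ}

theorem Unrepairable.mono {S T : Set ℕ} (h : Unrepairable F n f S) (hST : S ⊆ T) :
    Unrepairable F n f T :=
  fun f' hf' => h f' fun x hx => hf' x (hST hx)

theorem SatLocal.glue {g₁ g₂ : ℕ → ℝ} {b : ℕ} (h₁ : SatLocal F n g₁) (h₂ : SatLocal F n g₂)
    (hb : g₁ b = g₂ b) : SatLocal F n fun i => if i ≤ b then g₁ i else g₂ i := by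
  intro i hi hin
  rcases lt_trichotomy i b with hib | rfl | hib
  · simpa [hib.le, Nat.succ_le_of_lt hib] using h₁ i hi hin
  · simpa [hb] using h₂ i hi hin
  · simpa [hib.not_ge, (hib.trans (Nat.lt_succ_self i)).not_ge] using h₂ i hi hin

theorem not_unrepairable_union {S T : Set ℕ} {b : ℕ} (hS : ¬ Unrepairable F n f S)
    (hT : ¬ Unrepairable F n f T) (hbS : b ∈ S) (hbT : b ∈ T) (hSb : ∀ x ∈ S, x ≤ b)
    (hTb : ∀ x ∈ T, b ≤ x) : ¬ Unrepairable F n f (S ∪ T) := by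
  simp only [Unrepairable, not_forall, not_not] at hS hT ⊢
  obtain ⟨g₁, hg₁, hsat₁⟩ := hS
  obtain ⟨g₂, hg₂, hsat₂⟩ := hT
  refine ⟨_, ?_, SatLocal.glue hsat₁ hsat₂ ((hg₁ b hbS).trans (hg₂ b hbT).symm)⟩
  rintro x (hx | hx)
  · simp [hSb x hx, hg₁ x hx]
  · rcases (hTb x hx).eq_or_lt with rfl | hbx
    · simp [hg₁ b hbS]
    · simp [hbx.not_ge, hg₂ x hx]

theorem not_unrepairable_pair_trans {u w v : ℕ} (huw : u ≤ w) (hwv : w ≤ v)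
    (h₁ : ¬ Unrepairable F n f {u, w}) (h₂ : ¬ Unrepairable F n f {w, v}) :
    ¬ Unrepairable F n f {u, v} := by
  refine fun h => not_unrepairable_union h₁ h₂ (b := w) (by simp) (by simp) ?_ ?_
    (Unrepairable.mono h ?_)
  · simp [huw]
  · simp [hwv]
  · intro x hx
    rcases hx with rfl | rfl <;> simp

theorem not_unrepairable_of_consecutive (A : Finset ℕ) (hA : A.Nonempty)
    (hsingle : ∀ a ∈ A, ¬ Unrepairable F n f {a})
    (hcons : ∀ u ∈ A, ∀ v ∈ A, u < v → (∀ w ∈ A, w ≤ u ∨ v ≤ w) →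
      ¬ Unrepairable F n f {u, v}) :
    ¬ Unrepairable F n f A := by
  induction A using Finset.induction_on_max with
  | empty => simp at hA
  | insert a s hlt ih =>
    rcases s.eq_empty_or_nonempty with rfl | hs
    · simpa using hsingle a (by simp)
    set b := s.max' hs
    have hbs : b ∈ s := s.max'_mem hs
    have hs_rep : ¬ Unrepairable F n f s :=
      ih hs (fun x hx => hsingle x (mem_insert_of_mem hx)) fun u hu v hv huv hgap =>
        hcons u (mem_insert_of_mem hu) v (mem_insert_of_mem hv) huv fun w hw =>
          (mem_insert.mp hw).elim (fun h => Or.inr (h ▸ (hlt v hv).le)) (hgap w)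
    have hba : ¬ Unrepairable F n f {b, a} :=
      hcons b (mem_insert_of_mem hbs) a (mem_insert_self a s) (hlt b hbs) fun w hw =>
        (mem_insert.mp hw).elim (fun h => Or.inr h.ge) fun h => Or.inl (s.le_max' w h)
    refine fun h => not_unrepairable_union hs_rep hba (b := b) hbs (by simp)
      (fun x hx => s.le_max' x hx) ?_ (Unrepairable.mono h ?_)
    · simp [(hlt b hbs).le]
    · intro x hx
      simp only [coe_insert, Set.mem_insert_iff, mem_coe] at hx
      rcases hx with rfl | hx <;> simp [*]

variable (F n f)

noncomputable def badStarts (i : ℕ) : Finset ℕ :=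
  {a ∈ Icc 1 n | a + 2 ^ i ≤ n ∧ Unrepairable F n f {a, a + 2 ^ i}}

/-- A bad edge `(a, a + 2 ^ i)` with `i ≤ ℓ` and `a ≡ r [MOD 2 ^ i]` blocks the window
`[a + 1 - 2 ^ i, a + 2 ^ (i + 1))`, which contains an endpoint of every climbing or descending
dyadic path that uses the edge. -/
noncomputable def deadSet (ℓ r : ℕ) : Finset ℕ :=
  (range (ℓ + 1)).biUnion fun i =>
    {a ∈ badStarts F n f i | a ≡ r [MOD 2 ^ i]}.biUnion fun a =>
      Ico (a + 1 - 2 ^ i) (a + 2 ^ (i + 1))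

variable {F n f} {ℓ r : ℕ}

theorem not_unrepairable_aligned_edge {i a x : ℕ} (hi : i ≤ ℓ) (har : a ≡ r [MOD 2 ^ i])
    (ha : 1 ≤ a) (han : a + 2 ^ i ≤ n) (hx : x ∉ deadSet F n f ℓ r) (hax : a < x + 2 ^ i)
    (hxa : x < a + 2 ^ (i + 1)) : ¬ Unrepairable F n f {a, a + 2 ^ i} := by
  refine fun h => hx ?_
  simp only [deadSet, badStarts, mem_biUnion, mem_range, mem_filter, mem_Icc, mem_Ico]
  exact ⟨i, by omega, a, ⟨⟨⟨ha, by omega⟩, han, h⟩, har⟩, by omega, hxa⟩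

theorem not_unrepairable_dyadic_descent {v : ℕ} (hv : v ∉ deadSet F n f ℓ r) (hvn : v ≤ n) :
    ∀ t ≤ ℓ, ∀ w, 1 ≤ w → w < v → v < w + 2 ^ (t + 1) → w ≡ r [MOD 2 ^ t] →
      ¬ Unrepairable F n f {w, v} := by
  intro t
  induction t with
  | zero =>
    intro _ w hw hwv hvw hwr
    obtain rfl : v = w + 2 ^ 0 := by omega
    exact not_unrepairable_aligned_edge (Nat.zero_le ℓ) hwr hw hvn hv (by omega) hvw
  | succ t ih =>
    intro ht w hw hwv hvw hwr
    have hwr' : w ≡ r [MOD 2 ^ t] := hwr.of_dvd (pow_dvd_pow 2 t.le_succ)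
    have hpow : 2 ^ (t + 1 + 1) = 2 * 2 ^ (t + 1) := by ring
    by_cases hshort : v < w + 2 ^ (t + 1)
    · exact ih (by omega) w hw hwv (by omega) hwr'
    have hedge := not_unrepairable_aligned_edge ht hwr hw (by omega) hv (by omega) hvw
    rcases (not_lt.mp hshort).eq_or_lt with hv' | hv'
    · rwa [← hv']
    refine not_unrepairable_pair_trans (by omega) hv'.le hedge
      (ih (by omega) _ (by omega) hv' (by omega) ?_)
    exact (Nat.ModEq.of_dvd (pow_dvd_pow 2 t.le_succ) Nat.add_modEq_right).trans hwr'

theorem not_unrepairable_dyadic_ascent {u : ℕ} (hu : u ∉ deadSet F n f ℓ r) (hu1 : 1 ≤ u) :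
    ∀ t ≤ ℓ, ∀ w, w ≤ n → u < w → w < u + 2 ^ (t + 1) → w ≡ r [MOD 2 ^ t] →
      ¬ Unrepairable F n f {u, w} := by
  intro t
  induction t with
  | zero =>
    intro _ w hwn huw hwu hwr
    obtain rfl : w = u + 2 ^ 0 := by omega
    exact not_unrepairable_aligned_edge (Nat.zero_le ℓ) Nat.modEq_one hu1 hwn hu (by omega)
      (by omega)
  | succ t ih =>
    intro ht w hwn huw hwu hwr
    have hpow : 2 ^ (t + 1 + 1) = 2 * 2 ^ (t + 1) := by ring
    by_cases hshort : w < u + 2 ^ (t + 1)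
    · exact ih (by omega) w hwn huw hshort (hwr.of_dvd (pow_dvd_pow 2 t.le_succ))
    obtain ⟨a, rfl⟩ : ∃ a, w = a + 2 ^ (t + 1) := ⟨w - 2 ^ (t + 1), by omega⟩
    have har : a ≡ r [MOD 2 ^ (t + 1)] := Nat.add_modEq_right.symm.trans hwr
    have hedge :=
      not_unrepairable_aligned_edge ht har (by omega) hwn hu (by omega) (by omega)
    rcases (not_lt.mp hshort).eq_or_lt with hua | hua
    · obtain rfl : a = u := by omega
      exact hedge
    exact not_unrepairable_pair_trans (by omega) (by omega)
      (ih (by omega) a (by omega) (by omega) (by omega) (har.of_dvd (pow_dvd_pow 2 t.le_succ)))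
      hedge

-- Climb from `u` to a point aligned with `r` modulo the largest `2 ^ t` that fits, then descend.
theorem not_unrepairable_pair_of_notMem_deadSet {u v : ℕ} (hu : u ∉ deadSet F n f ℓ r)
    (hv : v ∉ deadSet F n f ℓ r) (hu1 : 1 ≤ u) (hvn : v ≤ n) (huv : u < v) :
    ∀ t ≤ ℓ, v < u + 2 ^ (t + 1) → ¬ Unrepairable F n f {u, v} := by
  intro t
  induction t with
  | zero =>
    intro _ hvu
    exact not_unrepairable_dyadic_descent hv hvn 0 (Nat.zero_le ℓ) u hu1 huv hvu Nat.modEq_one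
  | succ t ih =>
    intro ht hvu
    by_cases hshort : v < u + 2 ^ (t + 1)
    · exact ih (by omega) hshort
    obtain ⟨m, hm, hmr⟩ := Nat.exists_modEq_mem_Ico u r (2 ^ (t + 1)) (by positivity)
    obtain ⟨hum, hmu⟩ := mem_Ico.mp hm
    have hpow : 2 ^ (t + 1 + 1) = 2 * 2 ^ (t + 1) := by ring
    rcases hum.eq_or_lt with rfl | hum
    · exact not_unrepairable_dyadic_descent hv hvn (t + 1) ht u hu1 huv (by omega) hmr
    exact not_unrepairable_pair_trans hum.le (by omega)
      (not_unrepairable_dyadic_ascent hu hu1 (t + 1) ht m (by omega) hum (by omega) hmr)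
      (not_unrepairable_dyadic_descent hv hvn (t + 1) ht m (by omega) (by omega) (by omega) hmr)

theorem not_unrepairable_singleton {a : ℕ} (hn : 2 ≤ n) (ha : a ∉ deadSet F n f ℓ r)
    (ha1 : 1 ≤ a) (han : a ≤ n) : ¬ Unrepairable F n f {a} := by
  rcases han.lt_or_eq with han | rfl
  · exact fun h => not_unrepairable_aligned_edge (Nat.zero_le ℓ) Nat.modEq_one ha1 han ha
      (by omega) (by omega) (Unrepairable.mono h (by simp))
  · have hpred : a - 1 + 1 = a := by omega
    refine fun h => not_unrepairable_aligned_edge (a := a - 1) (Nat.zero_le ℓ) Nat.modEq_one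
      (by omega) (by omega) ha (by omega) (by omega) (Unrepairable.mono h ?_)
    simp [hpred]

theorem exists_satLocal_ne_subset_deadSet (hn : 2 ≤ n) (hdn : (deadSet F n f ℓ r).card < n)
    (hdℓ : (deadSet F n f ℓ r).card < 2 ^ ℓ) :
    ∃ g, SatLocal F n g ∧ {x ∈ Icc 1 n | g x ≠ f x} ⊆ deadSet F n f ℓ r := by
  have hA : (Icc 1 n \ deadSet F n f ℓ r).Nonempty := by
    rw [← card_pos]
    have := le_card_sdiff (deadSet F n f ℓ r) (Icc 1 n)
    simp only [Nat.card_Icc] at this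
    omega
  set A := Icc 1 n \ deadSet F n f ℓ r
  have hrep : ¬ Unrepairable F n f A := by
    refine not_unrepairable_of_consecutive A hA (fun a ha => ?_) fun u hu v hv huv hgap => ?_
    · simp only [A, mem_sdiff, mem_Icc] at ha
      exact not_unrepairable_singleton hn ha.2 ha.1.1 ha.1.2
    simp only [A, mem_sdiff, mem_Icc] at hu hv
    have hgap_dead : Ioo u v ⊆ deadSet F n f ℓ r := by
      intro x hx
      rw [mem_Ioo] at hx
      by_contra hxd
      have := hgap x (by simp only [A, mem_sdiff, mem_Icc]; exact ⟨⟨by omega, by omega⟩, hxd⟩)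
      omega
    have hvu : v < u + 2 ^ (ℓ + 1) := by
      have hcard := card_le_card hgap_dead
      rw [Nat.card_Ioo] at hcard
      rw [pow_succ]
      omega
    exact not_unrepairable_pair_of_notMem_deadSet hu.2 hv.2 hu.1.1 hv.1.2 huv ℓ le_rfl hvu
  simp only [Unrepairable, not_forall, not_not] at hrep
  obtain ⟨g, hgA, hg⟩ := hrep
  refine ⟨g, hg, fun x hx => ?_⟩
  rw [mem_filter] at hx
  by_contra hxd
  exact hx.2 (hgA x (mem_coe.mpr (mem_sdiff.mpr ⟨hx.1, hxd⟩)))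

theorem card_deadSet_le :
    (deadSet F n f ℓ r).card ≤
      ∑ i ∈ range (ℓ + 1), ∑ _a ∈ {a ∈ badStarts F n f i | a ≡ r [MOD 2 ^ i]}, 3 * 2 ^ i := by
  refine card_biUnion_le.trans (sum_le_sum fun i _ => card_biUnion_le.trans ?_)
  refine sum_le_sum fun a _ => ?_
  rw [Nat.card_Ico, pow_succ]
  omega

theorem card_filter_modEq_range {i : ℕ} (a : ℕ) (hi : i ≤ ℓ) :
    #{r ∈ range (2 ^ ℓ) | a ≡ r [MOD 2 ^ i]} = 2 ^ (ℓ - i) := by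
  have hdvd : 2 ^ i ∣ 2 ^ ℓ := pow_dvd_pow 2 hi
  simp_rw [Nat.ModEq.comm (a := a)]
  rw [← Nat.count_eq_card_filter_range, Nat.count_modEq_card _ (by positivity),
    Nat.mod_eq_zero_of_dvd hdvd, Nat.pow_div hi (by norm_num)]
  simp

variable (F n f) in
theorem exists_card_deadSet_le (ℓ : ℕ) :
    ∃ r, (deadSet F n f ℓ r).card ≤ 3 * ∑ i ∈ range (ℓ + 1), (badStarts F n f i).card := by
  have hsum : ∑ r ∈ range (2 ^ ℓ), (deadSet F n f ℓ r).card ≤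
      ∑ _r ∈ range (2 ^ ℓ), 3 * ∑ i ∈ range (ℓ + 1), (badStarts F n f i).card :=
    calc ∑ r ∈ range (2 ^ ℓ), (deadSet F n f ℓ r).card
        ≤ ∑ r ∈ range (2 ^ ℓ), ∑ i ∈ range (ℓ + 1),
            ∑ _a ∈ {a ∈ badStarts F n f i | a ≡ r [MOD 2 ^ i]}, 3 * 2 ^ i :=
          sum_le_sum fun r _ => card_deadSet_le
      _ = ∑ i ∈ range (ℓ + 1), ∑ a ∈ badStarts F n f i,
            #{r ∈ range (2 ^ ℓ) | a ≡ r [MOD 2 ^ i]} * (3 * 2 ^ i) := by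
          rw [sum_comm]
          refine sum_congr rfl fun i _ => ?_
          simp only [sum_filter]
          rw [sum_comm]
          refine sum_congr rfl fun a _ => ?_
          rw [← sum_filter, sum_const, smul_eq_mul]
      _ = ∑ _r ∈ range (2 ^ ℓ), 3 * ∑ i ∈ range (ℓ + 1), (badStarts F n f i).card := by
          rw [sum_const, card_range, smul_eq_mul, mul_sum, mul_sum]
          refine sum_congr rfl fun i hi => ?_
          have hiℓ : i ≤ ℓ := Nat.lt_succ_iff.mp (mem_range.mp hi)
          have hpow : 2 ^ (ℓ - i) * 2 ^ i = 2 ^ ℓ := by rw [← pow_add, Nat.sub_add_cancel hiℓ]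
          rw [sum_congr rfl fun a _ => by rw [card_filter_modEq_range a hiℓ], sum_const,
            smul_eq_mul]
          linear_combination (3 * (badStarts F n f i).card) * hpow
  obtain ⟨r, -, hr⟩ := exists_le_of_sum_le (by simp) hsum
  exact ⟨r, hr⟩

theorem card_badStarts_le (i : ℕ) :
    (badStarts F n f i).card ≤
      ((Ddist n (2 ^ i)).filter fun p => Unrepairable F n f {p.1, p.2}).card := by
  refine card_le_card_of_injOn (fun a => (a, a + 2 ^ i)) (fun a ha => ?_)
    fun a _ b _ hab => congrArg Prod.fst hab
  simp only [badStarts, mem_coe, mem_filter, mem_Icc] at ha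
  simp only [Ddist, mem_coe, mem_filter, mem_product, mem_Icc]
  refine ⟨⟨⟨ha.1, by have := Nat.one_le_two_pow (n := i); omega, ha.2.1⟩, ?_⟩, ha.2.2⟩
  push_cast
  ring_nf

theorem min_le_three_mul_sum_card_badStarts (hn : 2 ≤ n) (hℓn : 2 ^ ℓ ≤ n) {δ : ℝ}
    (hfar : ∀ g, SatLocal F n g → δ ≤ (#{x ∈ Icc 1 n | g x ≠ f x} : ℝ)) :
    min δ (2 ^ ℓ) ≤ 3 * ∑ i ∈ range (ℓ + 1), ((badStarts F n f i).card : ℝ) := by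
  obtain ⟨r, hr⟩ := exists_card_deadSet_le F n f ℓ
  have hr' : ((deadSet F n f ℓ r).card : ℝ) ≤
      3 * ∑ i ∈ range (ℓ + 1), ((badStarts F n f i).card : ℝ) := by
    exact_mod_cast hr
  rcases lt_or_ge (deadSet F n f ℓ r).card (2 ^ ℓ) with hdead | hdead
  · obtain ⟨g, hg, hsub⟩ := exists_satLocal_ne_subset_deadSet hn (hdead.trans_le hℓn) hdead
    have := hfar g hg
    have : (#{x ∈ Icc 1 n | g x ≠ f x} : ℝ) ≤ (deadSet F n f ℓ r).card := by
      exact_mod_cast card_le_card hsub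
    exact (min_le_left _ _).trans (by linarith)
  · have : ((2 : ℝ) ^ ℓ) ≤ (deadSet F n f ℓ r).card := by exact_mod_cast hdead
    exact (min_le_right _ _).trans (by linarith)

end LocalProperty

open LocalProperty in
theorem stmt_14_general (ε : ℝ) (n : ℕ) (hε1 : ε ≤ 1) (hn : 16 ≤ ε * n)
    (F : Set (ℝ × ℝ)) (f : ℕ → ℝ)
    (hfar : ∀ f' : ℕ → ℝ, SatLocal F n f' →
      ε * n ≤ (((Finset.Icc 1 n).filter (fun x => f' x ≠ f x)).card : ℝ))
    (ℓ : ℕ) (hℓ : ℓ = ⌊Real.logb 2 (ε * n / 4)⌋₊) :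
    ε / (64 * Real.logb 2 (ε * n)) * n * (ℓ + 1) ≤
      ∑ i ∈ Finset.range (ℓ + 1),
        (((Ddist n (2 ^ i)).filter
          (fun p => Unrepairable F n f ({p.1, p.2} : Set ℕ))).card : ℝ) := by
  have hεn_le : ε * n ≤ n := mul_le_of_le_one_left (Nat.cast_nonneg n) hε1
  have hℓ_le : (2 : ℝ) ^ ℓ ≤ ε * n / 4 :=
    hℓ ▸ Real.pow_natFloor_logb_le one_lt_two (by linarith)
  have hℓ_gt : ε * n / 4 < 2 ^ (ℓ + 1) :=
    hℓ ▸ Real.lt_pow_natFloor_logb_add_one one_lt_two (by linarith)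
  have hn2 : 2 ≤ n := by exact_mod_cast (show (2 : ℝ) ≤ n by linarith)
  have hℓn : 2 ^ ℓ ≤ n := by
    exact_mod_cast (show ((2 ^ ℓ : ℕ) : ℝ) ≤ n by push_cast; linarith)
  have hlog : (ℓ : ℝ) + 1 ≤ Real.logb 2 (ε * n) := by
    have : (ℓ : ℝ) + 2 ≤ Real.logb 2 (ε * n) := by
      rw [Real.le_logb_iff_rpow_le one_lt_two (by linarith), Real.rpow_add two_pos,
        Real.rpow_natCast]
      norm_num
      linarith
    linarith
  have hbad := min_le_three_mul_sum_card_badStarts hn2 hℓn hfar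
  have hmin : ε * n / 8 ≤ min (ε * n) (2 ^ ℓ) :=
    le_min (by linarith) (by rw [pow_succ] at hℓ_gt; linarith)
  calc ε / (64 * Real.logb 2 (ε * n)) * n * (ℓ + 1)
      = ε * n / 64 * ((ℓ + 1) / Real.logb 2 (ε * n)) := by ring
    _ ≤ ε * n / 64 :=
        mul_le_of_le_one_right (by linarith) ((div_le_one (by linarith)).mpr hlog)
    _ ≤ ∑ i ∈ Finset.range (ℓ + 1), ((badStarts F n f i).card : ℝ) := by linarith
    _ ≤ _ := by gcongr with i; exact_mod_cast card_badStarts_le i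

theorem stmt_14 (ε : ℝ) (n : ℕ) (hε : 0 < ε) (hε1 : ε ≤ 1) (hn : 16 ≤ ε * n)
    (F : Set (ℝ × ℝ)) (f : ℕ → ℝ)
    (hfar : ∀ f' : ℕ → ℝ, SatLocal F n f' →
      ε * n ≤ (((Finset.Icc 1 n).filter (fun x => f' x ≠ f x)).card : ℝ))
    (ℓ : ℕ) (hℓ : ℓ = ⌊Real.logb 2 (ε * n / 4)⌋₊) :
    ε / (64 * Real.logb 2 (ε * n)) * n * (ℓ + 1) ≤
      ∑ i ∈ Finset.range (ℓ + 1),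
        (((Ddist n (2 ^ i)).filter
          (fun p => Unrepairable F n f ({p.1, p.2} : Set ℕ))).card : ℝ) :=
  stmt_14_general ε n hε1 hn F f hfar ℓ hℓ
end
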